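/- arXiv:2408.02413 — 7 statements merged into one kernel-verified Lean document; each statement's English description precedes it below -/
import Mathlib

section
/- In the projective plane PG(2,q), if a set T of q+1 points has the property that every line of PG(2,q) meets T, then T is a line. -/
open Module Projectivization
open scoped LinearAlgebra.Projectivization

section Aux

variable {F : Type*} [Field F] [Fintype F]

/-- Cardinality of the projectivization of a 2-dimensional space over a finite field. -/
lemma BB_proj_card (W : Type*) [AddCommGroup W] [Module F W] [FiniteDimensional F W]
    (hW : finrank F W = 2) : Nat.card (ℙ F W) = Fintype.card F + 1 := by
  have hfinW : Finite W := Module.finite_of_finite F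
  have hfin : Fintype W := Fintype.ofFinite W
  have hcardW : Nat.card W = Fintype.card F ^ 2 := by
    rw [Nat.card_eq_fintype_card, card_eq_pow_finrank (K := F), hW]
  -- the map `Fˣ × ℙ F W → {v // v ≠ 0}` is a bijection
  have hbij : Function.Bijective (fun ap : Fˣ × ℙ F W =>
      (⟨(ap.1 : F) • ap.2.rep, smul_ne_zero ap.1.ne_zero ap.2.rep_nonzero⟩ :
        {v : W // v ≠ 0})) := by
    constructor
    · rintro ⟨a, p⟩ ⟨b, r⟩ h
      simp only [Subtype.mk_eq_mk] at h
      have hpr : p = r := by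
        conv_lhs => rw [← p.mk_rep]
        conv_rhs => rw [← r.mk_rep]
        rw [Projectivization.mk_eq_mk_iff]
        refine ⟨a⁻¹ * b, ?_⟩
        rw [Units.smul_def]
        push_cast
        rw [mul_smul, ← h, smul_smul, inv_mul_cancel₀ a.ne_zero, one_smul]
      subst hpr
      have : (a : F) = (b : F) := smul_left_injective F p.rep_nonzero h
      exact Prod.ext (Units.ext this) rfl
    · rintro ⟨v, hv⟩
      obtain ⟨a, ha⟩ := exists_smul_eq_mk_rep F v hv
      refine ⟨(a⁻¹, Projectivization.mk F v hv), ?_⟩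
      apply Subtype.ext
      show ((a⁻¹ : Fˣ) : F) • (Projectivization.mk F v hv).rep = v
      rw [← ha, Units.smul_def, smul_smul]
      push_cast
      rw [inv_mul_cancel₀ a.ne_zero, one_smul]
  have h1 : Nat.card (Fˣ × ℙ F W) = Nat.card {v : W // v ≠ 0} :=
    Nat.card_eq_of_bijective _ hbij
  rw [Nat.card_prod] at h1
  have h2 : Nat.card {v : W // v ≠ 0} + 1 = Fintype.card F ^ 2 := by
    classical
    rw [← hcardW, Nat.card_eq_fintype_card, Nat.card_eq_fintype_card]
    rw [Fintype.card_subtype_compl (p := fun v : W => v = 0), Fintype.card_subtype_eq]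
    have : 1 ≤ Fintype.card W := Fintype.card_pos
    omega
  have hu : Nat.card Fˣ = Fintype.card F - 1 := by
    rw [Nat.card_units, Nat.card_eq_fintype_card]
  have hq2 : 2 ≤ Fintype.card F := Fintype.one_lt_card
  set u : ℕ := Nat.card Fˣ with hudef
  set P : ℕ := Nat.card (ℙ F W) with hPdef
  have hqu : Fintype.card F = u + 1 := by omega
  rw [hqu] at h2 ⊢
  have hexp : (u + 1) ^ 2 = u * (u + 2) + 1 := by ring
  have hu1 : 1 ≤ u := by omega
  have : u * P = u * (u + 2) := by omega
  have := Nat.eq_of_mul_eq_mul_left (by omega : 0 < u) this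
  omega

end Aux

section Aux2

variable {F : Type*} [Field F] [Fintype F] {V : Type*} [AddCommGroup V] [Module F V]
  [FiniteDimensional F V]

/-- rank-nullity for the quotient map restricted to a submodule. -/
lemma BB_finrank_map_mkQ (x L : Submodule F V) (h : x ≤ L) :
    finrank F (L.map x.mkQ) + finrank F x = finrank F L := by
  have hrn := LinearMap.finrank_range_add_finrank_ker (x.mkQ.comp L.subtype)
  have hrange : LinearMap.range (x.mkQ.comp L.subtype) = L.map x.mkQ := by
    rw [LinearMap.range_comp, Submodule.range_subtype]
  have hker : LinearMap.ker (x.mkQ.comp L.subtype) = Submodule.comap L.subtype x := by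
    rw [LinearMap.ker_comp, Submodule.ker_mkQ]
  rw [hrange, hker] at hrn
  rw [← hrn, (Submodule.comapSubtypeEquivOfLe h).finrank_eq]

/-- The sup of two distinct 1-dimensional submodules has dimension 2. -/
lemma BB_finrank_sup (p₀ p₁ : Submodule F V) (h0 : finrank F p₀ = 1)
    (h1 : finrank F p₁ = 1) (hne : p₀ ≠ p₁) : finrank F (p₀ ⊔ p₁ : Submodule F V) = 2 := by
  have hs := Submodule.finrank_sup_add_finrank_inf_eq p₀ p₁
  have hinf : finrank F (p₀ ⊓ p₁ : Submodule F V) = 0 := by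
    by_contra hc
    have hle : finrank F (p₀ ⊓ p₁ : Submodule F V) ≤ 1 := h0 ▸ Submodule.finrank_mono inf_le_left
    have heq1 : finrank F (p₀ ⊓ p₁ : Submodule F V) = 1 := by omega
    have e0 : p₀ ⊓ p₁ = p₀ := Submodule.eq_of_le_of_finrank_le inf_le_left (by omega)
    have e1 : p₀ ⊓ p₁ = p₁ := Submodule.eq_of_le_of_finrank_le inf_le_right (by omega)
    exact hne (e0 ▸ e1)
  omega

/-- Number of 1-dimensional submodules contained in a fixed 2-dimensional submodule. -/
lemma BB_points_card (L : Submodule F V) (hL : finrank F L = 2) :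
    Nat.card {p : Submodule F V // finrank F p = 1 ∧ p ≤ L} = Fintype.card F + 1 := by
  have e1 : {P : Submodule F L // finrank F P = 1} ≃
      {p : Submodule F V // finrank F p = 1 ∧ p ≤ L} :=
    { toFun := fun P => ⟨P.1.map L.subtype,
        by rw [Submodule.finrank_map_subtype_eq]; exact P.2,
        by rintro v ⟨w, _, rfl⟩; exact w.2⟩
      invFun := fun p => ⟨p.1.comap L.subtype,
        by rw [(Submodule.comapSubtypeEquivOfLe p.2.2).finrank_eq]; exact p.2.1⟩
      left_inv := fun P => Subtype.ext
        (Submodule.comap_map_eq_of_injective L.injective_subtype P.1)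
      right_inv := fun p => Subtype.ext (by
        show Submodule.map L.subtype (Submodule.comap L.subtype p.1) = p.1
        rw [Submodule.map_comap_subtype, inf_eq_right.mpr p.2.2]) }
  rw [← Nat.card_congr e1, Nat.card_congr (Projectivization.equivSubmodule F L).symm,
    BB_proj_card (↥L) hL]

end Aux2

section Aux3

variable {F : Type*} [Field F] [Fintype F] {V : Type*} [AddCommGroup V] [Module F V]
  [FiniteDimensional F V]

/-- Number of 2-dimensional submodules containing a fixed 1-dimensional submodule
of a 3-dimensional space. -/
lemma BB_lines_card (hV : finrank F V = 3) (x : Submodule F V) (hx : finrank F x = 1) :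
    Nat.card {L : Submodule F V // finrank F L = 2 ∧ x ≤ L} = Fintype.card F + 1 := by
  have hquot : finrank F (V ⧸ x) = 2 := by
    have := Submodule.finrank_quotient_add_finrank x
    omega
  have hker : ∀ P : Submodule F (V ⧸ x), x ≤ P.comap x.mkQ := by
    intro P
    intro v hv
    have : v ∈ LinearMap.ker x.mkQ := by rw [Submodule.ker_mkQ]; exact hv
    simp only [Submodule.mem_comap, LinearMap.mem_ker.mp this]
    exact P.zero_mem
  have hmapcomap : ∀ P : Submodule F (V ⧸ x), (P.comap x.mkQ).map x.mkQ = P := by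
    intro P
    exact Submodule.map_comap_eq_of_surjective x.mkQ_surjective P
  have e1 : {P : Submodule F (V ⧸ x) // finrank F P = 1} ≃
      {L : Submodule F V // finrank F L = 2 ∧ x ≤ L} :=
    { toFun := fun P => ⟨P.1.comap x.mkQ,
        by
          have h := BB_finrank_map_mkQ x (P.1.comap x.mkQ) (hker P.1)
          rw [hmapcomap P.1, P.2, hx] at h
          omega,
        hker P.1⟩
      invFun := fun L => ⟨L.1.map x.mkQ,
        by
          have h := BB_finrank_map_mkQ x L.1 L.2.2
          rw [L.2.1, hx] at h
          omega⟩
      left_inv := fun P => Subtype.ext (hmapcomap P.1)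
      right_inv := fun L => Subtype.ext (by
        show (L.1.map x.mkQ).comap x.mkQ = L.1
        rw [Submodule.comap_map_eq, Submodule.ker_mkQ, sup_eq_left.mpr L.2.2]) }
  rw [← Nat.card_congr e1, Nat.card_congr (Projectivization.equivSubmodule F (V ⧸ x)).symm,
    BB_proj_card (V ⧸ x) hquot]

end Aux3


/-- **Bose–Burton for projective planes.** In `PG(2,q)` (points: 1-dimensional
subspaces of `F_q^3`, lines: sets of 1-dimensional subspaces contained in a fixed
2-dimensional subspace), a set `T` of `q+1` points meeting every line is a line. -/
theorem stmt0 (q : ℕ) (F : Type*) [Field F] [Fintype F] (hq : Fintype.card F = q)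
    (T : Set (Submodule F (Fin 3 → F)))
    (hTpts : ∀ p ∈ T, Module.finrank F p = 1)
    (hcard : T.ncard = q + 1)
    (hblock : ∀ L : Submodule F (Fin 3 → F), Module.finrank F L = 2 →
      ∃ p ∈ T, p ≤ L) :
    ∃ L : Submodule F (Fin 3 → F), Module.finrank F L = 2 ∧
      T = {p : Submodule F (Fin 3 → F) | Module.finrank F p = 1 ∧ p ≤ L} := by
  subst hq
  have hV : finrank F (Fin 3 → F) = 3 := by simp
  have hfinSub : Finite (Submodule F (Fin 3 → F)) :=
    Finite.of_injective _ (SetLike.coe_injective (A := Submodule F (Fin 3 → F)))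
  have hq2 : 2 ≤ Fintype.card F := Fintype.one_lt_card
  have hTfin : T.Finite := Set.toFinite T
  obtain ⟨p₀, p₁, hp₀, hp₁, hne⟩ := (Set.one_lt_ncard_iff hTfin).mp (by omega)
  set L := p₀ ⊔ p₁ with hLdef
  have hL2 : finrank F L = 2 := BB_finrank_sup _ _ (hTpts _ hp₀) (hTpts _ hp₁) hne
  set PL : Set (Submodule F (Fin 3 → F)) := {p | finrank F p = 1 ∧ p ≤ L} with hPLdef
  have hPLcard : PL.ncard = Fintype.card F + 1 := by
    rw [← Nat.card_coe_set_eq]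
    exact BB_points_card L hL2
  by_cases hsub : PL ⊆ T
  · exact ⟨L, hL2, (Set.eq_of_subset_of_ncard_le hsub (by omega) hTfin).symm⟩
  · exfalso
    obtain ⟨x, hxPL, hxT⟩ := Set.not_subset.mp hsub
    obtain ⟨hx1, hxL⟩ := hxPL
    have hxne : ∀ p ∈ T, x ≠ p := fun p hp h => hxT (h ▸ hp)
    let f : ↥T → {M : Submodule F (Fin 3 → F) // finrank F M = 2 ∧ x ≤ M} :=
      fun p => ⟨x ⊔ p.1, BB_finrank_sup x p.1 hx1 (hTpts p.1 p.2) (hxne p.1 p.2), le_sup_left⟩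
    have hsurj : Function.Surjective f := by
      rintro ⟨M, hM2, hxM⟩
      obtain ⟨p, hpT, hpM⟩ := hblock M hM2
      refine ⟨⟨p, hpT⟩, Subtype.ext ?_⟩
      show x ⊔ p = M
      exact Submodule.eq_of_le_of_finrank_le (sup_le hxM hpM)
        (by rw [BB_finrank_sup x p hx1 (hTpts p hpT) (hxne p hpT), hM2])
    have hcards : Nat.card ↥T = Nat.card {M : Submodule F (Fin 3 → F) //
        finrank F M = 2 ∧ x ≤ M} := by
      rw [Nat.card_coe_set_eq, hcard, BB_lines_card hV x hx1]
    have hbij : Function.Bijective f :=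
      (Nat.bijective_iff_surjective_and_card f).mpr ⟨hsurj, hcards⟩
    have e₀ : x ⊔ p₀ = L := Submodule.eq_of_le_of_finrank_le (sup_le hxL le_sup_left)
      (by rw [BB_finrank_sup x p₀ hx1 (hTpts _ hp₀) (hxne _ hp₀), hL2])
    have e₁ : x ⊔ p₁ = L := Submodule.eq_of_le_of_finrank_le (sup_le hxL le_sup_right)
      (by rw [BB_finrank_sup x p₁ hx1 (hTpts _ hp₁) (hxne _ hp₁), hL2])
    have := hbij.1 (a₁ := ⟨p₀, hp₀⟩) (a₂ := ⟨p₁, hp₁⟩) (Subtype.ext (e₀.trans e₁.symm))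
    exact hne (congrArg Subtype.val this)
end

section
/- In PG(n,q), if a set T of q+1 points meets every hyperplane, then T is the point set of a line of PG(n,q). -/
open Module Submodule

section aux

variable {F : Type*} [Field F] {V : Type*} [AddCommGroup V] [Module F V]

lemma rank_sup_two [FiniteDimensional F V] {p p' : Submodule F V}
    (h1 : finrank F p = 1) (h1' : finrank F p' = 1) (hne : p ≠ p') :
    finrank F ↥(p ⊔ p') = 2 := by
  have hle : p ⊓ p' < p := by
    refine lt_of_le_of_ne inf_le_left (fun h => hne ?_)
    have hpp : p ≤ p' := by rw [← h]; exact inf_le_right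
    exact Submodule.eq_of_le_of_finrank_eq hpp (h1.trans h1'.symm)
  have h0 : finrank F ↥(p ⊓ p') < 1 := h1 ▸ Submodule.finrank_lt_finrank_of_lt hle
  have hs := Submodule.finrank_sup_add_finrank_inf_eq p p'
  omega

lemma rank_dualAnn [FiniteDimensional F V] (W : Submodule F V) :
    finrank F ↥W.dualAnnihilator = finrank F V - finrank F W := by
  have h : finrank F (V ⧸ W) = finrank F ↥W.dualAnnihilator :=
    LinearEquiv.finrank_eq (Subspace.quotEquivAnnihilator W)
  have h2 := Submodule.finrank_quotient_add_finrank W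
  omega

lemma not_covered [Fintype F] [FiniteDimensional F V] (A : Submodule F V)
    (S : Finset (Submodule F V)) (hlt : ∀ B ∈ S, B < A)
    (hS : S.card ≤ Fintype.card F) (hA : 1 ≤ finrank F A) :
    ∃ φ ∈ A, ∀ B ∈ S, φ ∉ B := by
  classical
  haveI : Finite V := Module.finite_of_finite F
  haveI : Fintype V := Fintype.ofFinite V
  by_contra hcon
  push_neg at hcon
  set q := Fintype.card F with hqdef
  have hq1 : 1 < q := Fintype.one_lt_card
  set d := finrank F A with hd
  have hsub : (A : Set V).toFinset ⊆
      insert (0 : V) (S.biUnion fun B => ((B : Set V)).toFinset.erase 0) := by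
    intro x hx
    rw [Set.mem_toFinset] at hx
    by_cases hx0 : x = 0
    · simp [hx0]
    · obtain ⟨B, hB, hxB⟩ := hcon x hx
      refine Finset.mem_insert_of_mem (Finset.mem_biUnion.2 ⟨B, hB, ?_⟩)
      exact Finset.mem_erase.2 ⟨hx0, Set.mem_toFinset.2 hxB⟩
  have cardSub : ∀ B : Submodule F V, (B : Set V).toFinset.card = q ^ finrank F B := by
    intro B
    rw [Set.toFinset_card]
    have : Fintype.card ↥(B : Set V) = Fintype.card ↥B := by
      apply Fintype.card_congr; exact Equiv.refl _
    rw [this]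
    exact card_eq_pow_finrank
  have hm1 : ∀ B ∈ S, (((B : Set V)).toFinset.erase 0).card ≤ q ^ (d - 1) - 1 := by
    intro B hB
    have h0B : (0 : V) ∈ (B : Set V).toFinset := by
      rw [Set.mem_toFinset]; exact B.zero_mem
    rw [Finset.card_erase_of_mem h0B, cardSub B]
    have hrB : finrank F ↥B < d := Submodule.finrank_lt_finrank_of_lt (hlt B hB)
    have : q ^ finrank F ↥B ≤ q ^ (d - 1) :=
      Nat.pow_le_pow_right (by omega) (by omega)
    omega
  have hcardA : (A : Set V).toFinset.card = q ^ d := cardSub A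
  have hbound : q ^ d ≤ 1 + S.card * (q ^ (d - 1) - 1) := by
    calc q ^ d = (A : Set V).toFinset.card := hcardA.symm
    _ ≤ (insert (0 : V) (S.biUnion fun B => ((B : Set V)).toFinset.erase 0)).card :=
        Finset.card_le_card hsub
    _ ≤ 1 + (S.biUnion fun B => ((B : Set V)).toFinset.erase 0).card := by
        have := Finset.card_insert_le (0 : V) (S.biUnion fun B => ((B : Set V)).toFinset.erase 0)
        omega
    _ ≤ 1 + ∑ B ∈ S, (((B : Set V)).toFinset.erase 0).card := by
        have := Finset.card_biUnion_le (s := S)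
          (t := fun B => ((B : Set V)).toFinset.erase 0)
        omega
    _ ≤ 1 + S.card * (q ^ (d - 1) - 1) := by
        have := Finset.sum_le_card_nsmul S _ _ hm1
        simpa using this
  have hmul : S.card * (q ^ (d - 1) - 1) ≤ q * (q ^ (d - 1) - 1) :=
    Nat.mul_le_mul_right _ hS
  have hqm : q * (q ^ (d - 1) - 1) = q * q ^ (d - 1) - q := by
    have := Nat.mul_pred q (q ^ (d - 1))
    simpa [Nat.pred_eq_sub_one] using this
  have hpow : q * q ^ (d - 1) = q ^ d := by
    conv_rhs => rw [show d = (d - 1) + 1 by omega]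
    rw [pow_succ']
  have hqle : q ≤ q ^ d := Nat.le_self_pow (by omega) q
  omega

end aux

/-- **Bose–Burton theorem.** In `PG(n,q)` (points: 1-dimensional subspaces of
`F_q^{n+1}`; hyperplanes: `n`-dimensional subspaces), a set `T` of `q+1` points
meeting every hyperplane is the point set of a line of `PG(n,q)`. -/
theorem stmt1 (n q : ℕ) (F : Type*) [Field F] [Fintype F] (hq : Fintype.card F = q)
    (T : Set (Submodule F (Fin (n + 1) → F)))
    (hTpts : ∀ p ∈ T, Module.finrank F p = 1)
    (hcard : T.ncard = q + 1)
    (hblock : ∀ H : Submodule F (Fin (n + 1) → F), Module.finrank F H = n →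
      ∃ p ∈ T, p ≤ H) :
    ∃ W : Submodule F (Fin (n + 1) → F), Module.finrank F W = 2 ∧
      T = {p : Submodule F (Fin (n + 1) → F) | Module.finrank F p = 1 ∧ p ≤ W} := by
  classical
  set V := (Fin (n + 1) → F) with hV
  have hq2 : 2 ≤ q := hq ▸ Fintype.one_lt_card
  have hrV : finrank F V = n + 1 := by
    show finrank F (Fin (n + 1) → F) = n + 1
    simp [Module.finrank_pi]
  -- n ≥ 1
  have hn : 1 ≤ n := by
    by_contra hn0
    have h0 : n = 0 := by omega
    obtain ⟨p, hpT, hple⟩ := hblock ⊥ (by simp [h0])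
    have := hTpts p hpT
    rw [le_bot_iff] at hple
    rw [hple] at this
    simp [finrank_bot] at this
  -- T is finite
  haveI : Finite (Submodule F V) :=
    Finite.of_injective (fun p => (p : Set V)) SetLike.coe_injective
  have hTfin : T.Finite := Set.toFinite T
  -- two distinct points of T
  obtain ⟨p1, p2, hp1, hp2, hne⟩ := (Set.one_lt_ncard_iff hTfin).1 (by omega)
  set L := p1 ⊔ p2 with hL
  have hrL : finrank F ↥L = 2 := rank_sup_two (hTpts p1 hp1) (hTpts p2 hp2) hne
  -- key step: every point of L is in T
  have key : ∀ z : Submodule F V, finrank F z = 1 → z ≤ L → z ∈ T := by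
    intro z hz1 hzL
    by_contra hzT
    set D := Module.Dual F V with hD
    set A := z.dualAnnihilator with hA
    have hrA : finrank F ↥A = n := by
      rw [hA, rank_dualAnn, hrV, hz1]
      omega
    -- the collection of annihilators
    set f : Submodule F V → Submodule F D := fun t => (z ⊔ t).dualAnnihilator with hf
    set S : Finset (Submodule F D) := hTfin.toFinset.image f with hS
    have hzsup : ∀ t ∈ T, finrank F ↥(z ⊔ t) = 2 := by
      intro t ht
      exact rank_sup_two hz1 (hTpts t ht) (fun h => hzT (h ▸ ht))
    have hlt : ∀ B ∈ S, B < A := by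
      intro B hB
      rw [hS, Finset.mem_image] at hB
      obtain ⟨t, ht, rfl⟩ := hB
      rw [Set.Finite.mem_toFinset] at ht
      have hle : f t ≤ A := Submodule.dualAnnihilator_anti le_sup_left
      have hfr : finrank F ↥(f t) = n - 1 := by
        rw [hf]; rw [rank_dualAnn, hrV, hzsup t ht]; omega
      refine lt_of_le_of_ne hle (fun h => ?_)
      have h2 : finrank F ↥(f t) = finrank F ↥A :=
        congrArg (fun W : Submodule F (Module.Dual F (Fin (n + 1) → F)) => finrank F ↥W) h
      omega
    have hScard : S.card ≤ q := by
      have hzp : f p1 = f p2 := by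
        have e1 : z ⊔ p1 = L := by
          refine Submodule.eq_of_le_of_finrank_eq (sup_le hzL le_sup_left) ?_
          rw [hzsup p1 hp1, hrL]
        have e2 : z ⊔ p2 = L := by
          refine Submodule.eq_of_le_of_finrank_eq (sup_le hzL le_sup_right) ?_
          rw [hzsup p2 hp2, hrL]
        rw [hf]; simp only [e1, e2]
      have hsub2 : S ⊆ (hTfin.toFinset.erase p1).image f := by
        intro B hB
        rw [hS, Finset.mem_image] at hB
        obtain ⟨t, ht, rfl⟩ := hB
        by_cases htp : t = p1
        · subst htp
          refine Finset.mem_image.2 ⟨p2, ?_, hzp.symm⟩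
          exact Finset.mem_erase.2 ⟨hne.symm, hTfin.mem_toFinset.2 hp2⟩
        · exact Finset.mem_image.2 ⟨t, Finset.mem_erase.2 ⟨htp, ht⟩, rfl⟩
      calc S.card ≤ ((hTfin.toFinset.erase p1).image f).card := Finset.card_le_card hsub2
        _ ≤ (hTfin.toFinset.erase p1).card := Finset.card_image_le
        _ = hTfin.toFinset.card - 1 :=
            Finset.card_erase_of_mem (hTfin.mem_toFinset.2 hp1)
        _ ≤ q := by
            have hTc : hTfin.toFinset.card = q + 1 := by
              rw [← Set.ncard_eq_toFinset_card T hTfin, hcard]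
            omega
    obtain ⟨φ, hφA, hφ⟩ := not_covered A S hlt (by omega) (by omega)
    have hφ0 : φ ≠ 0 := by
      intro h0
      exact hφ (f p1) (Finset.mem_image.2 ⟨p1, hTfin.mem_toFinset.2 hp1, rfl⟩)
        (h0 ▸ (f p1).zero_mem)
    set H := LinearMap.ker φ with hH
    have hzH : z ≤ H := by
      intro v hv
      rw [hH, LinearMap.mem_ker]
      exact (Submodule.mem_dualAnnihilator φ).1 hφA v hv
    have hrH : finrank F ↥H = n := by
      obtain ⟨v, hv⟩ : ∃ v, φ v ≠ 0 := by
        by_contra hc; push_neg at hc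
        exact hφ0 (LinearMap.ext fun v => hc v)
      have hrange : LinearMap.range φ = ⊤ := by
        rw [eq_top_iff]
        intro c _
        exact ⟨(c / φ v) • v, by simp [div_mul_cancel₀, hv]⟩
      have := LinearMap.finrank_range_add_finrank_ker φ
      rw [hrange, finrank_top] at this
      have h1 : finrank F F = 1 := Module.finrank_self F
      rw [h1, hrV] at this
      rw [hH]
      omega
    obtain ⟨t, htT, htH⟩ := hblock H hrH
    refine hφ (f t) (Finset.mem_image.2 ⟨t, hTfin.mem_toFinset.2 htT, rfl⟩) ?_
    rw [hf]
    rw [Submodule.mem_dualAnnihilator]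
    intro w hw
    have : w ∈ H := (sup_le hzH htH) hw
    rwa [hH, LinearMap.mem_ker] at this
  -- generators of p1 and p2
  obtain ⟨v1, hv1p, hv10⟩ : ∃ v ∈ p1, v ≠ (0 : V) := by
    rw [← Submodule.ne_bot_iff]
    intro h
    have := hTpts p1 hp1
    rw [h] at this; simp [finrank_bot] at this
  obtain ⟨v2, hv2p, hv20⟩ : ∃ v ∈ p2, v ≠ (0 : V) := by
    rw [← Submodule.ne_bot_iff]
    intro h
    have := hTpts p2 hp2
    rw [h] at this; simp [finrank_bot] at this
  have hp1span : p1 = Submodule.span F {v1} := by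
    refine (Submodule.eq_of_le_of_finrank_eq ?_ ?_).symm
    · rw [Submodule.span_le, Set.singleton_subset_iff]; exact hv1p
    · rw [finrank_span_singleton hv10, hTpts p1 hp1]
  have hp2span : p2 = Submodule.span F {v2} := by
    refine (Submodule.eq_of_le_of_finrank_eq ?_ ?_).symm
    · rw [Submodule.span_le, Set.singleton_subset_iff]; exact hv2p
    · rw [finrank_span_singleton hv20, hTpts p2 hp2]
  -- linear independence style coefficient lemma
  have eqcoef0 : ∀ s t : F, s • v1 + t • v2 = 0 → s = 0 ∧ t = 0 := by
    intro s t hst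
    by_cases hs : s = 0
    · subst hs
      rw [zero_smul, zero_add] at hst
      rcases smul_eq_zero.1 hst with h | h
      · exact ⟨rfl, h⟩
      · exact absurd h hv20
    · exfalso
      have hsv : s • v1 = -(t • v2) := eq_neg_of_add_eq_zero_left hst
      have h3 : v1 = (s⁻¹ * (-t)) • v2 := by
        calc v1 = s⁻¹ • (s • v1) := by rw [smul_smul, inv_mul_cancel₀ hs, one_smul]
        _ = s⁻¹ • ((-t) • v2) := by rw [hsv, neg_smul]
        _ = (s⁻¹ * (-t)) • v2 := by rw [smul_smul]
      have hv1p2 : v1 ∈ p2 := by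
        rw [h3]; exact Submodule.smul_mem _ _ hv2p
      have hle : p1 ≤ p2 := by
        rw [hp1span, Submodule.span_le, Set.singleton_subset_iff]; exact hv1p2
      exact hne (Submodule.eq_of_le_of_finrank_eq hle
        ((hTpts p1 hp1).trans (hTpts p2 hp2).symm))
  have eqcoef : ∀ a b a' b' : F, a • v1 + b • v2 = a' • v1 + b' • v2 → a = a' ∧ b = b' := by
    intro a b a' b' h
    have h0 : (a - a') • v1 + (b - b') • v2 = 0 := by
      rw [sub_smul, sub_smul]
      rw [sub_add_sub_comm, h, sub_self]
    obtain ⟨h1, h2⟩ := eqcoef0 _ _ h0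
    constructor <;> [skip; skip] <;>
      [exact sub_eq_zero.1 h1; exact sub_eq_zero.1 h2]
  -- the q+1 points of L
  set g : Option F → Submodule F V := fun x =>
    match x with
    | none => Submodule.span F {v2}
    | some c => Submodule.span F {v1 + c • v2} with hg
  have hgL : ∀ x, g x ≤ L := by
    intro x
    match x with
    | none =>
      exact Submodule.span_le.2 (Set.singleton_subset_iff.2 (Submodule.mem_sup_right hv2p))
    | some c =>
      exact Submodule.span_le.2 (Set.singleton_subset_iff.2
        (add_mem (Submodule.mem_sup_left hv1p)
          (Submodule.smul_mem _ _ (Submodule.mem_sup_right hv2p))))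
  have hne1 : ∀ c : F, v1 + c • v2 ≠ 0 := by
    intro c h
    have : (1 : F) • v1 + c • v2 = 0 := by rw [one_smul]; exact h
    exact one_ne_zero (eqcoef0 1 c this).1
  have hg1 : ∀ x, finrank F ↥(g x) = 1 := by
    intro x
    match x with
    | none => exact finrank_span_singleton hv20
    | some c => exact finrank_span_singleton (hne1 c)
  have hginj : Function.Injective g := by
    intro x y hxy
    match x, y with
    | none, none => rfl
    | none, some c =>
      exfalso
      have h0 : v2 ∈ g none := Submodule.mem_span_singleton_self v2
      rw [hxy] at h0
      have h2 : v2 ∈ Submodule.span F {v1 + c • v2} := h0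
      obtain ⟨a, ha⟩ := Submodule.mem_span_singleton.1 h2
      have hv : (0 : F) • v1 + (1 : F) • v2 = a • v1 + (a * c) • v2 := by
        rw [zero_smul, zero_add, one_smul, ← smul_smul, ← smul_add, ha]
      obtain ⟨h1, h2'⟩ := eqcoef _ _ _ _ hv
      rw [← h1, zero_mul] at h2'
      exact one_ne_zero h2'
    | some c, none =>
      exfalso
      have h0 : v2 ∈ g none := Submodule.mem_span_singleton_self v2
      rw [← hxy] at h0
      have h2 : v2 ∈ Submodule.span F {v1 + c • v2} := h0
      obtain ⟨a, ha⟩ := Submodule.mem_span_singleton.1 h2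
      have hv : (0 : F) • v1 + (1 : F) • v2 = a • v1 + (a * c) • v2 := by
        rw [zero_smul, zero_add, one_smul, ← smul_smul, ← smul_add, ha]
      obtain ⟨h1, h2'⟩ := eqcoef _ _ _ _ hv
      rw [← h1, zero_mul] at h2'
      exact one_ne_zero h2'
    | some c, some c' =>
      have h0 : v1 + c • v2 ∈ g (some c) := Submodule.mem_span_singleton_self _
      rw [hxy] at h0
      have h2 : v1 + c • v2 ∈ Submodule.span F {v1 + c' • v2} := h0
      obtain ⟨a, ha⟩ := Submodule.mem_span_singleton.1 h2
      have hv : (1 : F) • v1 + c • v2 = a • v1 + (a * c') • v2 := by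
        rw [one_smul, ← smul_smul, ← smul_add, ha]
      obtain ⟨h1, h2'⟩ := eqcoef _ _ _ _ hv
      rw [← h1, one_mul] at h2'
      rw [h2']
  have hrange : Set.range g ⊆ T := by
    rintro _ ⟨x, rfl⟩
    exact key (g x) (hg1 x) (hgL x)
  have hrcard : (Set.range g).ncard = q + 1 := by
    rw [← Set.image_univ, Set.ncard_image_of_injective _ hginj, Set.ncard_univ]
    rw [Nat.card_eq_fintype_card, Fintype.card_option, hq]
  have hTeq : Set.range g = T :=
    Set.eq_of_subset_of_ncard_le hrange (by omega) hTfin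
  refine ⟨L, hrL, ?_⟩
  ext p
  constructor
  · intro hpT
    rw [← hTeq] at hpT
    obtain ⟨x, rfl⟩ := hpT
    exact ⟨hg1 x, hgL x⟩
  · intro ⟨h1, h2⟩
    exact key p h1 h2
end

section
/- In PG(3,q), if T is a set of q+1 lines such that every line of PG(3,q) meets some member of T (i.e., no line is disjoint from all members of T), then there exist a point p and a plane W containing p such that T is exactly the set of lines through p contained in W. -/
set_option linter.unusedSectionVars false
set_option maxHeartbeats 1000000

open Module Submodule

section helpers

variable {F : Type*} [Field F] [Fintype F]
variable {U : Type*} [AddCommGroup U] [Module F U] [FiniteDimensional F U]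
variable {W : Type*} [AddCommGroup W] [Module F W]

lemma finite_submodules : Finite (Submodule F U) := by
  haveI : Finite U := Module.finite_of_finite F
  exact Finite.of_injective (fun s => (s : Set U)) SetLike.coe_injective

/-- rank-nullity for image of a submodule -/
lemma finrank_map_add (f : U →ₗ[F] W) (s : Submodule F U) :
    finrank F (s.map f) + finrank F (s ⊓ LinearMap.ker f : Submodule F U) = finrank F s := by
  have h1 : LinearMap.range (f.domRestrict s) = s.map f := LinearMap.range_domRestrict s f
  have h2 : LinearMap.ker (f.domRestrict s) = comap s.subtype (LinearMap.ker f) := by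
    ext v; simp [LinearMap.mem_ker]
  have h3 := LinearMap.finrank_range_add_finrank_ker (f.domRestrict s)
  rw [h1, h2] at h3
  have h4 : finrank F (comap s.subtype (LinearMap.ker f)) =
      finrank F (s ⊓ LinearMap.ker f : Submodule F U) := by
    rw [← map_comap_subtype]
    exact (Submodule.equivSubtypeMap s (comap s.subtype (LinearMap.ker f))).finrank_eq
  rw [h4] at h3
  exact h3

lemma exists_span_of_finrank_one {y : Submodule F U} (h : finrank F y = 1) :
    ∃ v : U, v ≠ 0 ∧ y = span F {v} := by
  obtain ⟨v, hv0, hgen⟩ := finrank_eq_one_iff'.mp h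
  refine ⟨(v : U), by simpa using hv0, le_antisymm ?_ ?_⟩
  · intro w hw
    obtain ⟨c, hc⟩ := hgen ⟨w, hw⟩
    have : c • (v : U) = w := congrArg Subtype.val hc
    rw [← this]
    exact smul_mem _ _ (mem_span_singleton_self _)
  · rw [span_le, Set.singleton_subset_iff]; exact v.2

lemma span_singleton_eq_of_mem {y : Submodule F U} (hy : finrank F y = 1) {v : U}
    (hv : v ∈ y) (hv0 : v ≠ 0) : span F {v} = y :=
  eq_of_le_of_finrank_le ((span_singleton_le_iff_mem _ _).mpr hv)
    (by rw [hy, finrank_span_singleton hv0])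

/-- number of 1-dim subspaces contained in a 2-dim subspace is q+1 -/
lemma ncard_points_of_plane {n : Submodule F U} (hn : finrank F n = 2) :
    {y : Submodule F U | finrank F y = 1 ∧ y ≤ n}.ncard = Fintype.card F + 1 := by
  classical
  obtain ⟨B⟩ : Nonempty (Basis (Fin 2) F n) := ⟨finBasisOfFinrankEq F n hn⟩
  set b0 : U := (B 0 : U)
  set b1 : U := (B 1 : U)
  have hmem0 : b0 ∈ n := (B 0).2
  have hmem1 : b1 ∈ n := (B 1).2
  have hind : ∀ a b : F, a • b0 + b • b1 = 0 → a = 0 ∧ b = 0 := by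
    intro a b hab
    have : a • (B 0) + b • (B 1) = 0 := by
      apply Subtype.ext; simpa using hab
    have h2 := Fintype.linearIndependent_iff.mp B.linearIndependent ![a, b]
    have h3 : ∑ i : Fin 2, (![a,b] i) • B i = 0 := by
      simp [Fin.sum_univ_two, this]
    exact ⟨h2 h3 0, h2 h3 1⟩
  have hb1 : b1 ≠ 0 := by
    intro h
    have := hind 0 1 (by simp [h])
    simpa using this.2
  set ν : Option F → Submodule F U := fun o => match o with
    | none => span F {b1}
    | some t => span F {b0 + t • b1}
  have hvne : ∀ t : F, b0 + t • b1 ≠ 0 := by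
    intro t h
    have := hind 1 t (by simpa using h)
    simpa using this.1
  have hrange : {y : Submodule F U | finrank F y = 1 ∧ y ≤ n} = Set.range ν := by
    apply Set.eq_of_subset_of_subset
    · rintro y ⟨hy1, hyn⟩
      obtain ⟨w, hw0, rfl⟩ := exists_span_of_finrank_one hy1
      have hwn : w ∈ n := hyn (mem_span_singleton_self w)
      -- write w in coordinates
      have : ∃ a b : F, a • b0 + b • b1 = w := by
        have : w ∈ span F {b0, b1} := by
          have hspan : span F {b0, b1} = n := by
            apply eq_of_le_of_finrank_le
            · rw [span_le]; intro u hu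
              rcases hu with h | h
              · subst h; exact hmem0
              · simp at h; subst h; exact hmem1
            · rw [hn]
              by_contra hlt
              push_neg at hlt
              interval_cases h : finrank F (span F {b0, b1} : Submodule F U)
              · have := finrank_eq_zero.mp h
                have : b1 ∈ (⊥ : Submodule F U) := by
                  rw [← this]; exact subset_span (by simp)
                exact hb1 (by simpa using this)
              · obtain ⟨v, hv0, hveq⟩ := exists_span_of_finrank_one h
                have h0 : b0 ∈ span F {v} := by rw [← hveq]; exact subset_span (by simp)
                have h1 : b1 ∈ span F {v} := by rw [← hveq]; exact subset_span (by simp)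
                obtain ⟨c0, hc0⟩ := mem_span_singleton.mp h0
                obtain ⟨c1, hc1⟩ := mem_span_singleton.mp h1
                have hc1ne : c1 ≠ 0 := by rintro rfl; simp at hc1; exact hb1 hc1.symm
                have heq0 : c1 • b0 + (-c0) • b1 = 0 := by
                  rw [← hc0, ← hc1, smul_smul, smul_smul, ← add_smul]
                  convert zero_smul F v using 2
                  ring
                exact hc1ne (hind _ _ heq0).1
          rw [hspan]; exact hwn
        rw [mem_span_pair] at this
        exact this
      obtain ⟨a, b, hab⟩ := this
      by_cases ha : a = 0
      · refine ⟨none, ?_⟩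
        have hbne : b ≠ 0 := by
          rintro rfl; subst ha; simp at hab; exact hw0 hab.symm
        show span F {b1} = span F {w}
        rw [← hab, ha]; simp
        rw [span_singleton_smul_eq (IsUnit.mk0 b hbne) b1]
      · refine ⟨some (a⁻¹ * b), ?_⟩
        show span F {b0 + (a⁻¹ * b) • b1} = span F {w}
        have : b0 + (a⁻¹ * b) • b1 = a⁻¹ • w := by
          rw [← hab]; rw [smul_add, smul_smul, smul_smul]; field_simp; rw [one_smul]
        rw [this, span_singleton_smul_eq (IsUnit.mk0 _ (inv_ne_zero ha)) w]
    · rintro y ⟨o, rfl⟩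
      match o with
      | none => exact ⟨finrank_span_singleton hb1, (span_singleton_le_iff_mem _ _).mpr hmem1⟩
      | some t => exact ⟨finrank_span_singleton (hvne t),
          (span_singleton_le_iff_mem _ _).mpr (add_mem hmem0 (smul_mem _ _ hmem1))⟩
  have hinj : Function.Injective ν := by
    rintro o1 o2 heq
    match o1, o2 with
    | none, none => rfl
    | some t, some t' =>
        have : b0 + t • b1 ∈ span F {b0 + t' • b1} := by
          rw [← show ν (some t') = span F {b0 + t' • b1} from rfl, ← heq]
          exact mem_span_singleton_self _
        obtain ⟨c, hc⟩ := mem_span_singleton.mp this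
        have hkey : (c - 1) • b0 + (c * t' - t) • b1 = c • (b0 + t' • b1) - (b0 + t • b1) := by
          module
        rw [hc, sub_self] at hkey
        obtain ⟨h1, h2⟩ := hind _ _ hkey
        have hc1 : c = 1 := sub_eq_zero.mp h1
        congr 1
        have h3 := sub_eq_zero.mp h2
        rw [hc1, one_mul] at h3; exact h3.symm
    | none, some t =>
        exfalso
        have : b1 ∈ span F {b0 + t • b1} := by
          rw [← show ν (some t) = span F {b0 + t • b1} from rfl, ← heq]
          exact mem_span_singleton_self _
        obtain ⟨c, hc⟩ := mem_span_singleton.mp this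
        have hkey : c • b0 + (c * t - 1) • b1 = c • (b0 + t • b1) - b1 := by module
        rw [hc, sub_self] at hkey
        obtain ⟨h1, h2⟩ := hind _ _ hkey
        rw [h1, zero_mul] at h2; simp at h2
    | some t, none =>
        exfalso
        have : b0 + t • b1 ∈ span F {b1} := by
          rw [← show ν none = span F {b1} from rfl, ← heq]
          exact mem_span_singleton_self _
        obtain ⟨c, hc⟩ := mem_span_singleton.mp this
        have hkey : (1:F) • b0 + (t - c) • b1 = (b0 + t • b1) - c • b1 := by module
        rw [hc, sub_self] at hkey
        have := (hind _ _ hkey).1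
        simp at this
  rw [hrange, ← Nat.card_coe_set_eq, Nat.card_range_of_injective hinj]
  simp [Nat.card_eq_fintype_card]


lemma point_sup_point {a b : Submodule F U} (ha : finrank F a = 1) (hb : finrank F b = 1)
    (hne : a ≠ b) : finrank F (a ⊔ b : Submodule F U) = 2 := by
  have hle : finrank F (a ⊓ b : Submodule F U) ≤ 1 := by
    rw [← ha]; exact Submodule.finrank_mono inf_le_left
  have h2 : finrank F (a ⊓ b : Submodule F U) ≠ 1 := by
    intro h
    have h3 : a ⊓ b = a := eq_of_le_of_finrank_le inf_le_left (by rw [ha, h])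
    have h4 : a ≤ b := (le_of_eq h3.symm).trans inf_le_right
    exact hne (eq_of_le_of_finrank_le h4 (by rw [ha, hb]))
  have hform := Submodule.finrank_sup_add_finrank_inf_eq a b
  omega

lemma plane_inf_plane (hU : finrank F U = 3) {a b : Submodule F U} (ha : finrank F a = 2)
    (hb : finrank F b = 2) (hne : a ≠ b) : finrank F (a ⊓ b : Submodule F U) = 1 := by
  have hle : finrank F (a ⊔ b : Submodule F U) ≤ 3 := by
    rw [← hU]; exact Submodule.finrank_le _
  have hge : 2 ≤ finrank F (a ⊔ b : Submodule F U) := by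
    rw [← ha]; exact Submodule.finrank_mono le_sup_left
  have h2 : finrank F (a ⊔ b : Submodule F U) ≠ 2 := by
    intro h
    have h3 : a = a ⊔ b := eq_of_le_of_finrank_le le_sup_left (by rw [ha, h])
    have h4 : b = a ⊔ b := eq_of_le_of_finrank_le le_sup_right (by rw [hb, h])
    exact hne (h3.trans h4.symm)
  have hform := Submodule.finrank_sup_add_finrank_inf_eq a b
  omega

/-- counting lines between a point and a hyperplane containing it -/
lemma ncard_lines_between {z W : Submodule F U} (hz : finrank F z = 1) (hW : finrank F W = 3)
    (hzW : z ≤ W) :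
    {L : Submodule F U | finrank F L = 2 ∧ z ≤ L ∧ L ≤ W}.ncard = Fintype.card F + 1 := by
  haveI : Finite (Submodule F U) := finite_submodules
  haveI : Finite (Submodule F (U ⧸ z)) := finite_submodules
  have hker : LinearMap.ker z.mkQ = z := Submodule.ker_mkQ z
  have hsurj : Function.Surjective z.mkQ := Submodule.mkQ_surjective z
  have hWq : finrank F (W.map z.mkQ) = 2 := by
    have := finrank_map_add z.mkQ W
    rw [hker, inf_eq_right.mpr hzW] at this
    omega
  have himg : (fun L => Submodule.map z.mkQ L) '' {L : Submodule F U | finrank F L = 2 ∧ z ≤ L ∧ L ≤ W}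
      = {y : Submodule F (U ⧸ z) | finrank F y = 1 ∧ y ≤ W.map z.mkQ} := by
    apply Set.eq_of_subset_of_subset
    · rintro y ⟨L, ⟨hL2, hzL, hLW⟩, rfl⟩
      refine ⟨?_, ?_⟩
      · show finrank F (Submodule.map z.mkQ L) = 1
        have := finrank_map_add z.mkQ L
        rw [hker, inf_eq_right.mpr hzL] at this
        omega
      · show Submodule.map z.mkQ L ≤ W.map z.mkQ
        exact Submodule.map_mono hLW
    · rintro y ⟨hy1, hyW⟩
      refine ⟨Submodule.comap z.mkQ y, ⟨?_, ?_, ?_⟩, ?_⟩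
      · have hmc : Submodule.map z.mkQ (Submodule.comap z.mkQ y) = y :=
          Submodule.map_comap_eq_of_surjective hsurj y
        have := finrank_map_add z.mkQ (Submodule.comap z.mkQ y)
        rw [hker, hmc] at this
        have hzc : z ≤ Submodule.comap z.mkQ y :=
          le_trans (le_of_eq hker.symm) (Submodule.comap_mono bot_le)
        rw [inf_eq_right.mpr hzc] at this
        omega
      · exact le_trans (le_of_eq hker.symm) (Submodule.comap_mono bot_le)
      · calc Submodule.comap z.mkQ y ≤ Submodule.comap z.mkQ (W.map z.mkQ) :=
              Submodule.comap_mono hyW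
          _ = W ⊔ z := by rw [Submodule.comap_map_eq, hker]
          _ = W := sup_eq_left.mpr hzW
      · exact Submodule.map_comap_eq_of_surjective hsurj y
  have hinj : Set.InjOn (fun L => Submodule.map z.mkQ L)
      {L : Submodule F U | finrank F L = 2 ∧ z ≤ L ∧ L ≤ W} := by
    rintro L1 ⟨_, hz1, _⟩ L2 ⟨_, hz2, _⟩ heq
    replace heq : Submodule.map z.mkQ L1 = Submodule.map z.mkQ L2 := heq
    have : Submodule.comap z.mkQ (Submodule.map z.mkQ L1)
        = Submodule.comap z.mkQ (Submodule.map z.mkQ L2) := by rw [heq]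
    rw [Submodule.comap_map_eq, Submodule.comap_map_eq, hker,
      sup_eq_left.mpr hz1, sup_eq_left.mpr hz2] at this
    exact this
  rw [← Set.ncard_image_of_injOn hinj, himg, ncard_points_of_plane hWq]

lemma ncard_planes_through (hU : finrank F U = 3) {z : Submodule F U} (hz : finrank F z = 1) :
    {L : Submodule F U | finrank F L = 2 ∧ z ≤ L}.ncard = Fintype.card F + 1 := by
  have h1 : {L : Submodule F U | finrank F L = 2 ∧ z ≤ L}
      = {L : Submodule F U | finrank F L = 2 ∧ z ≤ L ∧ L ≤ ⊤} := by
    ext L; simp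
  rw [h1, ncard_lines_between hz (by rw [finrank_top]; exact hU) le_top]

/-- `q` or fewer planes cannot cover a 3-dimensional space -/
lemma cover_card (hU : finrank F U = 3) (G : Set (Submodule F U))
    (hG2 : ∀ ℓ ∈ G, finrank F ℓ = 2) (hGcard : G.ncard ≤ Fintype.card F + 1)
    (hcov : ∀ v : U, v ≠ 0 → ∃ ℓ ∈ G, v ∈ ℓ) : G.ncard = Fintype.card F + 1 := by
  classical
  haveI : Finite (Submodule F U) := finite_submodules
  haveI : Finite U := Module.finite_of_finite F
  haveI : Fintype U := Fintype.ofFinite U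
  set q := Fintype.card F with hq
  have hq2 : 2 ≤ q := Fintype.one_lt_card
  by_contra hne
  have hGq : G.ncard ≤ q := by omega
  have hGfin : G.Finite := Set.toFinite G
  set Gf : Finset (Submodule F U) := hGfin.toFinset with hGf
  have hGfcard : Gf.card ≤ q := by
    rw [← Set.ncard_eq_toFinset_card G hGfin]; exact hGq
  have hsub : (Finset.univ.erase (0 : U)) ⊆ Gf.biUnion
      (fun ℓ => (Finset.univ.filter (fun v => v ∈ ℓ)).erase 0) := by
    intro v hv
    obtain ⟨ℓ, hℓG, hvℓ⟩ := hcov v (Finset.ne_of_mem_erase hv)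
    exact Finset.mem_biUnion.mpr ⟨ℓ, hGfin.mem_toFinset.mpr hℓG,
      Finset.mem_erase.mpr ⟨Finset.ne_of_mem_erase hv, by simp [hvℓ]⟩⟩
  have hcard1 : (Finset.univ.erase (0 : U)).card = q ^ 3 - 1 := by
    rw [Finset.card_erase_of_mem (Finset.mem_univ _), Finset.card_univ]
    rw [card_eq_pow_finrank (K := F) (V := U), hU]
  have hcard2 : ∀ ℓ ∈ Gf, ((Finset.univ.filter (fun v => v ∈ ℓ)).erase 0).card = q ^ 2 - 1 := by
    intro ℓ hℓ
    rw [Finset.card_erase_of_mem (Finset.mem_filter.mpr ⟨Finset.mem_univ _, zero_mem ℓ⟩)]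
    rw [← Fintype.card_subtype]
    rw [card_eq_pow_finrank (K := F) (V := ℓ), hG2 ℓ (hGfin.mem_toFinset.mp hℓ)]
  have hle : q ^ 3 - 1 ≤ q * (q ^ 2 - 1) := by
    calc q ^ 3 - 1 = (Finset.univ.erase (0 : U)).card := hcard1.symm
      _ ≤ (Gf.biUnion (fun ℓ => (Finset.univ.filter (fun v => v ∈ ℓ)).erase 0)).card :=
          Finset.card_le_card hsub
      _ ≤ ∑ ℓ ∈ Gf, ((Finset.univ.filter (fun v => v ∈ ℓ)).erase 0).card := Finset.card_biUnion_le
      _ = ∑ ℓ ∈ Gf, (q ^ 2 - 1) := Finset.sum_congr rfl hcard2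
      _ = Gf.card * (q ^ 2 - 1) := by rw [Finset.sum_const, smul_eq_mul]
      _ ≤ q * (q ^ 2 - 1) := Nat.mul_le_mul_right _ hGfcard
  have h1 : 1 ≤ q ^ 2 := Nat.one_le_pow _ _ (by omega)
  have key : q * (q ^ 2 - 1) + q = q ^ 3 := by
    have h2 : (q ^ 2 - 1) + 1 = q ^ 2 := Nat.sub_add_cancel h1
    calc q * (q ^ 2 - 1) + q = q * ((q ^ 2 - 1) + 1) := by ring
      _ = q * q ^ 2 := by rw [h2]
      _ = q ^ 3 := by ring
  have hq3 : 2 ^ 3 ≤ q ^ 3 := Nat.pow_le_pow_left hq2 3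
  omega

/-- the covering lemma: q+1 planes covering a 3-dim space share a common line -/
lemma cover_lemma (hU : finrank F U = 3) (G : Set (Submodule F U))
    (hG2 : ∀ ℓ ∈ G, finrank F ℓ = 2) (hGcard : G.ncard = Fintype.card F + 1)
    (hcov : ∀ v : U, v ≠ 0 → ∃ ℓ ∈ G, v ∈ ℓ) :
    ∃ z : Submodule F U, finrank F z = 1 ∧ ∀ ℓ ∈ G, z ≤ ℓ := by
  haveI : Finite (Submodule F U) := finite_submodules
  set q := Fintype.card F with hq
  have hq2 : 2 ≤ q := Fintype.one_lt_card
  have hGfin : G.Finite := Set.toFinite G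
  obtain ⟨ℓ₁, hℓ₁, hne1⟩ : ∃ ℓ₁ ∈ G, True := by
    obtain ⟨a, ha⟩ := Set.nonempty_of_ncard_ne_zero (s := G) (by omega)
    exact ⟨a, ha, trivial⟩
  obtain ⟨ℓ₂, hℓ₂, hℓ₁₂⟩ : ∃ ℓ₂ ∈ G, ℓ₂ ≠ ℓ₁ := by
    obtain ⟨b, hb, hbne⟩ := Set.exists_ne_of_one_lt_ncard (s := G) (by omega) ℓ₁
    exact ⟨b, hb, hbne⟩
  set z := ℓ₁ ⊓ ℓ₂ with hzdef
  have hz1 : finrank F z = 1 := by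
    rw [hzdef, inf_comm]
    exact plane_inf_plane hU (hG2 _ hℓ₂) (hG2 _ hℓ₁) hℓ₁₂
  refine ⟨z, hz1, ?_⟩
  by_contra hcon
  push_neg at hcon
  obtain ⟨ℓ₃, hℓ₃, hzℓ₃⟩ := hcon
  -- find a plane n through z not in G
  have hGz : {ℓ ∈ G | z ≤ ℓ} ⊆ G \ {ℓ₃} := by
    rintro ℓ ⟨hℓ, hzℓ⟩
    exact ⟨hℓ, by rintro rfl; exact hzℓ₃ hzℓ⟩
  have hGzcard : ({ℓ ∈ G | z ≤ ℓ}).ncard ≤ q := by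
    calc ({ℓ ∈ G | z ≤ ℓ}).ncard ≤ (G \ {ℓ₃}).ncard := Set.ncard_le_ncard hGz (hGfin.diff)
      _ = G.ncard - 1 := by rw [Set.ncard_diff_singleton_of_mem hℓ₃]
      _ = q := by omega
  have hplanes : {L : Submodule F U | finrank F L = 2 ∧ z ≤ L}.ncard = q + 1 :=
    ncard_planes_through hU hz1
  have hex : ∃ n : Submodule F U, (finrank F n = 2 ∧ z ≤ n) ∧ n ∉ G := by
    by_contra hno
    push_neg at hno
    have hsub : {L : Submodule F U | finrank F L = 2 ∧ z ≤ L} ⊆ {ℓ ∈ G | z ≤ ℓ} := by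
      rintro L ⟨hL2, hzL⟩
      exact ⟨hno L ⟨hL2, hzL⟩, hzL⟩
    have := Set.ncard_le_ncard hsub (hGfin.subset (Set.sep_subset _ _))
    omega
  obtain ⟨n, ⟨hn2, hzn⟩, hnG⟩ := hex
  -- the map ℓ ↦ ℓ ⊓ n from G \ {ℓ₂} surjects onto points of n
  have hmap : ∀ ℓ ∈ G, finrank F (ℓ ⊓ n : Submodule F U) = 1 := by
    intro ℓ hℓ
    exact plane_inf_plane hU (hG2 ℓ hℓ) hn2 (by rintro rfl; exact hnG hℓ)
  have hsurj : Set.SurjOn (fun ℓ => ℓ ⊓ n) (G \ {ℓ₂})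
      {y : Submodule F U | finrank F y = 1 ∧ y ≤ n} := by
    rintro y ⟨hy1, hyn⟩
    obtain ⟨v, hv0, rfl⟩ := exists_span_of_finrank_one hy1
    obtain ⟨ℓ, hℓ, hvℓ⟩ := hcov v hv0
    have hyeq : span F {v} = ℓ ⊓ n := by
      apply eq_of_le_of_finrank_le
      · rw [span_le, Set.singleton_subset_iff]
        exact ⟨hvℓ, hyn (mem_span_singleton_self v)⟩
      · rw [hmap ℓ hℓ, finrank_span_singleton hv0]
    by_cases hcase : ℓ = ℓ₂
    · subst hcase
      have h12 : ℓ₁ ⊓ n = ℓ ⊓ n := by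
        have hza : z = ℓ₁ ⊓ n := by
          apply eq_of_le_of_finrank_le (le_inf inf_le_left hzn)
          rw [hmap ℓ₁ hℓ₁, hz1]
        have hzb : z = ℓ ⊓ n := by
          apply eq_of_le_of_finrank_le (le_inf inf_le_right hzn)
          rw [hmap ℓ hℓ, hz1]
        rw [← hza, ← hzb]
      refine ⟨ℓ₁, ⟨hℓ₁, by simpa using hℓ₁₂.symm⟩, ?_⟩
      show ℓ₁ ⊓ n = span F {v}
      rw [hyeq]; exact h12
    · exact ⟨ℓ, ⟨hℓ, by simpa using hcase⟩, hyeq.symm⟩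
  have hpts : {y : Submodule F U | finrank F y = 1 ∧ y ≤ n}.ncard = q + 1 :=
    ncard_points_of_plane hn2
  have hcard_le : (q : ℕ) + 1 ≤ (G \ {ℓ₂}).ncard := by
    calc (q : ℕ) + 1 = {y : Submodule F U | finrank F y = 1 ∧ y ≤ n}.ncard := hpts.symm
      _ ≤ ((fun ℓ => ℓ ⊓ n) '' (G \ {ℓ₂})).ncard :=
          Set.ncard_le_ncard hsurj (((hGfin.diff).image _))
      _ ≤ (G \ {ℓ₂}).ncard := Set.ncard_image_le (hGfin.diff)
  have : (G \ {ℓ₂}).ncard = q := by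
    rw [Set.ncard_diff_singleton_of_mem hℓ₂]; omega
  omega


/-- blocking sets of size q+1 in a projective plane are lines -/
lemma blocking_lemma (hU : finrank F U = 3) (B : Set (Submodule F U))
    (hB1 : ∀ b ∈ B, finrank F b = 1) (hBcard : B.ncard = Fintype.card F + 1)
    (hblk : ∀ n : Submodule F U, finrank F n = 2 → ∃ b ∈ B, b ≤ n) :
    ∃ ℓ : Submodule F U, finrank F ℓ = 2 ∧ ∀ b ∈ B, b ≤ ℓ := by
  haveI : Finite (Submodule F U) := finite_submodules
  set q := Fintype.card F with hq
  have hq2 : 2 ≤ q := Fintype.one_lt_card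
  have hBfin : B.Finite := Set.toFinite B
  obtain ⟨b₁, hb₁⟩ := Set.nonempty_of_ncard_ne_zero (s := B) (by omega)
  obtain ⟨b₂, hb₂, hb12⟩ := Set.exists_ne_of_one_lt_ncard (s := B) (by omega) b₁
  set ℓ := b₁ ⊔ b₂ with hℓdef
  have hℓ2 : finrank F ℓ = 2 := point_sup_point (hB1 _ hb₁) (hB1 _ hb₂) (fun h => hb12 h.symm)
  refine ⟨ℓ, hℓ2, ?_⟩
  have hstep : ∀ y : Submodule F U, finrank F y = 1 → y ≤ ℓ → y ∈ B := by
    intro y hy1 hyℓ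
    by_contra hyB
    have hA : {n : Submodule F U | finrank F n = 2 ∧ y ≤ n}.ncard = q + 1 :=
      ncard_planes_through hU hy1
    have hsurj : Set.SurjOn (fun b => b ⊔ y) (B \ {b₂})
        {n : Submodule F U | finrank F n = 2 ∧ y ≤ n} := by
      rintro n ⟨hn2, hyn⟩
      obtain ⟨b, hb, hbn⟩ := hblk n hn2
      have hby : b ≠ y := by rintro rfl; exact hyB hb
      have hbyn : b ⊔ y = n := by
        apply eq_of_le_of_finrank_le (sup_le hbn hyn)
        rw [hn2, point_sup_point (hB1 _ hb) hy1 hby]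
      by_cases hcase : b = b₂
      · subst hcase
        have hy2 : b ⊔ y = ℓ := by
          apply eq_of_le_of_finrank_le (sup_le le_sup_right hyℓ)
          rw [hℓ2, point_sup_point (hB1 _ hb) hy1 hby]
        have hb1y : b₁ ≠ y := by rintro rfl; exact hyB hb₁
        have hy1' : b₁ ⊔ y = ℓ := by
          apply eq_of_le_of_finrank_le (sup_le le_sup_left hyℓ)
          rw [hℓ2, point_sup_point (hB1 _ hb₁) hy1 hb1y]
        refine ⟨b₁, ⟨hb₁, by simpa using hb12.symm⟩, ?_⟩
        show b₁ ⊔ y = n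
        rw [hy1', ← hbyn]; exact hy2.symm
      · exact ⟨b, ⟨hb, by simpa using hcase⟩, hbyn⟩
    have hcard_le : q + 1 ≤ (B \ {b₂}).ncard := by
      calc q + 1 = {n : Submodule F U | finrank F n = 2 ∧ y ≤ n}.ncard := hA.symm
        _ ≤ ((fun b => b ⊔ y) '' (B \ {b₂})).ncard :=
            Set.ncard_le_ncard hsurj ((hBfin.diff).image _)
        _ ≤ (B \ {b₂}).ncard := Set.ncard_image_le (hBfin.diff)
    have : (B \ {b₂}).ncard = q := by
      rw [Set.ncard_diff_singleton_of_mem hb₂]; omega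
    omega
  intro b hb
  have hPl : {y : Submodule F U | finrank F y = 1 ∧ y ≤ ℓ}.ncard = q + 1 :=
    ncard_points_of_plane hℓ2
  have hsub : {y : Submodule F U | finrank F y = 1 ∧ y ≤ ℓ} ⊆ B := by
    rintro y ⟨h1, h2⟩; exact hstep y h1 h2
  have hBeq : {y : Submodule F U | finrank F y = 1 ∧ y ≤ ℓ} = B :=
    Set.eq_of_subset_of_ncard_le hsub (by omega) hBfin
  rw [← hBeq] at hb
  exact hb.2

end helpers

section cosets

variable {F : Type*} [Field F] [Fintype F]
variable {M : Type*} [AddCommGroup M] [Module F M] [FiniteDimensional F M]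

/-- an affine line in a vector space -/
def lineSet (F : Type*) [Field F] {M : Type*} [AddCommGroup M] [Module F M] (c a : M) :
    Set M := {w | ∃ t : F, w = c + t • a}

lemma mem_lineSet_self {c a : M} : c ∈ lineSet F c a := ⟨0, by simp⟩

lemma lineSet_ncard {c a : M} (ha : a ≠ 0) : (lineSet F c a).ncard = Fintype.card F := by
  have : lineSet F c a = Set.range (fun t : F => c + t • a) := by
    ext w; exact ⟨fun ⟨t, ht⟩ => ⟨t, ht.symm⟩, fun ⟨t, ht⟩ => ⟨t, ht.symm⟩⟩
  rw [this, ← Nat.card_coe_set_eq, Nat.card_range_of_injective, Nat.card_eq_fintype_card]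
  intro t t' htt
  simp only [add_right_inj] at htt
  have : (t - t') • a = 0 := by rw [sub_smul, htt, sub_self]
  rcases smul_eq_zero.mp this with h | h
  · exact sub_eq_zero.mp h
  · exact absurd h ha

lemma pair_indep_of_span_ne {x y : M} (hx : x ≠ 0) (hy : y ≠ 0)
    (h : Submodule.span F {x} ≠ Submodule.span F {y}) : LinearIndependent F ![x, y] := by
  rw [LinearIndependent.pair_iff]
  intro s t hst
  by_cases hs : s = 0
  · subst hs
    simp only [zero_smul, zero_add] at hst
    rcases smul_eq_zero.mp hst with h' | h'
    · exact ⟨rfl, h'⟩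
    · exact absurd h' hy
  · exfalso
    have hts : t ≠ 0 := by
      rintro rfl
      simp only [zero_smul, add_zero] at hst
      rcases smul_eq_zero.mp hst with h' | h'
      · exact hs h'
      · exact hx h'
    apply h
    have hxy : x = (-(t/s)) • y := by
      have h1 : s • x = -(t • y) := by rw [eq_neg_iff_add_eq_zero]; exact hst
      have h2 : x = s⁻¹ • (s • x) := by rw [smul_smul, inv_mul_cancel₀ hs, one_smul]
      rw [h2, h1, smul_neg, smul_smul, ← neg_smul]
      congr 2
      field_simp
    have hr : -(t/s) ≠ 0 := neg_ne_zero.mpr (div_ne_zero hts hs)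
    rw [hxy, span_singleton_smul_eq (IsUnit.mk0 _ hr)]

lemma lineSet_inter (hM : finrank F M = 2) {a b : M} (hab : LinearIndependent F ![a, b])
    (c d : M) : (lineSet F c a ∩ lineSet F d b).Nonempty := by
  have hB : Submodule.span F {a, b} = ⊤ := by
    have hbs := (basisOfLinearIndependentOfCardEqFinrank hab (by simp [hM])).span_eq
    rw [coe_basisOfLinearIndependentOfCardEqFinrank] at hbs
    have hr : Set.range ![a, b] = {a, b} := by
      ext w
      constructor
      · rintro ⟨i, rfl⟩
        fin_cases i <;> simp
      · rintro (rfl | rfl)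
        · exact ⟨0, by simp⟩
        · exact ⟨1, by simp⟩
    rwa [hr] at hbs
  have hmem : d - c ∈ Submodule.span F {a, b} := by rw [hB]; trivial
  obtain ⟨s, t, hst⟩ := Submodule.mem_span_pair.mp hmem
  refine ⟨c + s • a, ⟨s, rfl⟩, ⟨-t, ?_⟩⟩
  have hd : c + (s • a + t • b) = d := by rw [hst]; abel
  rw [neg_smul]
  calc c + s • a = c + (s • a + t • b) - t • b := by abel
    _ = d - t • b := by rw [hd]
    _ = d + -(t • b) := by abel

lemma exists_not_mem_of_ncard_lt {S : Set M} (h : S.ncard < Nat.card M) :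
    ∃ v : M, v ∉ S := by
  by_contra hno
  push_neg at hno
  have : S = Set.univ := Set.eq_univ_of_forall hno
  rw [this, Set.ncard_univ] at h
  omega

lemma ncard_finset_biUnion_le {ι : Type*} [Finite M] (K : Finset ι) (f : ι → Set M) :
    (⋃ k ∈ K, f k).ncard ≤ ∑ k ∈ K, (f k).ncard := by
  classical
  induction K using Finset.induction_on with
  | empty => simp
  | @insert a s ha ih =>
    rw [Finset.set_biUnion_insert, Finset.sum_insert ha]
    exact le_trans (Set.ncard_union_le _ _) (Nat.add_le_add_left ih _)


lemma avoid_lemma {ι : Type*} [DecidableEq ι] (hM : finrank F M = 2) {a b : M}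
    (hab : LinearIndependent F ![a, b]) (c₁ c₂ : M) (K : Finset ι)
    (hK : K.card + 2 ≤ Fintype.card F + 1)
    (α β : ι → F) (A C : ι → M)
    (hα : ∀ k ∈ K, α k ≠ 0) (hβ : ∀ k ∈ K, β k ≠ 0) (hA : ∀ k ∈ K, A k ≠ 0) :
    ∃ u v : M, u ∉ lineSet F c₁ a ∧ v ∉ lineSet F c₂ b ∧
      ∀ k ∈ K, (α k) • u + (β k) • v ∉ lineSet F (C k) (A k) := by
  haveI : Finite M := Module.finite_of_finite F
  haveI : Fintype M := Fintype.ofFinite M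
  set q := Fintype.card F with hqdef
  have hq2 : 2 ≤ q := Fintype.one_lt_card
  have ha : a ≠ 0 := by
    have := hab.ne_zero 0; simpa using this
  have hb : b ≠ 0 := by
    have := hab.ne_zero 1; simpa using this
  have hcardM : Nat.card M = q * q := by
    rw [Nat.card_eq_fintype_card, card_eq_pow_finrank (K := F) (V := M), hM]; ring
  set badset : ι → M → Set M :=
    fun k u => lineSet F ((β k)⁻¹ • (C k - (α k) • u)) (A k) with hbadsetdef
  have hbad : ∀ k ∈ K, ∀ u v : M,
      ((α k) • u + (β k) • v ∈ lineSet F (C k) (A k)) ↔ v ∈ badset k u := by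
    intro k hk u v
    have hβk := hβ k hk
    constructor
    · rintro ⟨t, ht⟩
      refine ⟨t * (β k)⁻¹, ?_⟩
      have h1 : (β k) • v = C k + t • A k - (α k) • u := by rw [← ht]; abel
      calc v = (β k)⁻¹ • ((β k) • v) := by
              rw [smul_smul, inv_mul_cancel₀ hβk, one_smul]
        _ = (β k)⁻¹ • (C k + t • A k - (α k) • u) := by rw [h1]
        _ = (β k)⁻¹ • (C k - (α k) • u) + (t * (β k)⁻¹) • A k := by module
    · rintro ⟨t, ht⟩
      refine ⟨t * (β k), ?_⟩
      rw [ht]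
      have h2 : (β k) • ((β k)⁻¹ • (C k - (α k) • u)) = C k - (α k) • u := by
        rw [smul_smul, mul_inv_cancel₀ hβk, one_smul]
      calc (α k) • u + (β k) • ((β k)⁻¹ • (C k - (α k) • u) + t • A k)
          = (α k) • u + (β k) • ((β k)⁻¹ • (C k - (α k) • u)) + (β k) • (t • A k) := by
            rw [smul_add]; abel
        _ = (α k) • u + (C k - (α k) • u) + (β k) • (t • A k) := by rw [h2]
        _ = C k + (t * β k) • A k := by module
  by_cases hex : ∃ k₀ ∈ K, Submodule.span F {A k₀} = Submodule.span F {b}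
  · -- some other line has direction b
    obtain ⟨k₀, hk₀K, hk₀⟩ := hex
    have hαk := hα k₀ hk₀K
    have hβk := hβ k₀ hk₀K
    set u₀ : M := (α k₀)⁻¹ • (C k₀ - (β k₀) • c₂) with hu₀
    have hchoice : ∃ s : F, u₀ + s • b ∉ lineSet F c₁ a := by
      by_contra hno
      push_neg at hno
      obtain ⟨t0, h0⟩ := hno 0
      obtain ⟨t1, h1⟩ := hno 1
      have hb' : b = (t1 - t0) • a := by
        have h2 : b = (u₀ + (1:F) • b) - (u₀ + (0:F) • b) := by module
        rw [h2, h1, h0]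
        module
      have h3 := (LinearIndependent.pair_iff.mp hab) (t1 - t0) (-1) (by rw [hb']; module)
      simpa using h3.2
    obtain ⟨s, hu⟩ := hchoice
    set u : M := u₀ + s • b with hudef
    have hsub0 : badset k₀ u ⊆ lineSet F c₂ b := by
      rintro w ⟨t, hw⟩
      have hAmem : A k₀ ∈ Submodule.span F {b} := by
        rw [← hk₀]; exact mem_span_singleton_self (A k₀)
      obtain ⟨μ, hμ⟩ := mem_span_singleton.mp hAmem
      refine ⟨-((β k₀)⁻¹ * (α k₀ * s)) + t * μ, ?_⟩
      have e1 : (α k₀) • u = (C k₀ - (β k₀) • c₂) + (α k₀ * s) • b := by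
        rw [hudef, hu₀, smul_add, smul_smul, mul_inv_cancel₀ hαk, one_smul, smul_smul]
      have e2 : (β k₀)⁻¹ • (C k₀ - (α k₀) • u) = c₂ - ((β k₀)⁻¹ * (α k₀ * s)) • b := by
        rw [e1]
        have e3 : C k₀ - ((C k₀ - (β k₀) • c₂) + (α k₀ * s) • b)
            = (β k₀) • c₂ - (α k₀ * s) • b := by abel
        rw [e3, smul_sub, smul_smul, inv_mul_cancel₀ hβk, one_smul, smul_smul]
      rw [hw, e2, ← hμ]
      module
    set bad : Set M := lineSet F c₂ b ∪ ⋃ k ∈ K.erase k₀, badset k u with hbaddef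
    have hbadcard : bad.ncard < q * q := by
      have h1 : (lineSet F c₂ b).ncard = q := lineSet_ncard hb
      have h2 := ncard_finset_biUnion_le (M := M) (K.erase k₀) (fun k => badset k u)
      have h3 : ∑ k ∈ K.erase k₀, (badset k u).ncard = (K.erase k₀).card * q := by
        rw [Finset.sum_congr rfl (fun k hk => lineSet_ncard (hA k (Finset.mem_of_mem_erase hk)))]
        rw [Finset.sum_const, smul_eq_mul]
      have h4 : (K.erase k₀).card ≤ q - 2 := by
        rw [Finset.card_erase_of_mem hk₀K]; omega
      have h5 : bad.ncard ≤ q + (q-2) * q := by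
        calc bad.ncard ≤ (lineSet F c₂ b).ncard + (⋃ k ∈ K.erase k₀, badset k u).ncard :=
              Set.ncard_union_le _ _
          _ ≤ q + (K.erase k₀).card * q := by rw [h1]; exact Nat.add_le_add_left (le_trans h2 (le_of_eq h3)) _
          _ ≤ q + (q-2) * q := Nat.add_le_add_left (Nat.mul_le_mul_right _ h4) _
      have key : (q - 2) * q + 2 * q = q * q := by
        have : q - 2 + 2 = q := by omega
        calc (q-2) * q + 2 * q = ((q-2) + 2) * q := by ring
          _ = q * q := by rw [this]
      omega
    obtain ⟨v, hv⟩ := exists_not_mem_of_ncard_lt (by rw [hcardM]; exact hbadcard)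
    refine ⟨u, v, hu, fun hmem => hv (Or.inl hmem), ?_⟩
    intro k hk hmem
    rw [hbad k hk u v] at hmem
    by_cases hkk : k = k₀
    · subst hkk; exact hv (Or.inl (hsub0 hmem))
    · exact hv (Or.inr (Set.mem_biUnion (Finset.mem_erase.mpr ⟨hkk, hk⟩) hmem))
  · -- no other line has direction b
    push_neg at hex
    have hqlt : q < q * q := by
      have h2q : 2 * q ≤ q * q := Nat.mul_le_mul_right q hq2
      omega
    obtain ⟨u, hu⟩ := exists_not_mem_of_ncard_lt (S := lineSet F c₁ a)
      (by rw [lineSet_ncard ha, hcardM]; exact hqlt)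
    set bad : Set M := lineSet F c₂ b ∪ ⋃ k ∈ K, (badset k u \ lineSet F c₂ b) with hbaddef
    have hk_small : ∀ k ∈ K, (badset k u \ lineSet F c₂ b).ncard ≤ q - 1 := by
      intro k hk
      have hind : LinearIndependent F ![A k, b] := pair_indep_of_span_ne (hA k hk) hb (hex k hk)
      obtain ⟨w, hw1, hw2⟩ := lineSet_inter hM hind ((β k)⁻¹ • (C k - (α k) • u)) c₂
      have hsub : badset k u \ lineSet F c₂ b ⊆ badset k u \ {w} := by
        rintro x ⟨hx1, hx2⟩
        exact ⟨hx1, by rintro rfl; exact hx2 hw2⟩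
      calc (badset k u \ lineSet F c₂ b).ncard ≤ (badset k u \ {w}).ncard :=
            Set.ncard_le_ncard hsub ((Set.toFinite _).diff)
        _ = (badset k u).ncard - 1 := Set.ncard_diff_singleton_of_mem hw1
        _ = q - 1 := by rw [lineSet_ncard (hA k hk)]
    have hbadcard : bad.ncard < q * q := by
      have h1 : (lineSet F c₂ b).ncard = q := lineSet_ncard hb
      have h2 := ncard_finset_biUnion_le (M := M) K (fun k => badset k u \ lineSet F c₂ b)
      have h3 : ∑ k ∈ K, (badset k u \ lineSet F c₂ b).ncard ≤ K.card * (q-1) :=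
        Finset.sum_le_card_nsmul _ _ _ hk_small
      have h4 : K.card ≤ q - 1 := by omega
      have h5 : bad.ncard ≤ q + (q-1) * (q-1) := by
        calc bad.ncard ≤ (lineSet F c₂ b).ncard + (⋃ k ∈ K, (badset k u \ lineSet F c₂ b)).ncard :=
              Set.ncard_union_le _ _
          _ ≤ q + K.card * (q-1) := by rw [h1]; exact Nat.add_le_add_left (le_trans h2 h3) _
          _ ≤ q + (q-1) * (q-1) := Nat.add_le_add_left (Nat.mul_le_mul_right _ h4) _
      have key : (q - 1) * (q - 1) + 2 * q = q * q + 1 := by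
        have e : q - 1 + 1 = q := Nat.sub_add_cancel (by omega)
        calc (q-1)*(q-1) + 2*q = (q-1)*(q-1) + 2*((q-1)+1) := by rw [e]
          _ = ((q-1)+1)*((q-1)+1) + 1 := by ring
          _ = q*q + 1 := by rw [e]
      omega
    obtain ⟨v, hv⟩ := exists_not_mem_of_ncard_lt (by rw [hcardM]; exact hbadcard)
    refine ⟨u, v, hu, fun hmem => hv (Or.inl hmem), ?_⟩
    intro k hk hmem
    rw [hbad k hk u v] at hmem
    have hvnot2 : v ∉ lineSet F c₂ b := fun hmem2 => hv (Or.inl hmem2)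
    exact hv (Or.inr (Set.mem_biUnion hk ⟨hmem, hvnot2⟩))

end cosets

section mainparts

variable {F : Type*} [Field F] [Fintype F]
variable {V : Type*} [AddCommGroup V] [Module F V] [FiniteDimensional F V]

/-- M1: a set of q+1 lines does not cover all points of PG(3,q) -/
lemma exists_uncovered (hV : finrank F V = 4) (T : Set (Submodule F V))
    (hTlines : ∀ M ∈ T, finrank F M = 2) (hcard : T.ncard = Fintype.card F + 1) :
    ∃ v₀ : V, v₀ ≠ 0 ∧ ∀ L ∈ T, v₀ ∉ L := by
  classical
  haveI : Finite (Submodule F V) := finite_submodules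
  haveI : Finite V := Module.finite_of_finite F
  haveI : Fintype V := Fintype.ofFinite V
  set q := Fintype.card F with hq
  have hq2 : 2 ≤ q := Fintype.one_lt_card
  by_contra hno
  push_neg at hno
  have hTfin : T.Finite := Set.toFinite T
  set Tf : Finset (Submodule F V) := hTfin.toFinset with hTf
  have hTfcard : Tf.card = q + 1 := by
    rw [← Set.ncard_eq_toFinset_card T hTfin]; exact hcard
  have hsub : (Finset.univ.erase (0 : V)) ⊆ Tf.biUnion
      (fun L => (Finset.univ.filter (fun v => v ∈ L)).erase 0) := by
    intro v hv
    obtain ⟨L, hLT, hvL⟩ := hno v (Finset.ne_of_mem_erase hv)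
    exact Finset.mem_biUnion.mpr ⟨L, hTfin.mem_toFinset.mpr hLT,
      Finset.mem_erase.mpr ⟨Finset.ne_of_mem_erase hv, by simp [hvL]⟩⟩
  have hcard1 : (Finset.univ.erase (0 : V)).card = q ^ 4 - 1 := by
    rw [Finset.card_erase_of_mem (Finset.mem_univ _), Finset.card_univ]
    rw [card_eq_pow_finrank (K := F) (V := V), hV]
  have hcard2 : ∀ L ∈ Tf, ((Finset.univ.filter (fun v => v ∈ L)).erase 0).card = q ^ 2 - 1 := by
    intro L hL
    rw [Finset.card_erase_of_mem (Finset.mem_filter.mpr ⟨Finset.mem_univ _, zero_mem L⟩)]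
    rw [← Fintype.card_subtype]
    rw [card_eq_pow_finrank (K := F) (V := L), hTlines L (hTfin.mem_toFinset.mp hL)]
  have hle : q ^ 4 - 1 ≤ (q + 1) * (q ^ 2 - 1) := by
    calc q ^ 4 - 1 = (Finset.univ.erase (0 : V)).card := hcard1.symm
      _ ≤ (Tf.biUnion (fun L => (Finset.univ.filter (fun v => v ∈ L)).erase 0)).card :=
          Finset.card_le_card hsub
      _ ≤ ∑ L ∈ Tf, ((Finset.univ.filter (fun v => v ∈ L)).erase 0).card := Finset.card_biUnion_le
      _ = ∑ L ∈ Tf, (q ^ 2 - 1) := Finset.sum_congr rfl hcard2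
      _ = Tf.card * (q ^ 2 - 1) := by rw [Finset.sum_const, smul_eq_mul]
      _ = (q + 1) * (q ^ 2 - 1) := by rw [hTfcard]
  have h1 : 1 ≤ q ^ 2 := Nat.one_le_pow _ _ (by omega)
  have key1 : (q + 1) * (q ^ 2 - 1) + (q + 1) = (q + 1) * q ^ 2 := by
    have h2 : (q ^ 2 - 1) + 1 = q ^ 2 := Nat.sub_add_cancel h1
    calc (q+1) * (q^2-1) + (q+1) = (q+1) * ((q^2-1) + 1) := by ring
      _ = (q+1) * q ^ 2 := by rw [h2]
  have key2 : (q + 1) * q ^ 2 = q ^ 3 + q ^ 2 := by ring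
  have h6 : 2 * q ^ 3 ≤ q ^ 4 := by
    calc 2 * q ^ 3 ≤ q * q ^ 3 := Nat.mul_le_mul_right _ hq2
      _ = q ^ 4 := by ring
  have h7 : 2 * q ^ 2 ≤ q ^ 3 := by
    calc 2 * q ^ 2 ≤ q * q ^ 2 := Nat.mul_le_mul_right _ hq2
      _ = q ^ 3 := by ring
  have h8 : 2 * q ≤ q ^ 2 := by
    calc 2 * q ≤ q * q := Nat.mul_le_mul_right _ hq2
      _ = q ^ 2 := by ring
  omega

/-- M2: existence of a transversal line meeting every line of T in a point,
with distinct planes -/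
lemma exists_transversal (hV : finrank F V = 4) (T : Set (Submodule F V))
    (hTlines : ∀ M ∈ T, finrank F M = 2) (hcard : T.ncard = Fintype.card F + 1)
    (hblock : ∀ L : Submodule F V, finrank F L = 2 → ∃ M ∈ T, L ⊓ M ≠ ⊥) :
    ∃ m : Submodule F V, finrank F m = 2 ∧ (∀ L ∈ T, finrank F (m ⊓ L : Submodule F V) = 1) ∧
      (∀ L ∈ T, ∀ L' ∈ T, m ⊔ L = m ⊔ L' → L = L') := by
  classical
  haveI : Finite (Submodule F V) := finite_submodules
  set q := Fintype.card F with hq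
  obtain ⟨v₀, hv₀0, hv₀⟩ := exists_uncovered hV T hTlines hcard
  set x : Submodule F V := span F {v₀} with hxdef
  have hx1 : finrank F x = 1 := finrank_span_singleton hv₀0
  have hxL : ∀ L ∈ T, x ⊓ L = ⊥ := by
    intro L hL
    rw [eq_bot_iff]
    rintro w ⟨hw1, hw2⟩
    obtain ⟨t, rfl⟩ := mem_span_singleton.mp hw1
    rcases eq_or_ne t 0 with rfl | ht
    · simp
    · exfalso
      apply hv₀ L hL
      have : t⁻¹ • (t • v₀) ∈ L := smul_mem _ _ hw2
      rwa [smul_smul, inv_mul_cancel₀ ht, one_smul] at this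
  have hker : LinearMap.ker x.mkQ = x := Submodule.ker_mkQ x
  have hsurjQ : Function.Surjective x.mkQ := Submodule.mkQ_surjective x
  have hQ3 : finrank F (V ⧸ x) = 3 := by
    have := Submodule.finrank_quotient_add_finrank x
    omega
  have hmapdim : ∀ L ∈ T, finrank F (Submodule.map x.mkQ L) = 2 := by
    intro L hL
    have := finrank_map_add x.mkQ L
    rw [hker, inf_comm, hxL L hL] at this
    rw [hTlines L hL] at this
    simpa using this
  set G : Set (Submodule F (V ⧸ x)) := (fun L => Submodule.map x.mkQ L) '' T with hGdef
  have hTfin : T.Finite := Set.toFinite T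
  have hG2 : ∀ ℓ ∈ G, finrank F ℓ = 2 := by
    rintro ℓ ⟨L, hL, rfl⟩; exact hmapdim L hL
  have hGcard_le : G.ncard ≤ q + 1 := by
    rw [← hcard]; exact Set.ncard_image_le hTfin
  have hcov : ∀ vb : V ⧸ x, vb ≠ 0 → ∃ ℓ ∈ G, vb ∈ ℓ := by
    intro vb hvb
    set N : Submodule F V := Submodule.comap x.mkQ (span F {vb}) with hNdef
    have hxN : x ≤ N := le_trans (le_of_eq hker.symm) (Submodule.comap_mono bot_le)
    have hN2 : finrank F N = 2 := by
      have h1 := finrank_map_add x.mkQ N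
      rw [hker, inf_eq_right.mpr hxN,
        Submodule.map_comap_eq_of_surjective hsurjQ, finrank_span_singleton hvb] at h1
      omega
    obtain ⟨L, hLT, hLN⟩ := hblock N hN2
    obtain ⟨w, hwmem, hw0⟩ := Submodule.exists_mem_ne_zero_of_ne_bot hLN
    have hwN : w ∈ N := hwmem.1
    have hwL : w ∈ L := hwmem.2
    have hwnx : w ∉ x := by
      intro hwx
      have : w ∈ x ⊓ L := ⟨hwx, hwL⟩
      rw [hxL L hLT] at this
      exact hw0 this
    have hmkw : x.mkQ w ≠ 0 := by
      intro h
      apply hwnx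
      rw [← hker]
      exact LinearMap.mem_ker.mpr h
    have hmkw_mem : x.mkQ w ∈ span F {vb} := hwN
    obtain ⟨t, ht⟩ := mem_span_singleton.mp hmkw_mem
    have htne : t ≠ 0 := by rintro rfl; rw [zero_smul] at ht; exact hmkw ht.symm
    refine ⟨Submodule.map x.mkQ L, ⟨L, hLT, rfl⟩, ?_⟩
    have : vb = t⁻¹ • (x.mkQ w) := by rw [← ht, smul_smul, inv_mul_cancel₀ htne, one_smul]
    rw [this]
    exact smul_mem _ _ ⟨w, hwL, rfl⟩
  have hGcard : G.ncard = q + 1 := cover_card hQ3 G hG2 hGcard_le hcov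
  have hinjOn : Set.InjOn (fun L => Submodule.map x.mkQ L) T :=
    Set.injOn_of_ncard_image_eq (by rw [← hGdef, hGcard, hcard]) hTfin
  obtain ⟨z, hz1, hzG⟩ := cover_lemma hQ3 G hG2 hGcard hcov
  set m : Submodule F V := Submodule.comap x.mkQ z with hmdef
  have hxm : x ≤ m := le_trans (le_of_eq hker.symm) (Submodule.comap_mono bot_le)
  have hm2 : finrank F m = 2 := by
    have h1 := finrank_map_add x.mkQ m
    rw [hker, inf_eq_right.mpr hxm, Submodule.map_comap_eq_of_surjective hsurjQ] at h1
    omega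
  refine ⟨m, hm2, ?_, ?_⟩
  · intro L hL
    have hne : m ⊓ L ≠ ⊥ := by
      obtain ⟨vb, hvb0, hvbz⟩ := exists_span_of_finrank_one hz1
      have hvbmem : vb ∈ Submodule.map x.mkQ L := by
        apply hzG _ ⟨L, hL, rfl⟩
        rw [hvbz]; exact mem_span_singleton_self vb
      obtain ⟨w, hwL, hwvb⟩ := hvbmem
      have hwm : w ∈ m := by
        show x.mkQ w ∈ z
        rw [hwvb, hvbz]; exact mem_span_singleton_self vb
      have hw0 : w ≠ 0 := by rintro rfl; rw [map_zero] at hwvb; exact hvb0 hwvb.symm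
      intro hbot
      have : w ∈ (⊥ : Submodule F V) := hbot ▸ ⟨hwm, hwL⟩
      exact hw0 (by simpa using this)
    have hlt : m ⊓ L < m := by
      refine lt_of_le_of_ne inf_le_left ?_
      intro heq
      have hmL : m ≤ L := heq ▸ inf_le_right
      have hxLle : x ≤ L := le_trans hxm hmL
      have : x = ⊥ := by
        rw [← hxL L hL]
        exact le_antisymm (le_inf le_rfl hxLle) inf_le_left
      rw [this] at hx1
      simp at hx1
    have h2 := Submodule.finrank_lt_finrank_of_lt hlt
    rw [hm2] at h2
    have h3 : finrank F (m ⊓ L : Submodule F V) ≠ 0 := by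
      intro h
      exact hne (Submodule.finrank_eq_zero.mp h)
    omega
  · intro L hL L' hL' heq
    have hplane : ∀ N ∈ T, m ⊔ N = Submodule.comap x.mkQ (Submodule.map x.mkQ N) := by
      intro N hN
      rw [Submodule.comap_map_eq, hker]
      apply le_antisymm
      · apply sup_le
        · calc m = Submodule.comap x.mkQ z := hmdef
            _ ≤ Submodule.comap x.mkQ (Submodule.map x.mkQ N) :=
                Submodule.comap_mono (hzG _ ⟨N, hN, rfl⟩)
            _ = N ⊔ x := by rw [Submodule.comap_map_eq, hker]
        · exact le_sup_left
      · exact sup_le le_sup_right (le_trans hxm le_sup_left)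
    rw [hplane L hL, hplane L' hL'] at heq
    have : Submodule.map x.mkQ L = Submodule.map x.mkQ L' := by
      have h1 := congrArg (fun s => Submodule.map x.mkQ s) heq
      simpa [Submodule.map_comap_eq_of_surjective hsurjQ] using h1
    exact hinjOn hL hL' this


/-- M3: if all lines of T pass through a common point, T is a planar pencil -/
lemma concurrent_case (hV : finrank F V = 4) (T : Set (Submodule F V))
    (hTlines : ∀ M ∈ T, finrank F M = 2) (hcard : T.ncard = Fintype.card F + 1)
    (hblock : ∀ L : Submodule F V, finrank F L = 2 → ∃ M ∈ T, L ⊓ M ≠ ⊥)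
    (p : Submodule F V) (hp1 : finrank F p = 1) (hpT : ∀ L ∈ T, p ≤ L) :
    ∃ p' W : Submodule F V, finrank F p' = 1 ∧ finrank F W = 3 ∧ p' ≤ W ∧
      T = {L : Submodule F V | finrank F L = 2 ∧ p' ≤ L ∧ L ≤ W} := by
  classical
  haveI : Finite (Submodule F V) := finite_submodules
  haveI : Finite (Submodule F (V ⧸ p)) := finite_submodules
  set q := Fintype.card F with hq
  have hTfin : T.Finite := Set.toFinite T
  have hker : LinearMap.ker p.mkQ = p := Submodule.ker_mkQ p
  have hsurjQ : Function.Surjective p.mkQ := Submodule.mkQ_surjective p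
  have hQ3 : finrank F (V ⧸ p) = 3 := by
    have := Submodule.finrank_quotient_add_finrank p
    omega
  set B : Set (Submodule F (V ⧸ p)) := (fun L => Submodule.map p.mkQ L) '' T with hBdef
  have hB1 : ∀ b ∈ B, finrank F b = 1 := by
    rintro b ⟨L, hL, rfl⟩
    show finrank F (Submodule.map p.mkQ L) = 1
    have := finrank_map_add p.mkQ L
    rw [hker, inf_eq_right.mpr (hpT L hL), hTlines L hL, hp1] at this
    omega
  have hinjOn : Set.InjOn (fun L => Submodule.map p.mkQ L) T := by
    rintro L1 hL1 L2 hL2 heq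
    replace heq : Submodule.map p.mkQ L1 = Submodule.map p.mkQ L2 := heq
    have h1 : Submodule.comap p.mkQ (Submodule.map p.mkQ L1)
        = Submodule.comap p.mkQ (Submodule.map p.mkQ L2) := by rw [heq]
    rw [Submodule.comap_map_eq, Submodule.comap_map_eq, hker,
      sup_eq_left.mpr (hpT L1 hL1), sup_eq_left.mpr (hpT L2 hL2)] at h1
    exact h1
  have hBcard : B.ncard = q + 1 := by
    rw [hBdef, Set.ncard_image_of_injOn hinjOn, hcard]
  have hblk : ∀ n : Submodule F (V ⧸ p), finrank F n = 2 → ∃ b ∈ B, b ≤ n := by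
    intro n hn2
    set W' : Submodule F V := Submodule.comap p.mkQ n with hW'def
    have hpW' : p ≤ W' := le_trans (le_of_eq hker.symm) (Submodule.comap_mono bot_le)
    have hmapW' : Submodule.map p.mkQ W' = n := Submodule.map_comap_eq_of_surjective hsurjQ n
    have hW'3 : finrank F W' = 3 := by
      have := finrank_map_add p.mkQ W'
      rw [hker, inf_eq_right.mpr hpW', hmapW', hn2] at this
      omega
    -- find a 2-dim complement of p inside W'
    set p' : Submodule F ↥W' := Submodule.comap W'.subtype p with hp'def
    have hp'1 : finrank F p' = 1 := by
      have h1 : Submodule.map W'.subtype p' = W' ⊓ p := Submodule.map_comap_subtype _ _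
      have h2 : W' ⊓ p = p := inf_eq_right.mpr hpW'
      have h3 := (Submodule.equivSubtypeMap W' p').finrank_eq
      rw [h1, h2] at h3
      rw [h3, hp1]
    obtain ⟨c, hc⟩ := Submodule.exists_isCompl p'
    have hc2 : finrank F c = 2 := by
      have h1 := Submodule.finrank_add_eq_of_isCompl hc
      have h2 : finrank F ↥W' = 3 := hW'3
      rw [hp'1] at h1
      omega
    set L' : Submodule F V := Submodule.map W'.subtype c with hL'def
    have hL'2 : finrank F L' = 2 := by
      have h3 := (Submodule.equivSubtypeMap W' c).finrank_eq
      rw [← h3, hc2]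
    have hL'p : L' ⊓ p = ⊥ := by
      rw [eq_bot_iff]
      rintro g ⟨hg1, hg2⟩
      obtain ⟨g', hg'c, rfl⟩ := hg1
      have hg'p : g' ∈ p' := by
        show W'.subtype g' ∈ p
        exact hg2
      have : g' ∈ p' ⊓ c := ⟨hg'p, hg'c⟩
      rw [hc.inf_eq_bot] at this
      have hg'0 : g' = 0 := by simpa using this
      simp [hg'0]
    obtain ⟨Lm, hLmT, hLmne⟩ := hblock L' hL'2
    obtain ⟨g, hgmem, hg0⟩ := Submodule.exists_mem_ne_zero_of_ne_bot hLmne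
    have hgL' : g ∈ L' := hgmem.1
    have hgLm : g ∈ Lm := hgmem.2
    have hgnp : g ∉ p := by
      intro hgp
      have : g ∈ L' ⊓ p := ⟨hgL', hgp⟩
      rw [hL'p] at this
      exact hg0 (by simpa using this)
    have hspan1 : finrank F (span F {g}) = 1 := finrank_span_singleton hg0
    have hspanne : span F {g} ≠ p := by
      intro h
      exact hgnp (h ▸ mem_span_singleton_self g)
    have hLmeq : span F {g} ⊔ p = Lm := by
      apply eq_of_le_of_finrank_le
      · exact sup_le ((span_singleton_le_iff_mem _ _).mpr hgLm) (hpT Lm hLmT)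
      · rw [hTlines Lm hLmT, point_sup_point hspan1 hp1 hspanne]
    have hLmW' : Lm ≤ W' := by
      rw [← hLmeq]
      apply sup_le
      · rw [span_singleton_le_iff_mem]
        exact Submodule.map_subtype_le W' c hgL'
      · exact hpW'
    refine ⟨Submodule.map p.mkQ Lm, ⟨Lm, hLmT, rfl⟩, ?_⟩
    calc Submodule.map p.mkQ Lm ≤ Submodule.map p.mkQ W' := Submodule.map_mono hLmW'
      _ = n := hmapW'
  obtain ⟨ℓ', hℓ'2, hℓ'B⟩ := blocking_lemma hQ3 B hB1 hBcard hblk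
  set W : Submodule F V := Submodule.comap p.mkQ ℓ' with hWdef
  have hpW : p ≤ W := le_trans (le_of_eq hker.symm) (Submodule.comap_mono bot_le)
  have hW3 : finrank F W = 3 := by
    have := finrank_map_add p.mkQ W
    rw [hker, inf_eq_right.mpr hpW, Submodule.map_comap_eq_of_surjective hsurjQ, hℓ'2] at this
    omega
  have hTW : ∀ L ∈ T, L ≤ W := by
    intro L hL
    calc L ≤ Submodule.comap p.mkQ (Submodule.map p.mkQ L) := Submodule.le_comap_map _ _
      _ ≤ Submodule.comap p.mkQ ℓ' := Submodule.comap_mono (hℓ'B _ ⟨L, hL, rfl⟩)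
  have hpencil : {L : Submodule F V | finrank F L = 2 ∧ p ≤ L ∧ L ≤ W}.ncard = q + 1 :=
    ncard_lines_between hp1 hW3 hpW
  have hsub : T ⊆ {L : Submodule F V | finrank F L = 2 ∧ p ≤ L ∧ L ≤ W} := by
    intro L hL
    exact ⟨hTlines L hL, hpT L hL, hTW L hL⟩
  have hTeq : T = {L : Submodule F V | finrank F L = 2 ∧ p ≤ L ∧ L ≤ W} :=
    Set.eq_of_subset_of_ncard_le hsub (by omega) (Set.toFinite _)
  exact ⟨p, W, hp1, hW3, hpW, hTeq⟩


/-- the non-concurrent configuration contradicts the blocking property -/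
lemma nonconcurrent_absurd (hV : finrank F V = 4) (T : Set (Submodule F V))
    (hTlines : ∀ M ∈ T, finrank F M = 2) (hcard : T.ncard = Fintype.card F + 1)
    (hblock : ∀ L : Submodule F V, finrank F L = 2 → ∃ M ∈ T, L ⊓ M ≠ ⊥)
    (m : Submodule F V) (hm2 : finrank F m = 2)
    (hmL : ∀ L ∈ T, finrank F (m ⊓ L : Submodule F V) = 1)
    (hpinj : ∀ L ∈ T, ∀ L' ∈ T, m ⊔ L = m ⊔ L' → L = L')
    {L₁ L₂ : Submodule F V} (hL₁ : L₁ ∈ T) (hL₂ : L₂ ∈ T)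
    (hne12 : m ⊓ L₁ ≠ m ⊓ L₂) : False := by
  classical
  haveI : Finite (Submodule F V) := finite_submodules
  set q := Fintype.card F with hq
  have hq2 : 2 ≤ q := Fintype.one_lt_card
  have hTfin : T.Finite := Set.toFinite T
  -- generators of m ⊓ L
  have hAex : ∀ L ∈ T, ∃ aL : V, aL ≠ 0 ∧ m ⊓ L = span F {aL} := by
    intro L hL
    obtain ⟨vv, hv0, hveq⟩ := exists_span_of_finrank_one (hmL L hL)
    exact ⟨vv, hv0, hveq⟩
  choose! a ha0 haspan using hAex
  have ham : ∀ L ∈ T, a L ∈ m := by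
    intro L hL
    have : a L ∈ m ⊓ L := by rw [haspan L hL]; exact mem_span_singleton_self _
    exact this.1
  have haL : ∀ L ∈ T, a L ∈ L := by
    intro L hL
    have : a L ∈ m ⊓ L := by rw [haspan L hL]; exact mem_span_singleton_self _
    exact this.2
  -- complement of m and projection
  obtain ⟨Cc, hCc⟩ := Submodule.exists_isCompl m
  have hCc2 : finrank F Cc = 2 := by
    have h1 := Submodule.finrank_add_eq_of_isCompl hCc
    rw [hm2, hV] at h1
    omega
  set prC := Cc.projectionOnto m hCc.symm with hprC
  set πV : V →ₗ[F] V := Cc.subtype.comp prC with hπV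
  have hπmem : ∀ gg : V, πV gg ∈ Cc := fun gg => (prC gg).2
  have hπm : ∀ gg ∈ m, πV gg = 0 := by
    intro gg hg
    show (Cc.subtype) (prC gg) = 0
    rw [Submodule.projectionOnto_apply_of_mem_right hCc.symm hg]
    simp
  have hπC : ∀ gg ∈ Cc, πV gg = gg := by
    intro gg hg
    show (Cc.subtype) (prC gg) = gg
    have h1 : prC gg = ⟨gg, hg⟩ := by
      have := Submodule.linearProjOfIsCompl_apply_left hCc.symm (⟨gg, hg⟩ : Cc)
      simpa using this
    rw [h1]
    rfl
  have hπ0 : ∀ gg : V, πV gg = 0 → gg ∈ m := by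
    intro gg hg
    have h2 : prC gg = 0 := by
      apply Subtype.ext
      have hg' : Cc.subtype (prC gg) = 0 := hg
      simpa using hg'
    exact (Submodule.linearProjOfIsCompl_apply_eq_zero_iff hCc.symm).mp h2
  have hπdiff : ∀ gg : V, gg - πV gg ∈ m := by
    intro gg
    apply hπ0
    rw [map_sub, hπC _ (hπmem gg), sub_self]
  -- choose second generators with nonzero projection
  have hWex : ∀ L ∈ T, ∃ wL, wL ∈ L ∧ πV wL ≠ 0 := by
    intro L hL
    by_contra hno
    push_neg at hno
    have hLm : L ≤ m := fun gg hg => hπ0 gg (hno gg hg)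
    have hLem : L = m := eq_of_le_of_finrank_le hLm (by rw [hm2, hTlines L hL])
    have h1 := hmL L hL
    rw [hLem, inf_idem, hm2] at h1
    omega
  choose! w hwL hwπ using hWex
  set e : Submodule F V → V := fun L => πV (w L) with hedef
  set c : Submodule F V → V := fun L => w L - e L with hcdef
  have hcm : ∀ L, c L ∈ m := fun L => hπdiff (w L)
  have hwce : ∀ L, w L = c L + e L := by
    intro L
    show w L = (w L - e L) + e L
    abel
  have hπa : ∀ L ∈ T, πV (a L) = 0 := fun L hL => hπm _ (ham L hL)
  have hπe : ∀ L, πV (e L) = e L := fun L => hπC _ (hπmem (w L))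
  have hem : ∀ L, e L ∈ Cc := fun L => hπmem (w L)
  -- each line is spanned by its two chosen generators
  have hLspan : ∀ L ∈ T, L = span F {a L, w L} := by
    intro L hL
    have hsub : span F {a L, w L} ≤ L := by
      rw [span_le]
      rintro uu (rfl | h)
      · exact haL L hL
      · simp only [Set.mem_singleton_iff] at h; subst h; exact hwL L hL
    have hw0 : w L ≠ 0 := by
      intro h; apply hwπ L hL; rw [h, map_zero]
    have hwa : span F {a L} ≠ span F {w L} := by
      intro hspan
      have h1 : w L ∈ span F {a L} := hspan ▸ mem_span_singleton_self _
      obtain ⟨tt, htt⟩ := mem_span_singleton.mp h1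
      apply hwπ L hL
      rw [← htt, map_smul, hπa L hL, smul_zero]
    have hd : finrank F (span F {a L, w L} : Submodule F V) = 2 := by
      rw [show ({a L, w L} : Set V) = insert (a L) {w L} from rfl, Submodule.span_insert]
      exact point_sup_point (finrank_span_singleton (ha0 L hL)) (finrank_span_singleton hw0) hwa
    exact (eq_of_le_of_finrank_le hsub (by rw [hTlines L hL, hd])).symm
  -- directions determine the lines
  have hdir : ∀ L ∈ T, ∀ L' ∈ T, span F {e L} = span F {e L'} → L = L' := by
    intro L hL L' hL' hspan
    apply hpinj L hL L' hL'
    have key : ∀ N, N ∈ T → m ⊔ N = m ⊔ span F {e N} := by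
      intro N hN
      apply le_antisymm
      · apply sup_le le_sup_left
        have h1 : span F {a N, w N} ≤ m ⊔ span F {e N} := by
          rw [span_le]
          rintro uu (rfl | h)
          · exact Submodule.mem_sup_left (ham N hN)
          · simp only [Set.mem_singleton_iff] at h; subst h
            rw [hwce N]
            exact Submodule.add_mem_sup (hcm N) (mem_span_singleton_self _)
        exact le_trans (le_of_eq (hLspan N hN)) h1
      · apply sup_le le_sup_left
        rw [span_le]
        intro uu hu
        simp only [Set.mem_singleton_iff] at hu; subst hu
        have h2 : e N = (-(c N)) + w N := by
          rw [hwce N]; abel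
        rw [h2]
        exact Submodule.add_mem_sup (neg_mem (hcm N)) (hwL N hN)
    rw [key L hL, key L' hL', hspan]
  -- the two base points give a basis of m, the two directions a basis of Cc
  have hL12 : L₁ ≠ L₂ := fun h => hne12 (by rw [h])
  have hspanab : span F {a L₁} ≠ span F {a L₂} := by
    intro h
    exact hne12 ((haspan L₁ hL₁).trans (h.trans (haspan L₂ hL₂).symm))
  have hee0 : e L₁ ≠ 0 := hwπ L₁ hL₁
  have hff0 : e L₂ ≠ 0 := hwπ L₂ hL₂
  have heeff : span F {e L₁} ≠ span F {e L₂} := fun h => hL12 (hdir L₁ hL₁ L₂ hL₂ h)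
  have hCspan : Cc = span F {e L₁, e L₂} := by
    have hsub : span F {e L₁, e L₂} ≤ Cc := by
      rw [span_le]
      rintro uu (rfl | h)
      · exact hem L₁
      · simp only [Set.mem_singleton_iff] at h; subst h; exact hem L₂
    have hd : finrank F (span F {e L₁, e L₂} : Submodule F V) = 2 := by
      rw [show ({e L₁, e L₂} : Set V) = insert (e L₁) {e L₂} from rfl, Submodule.span_insert]
      exact point_sup_point (finrank_span_singleton hee0) (finrank_span_singleton hff0) heeff
    exact (eq_of_le_of_finrank_le hsub (by rw [hCc2, hd])).symm
  have hindef : LinearIndependent F ![e L₁, e L₂] := pair_indep_of_span_ne hee0 hff0 heeff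
  have hcoeff : ∀ γ δ : F, γ • e L₁ + δ • e L₂ = 0 → γ = 0 ∧ δ = 0 :=
    fun γ δ h => LinearIndependent.pair_iff.mp hindef γ δ h
  -- direction coefficients
  have hex2 : ∀ L ∈ T, ∃ αL βL : F, αL • e L₁ + βL • e L₂ = e L := by
    intro L hL
    have h1 : e L ∈ Cc := hem L
    rw [hCspan] at h1
    exact mem_span_pair.mp h1
  choose! α β hαβ using hex2
  have hαβ1 : α L₁ = 1 ∧ β L₁ = 0 := by
    have h := hαβ L₁ hL₁
    have h2 : (α L₁ - 1) • e L₁ + (β L₁) • e L₂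
        = (α L₁ • e L₁ + β L₁ • e L₂) - e L₁ := by module
    rw [h, sub_self] at h2
    obtain ⟨h3, h4⟩ := hcoeff _ _ h2
    exact ⟨sub_eq_zero.mp h3, h4⟩
  have hαβ2 : α L₂ = 0 ∧ β L₂ = 1 := by
    have h := hαβ L₂ hL₂
    have h2 : (α L₂) • e L₁ + (β L₂ - 1) • e L₂
        = (α L₂ • e L₁ + β L₂ • e L₂) - e L₂ := by module
    rw [h, sub_self] at h2
    obtain ⟨h3, h4⟩ := hcoeff _ _ h2
    exact ⟨h3, sub_eq_zero.mp h4⟩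
  have hαβ0 : ∀ k ∈ T, k ≠ L₁ → k ≠ L₂ → α k ≠ 0 ∧ β k ≠ 0 := by
    intro k hk hk1 hk2
    constructor
    · intro h0
      have h := hαβ k hk
      rw [h0, zero_smul, zero_add] at h
      have hβk : β k ≠ 0 := by
        intro hb; rw [hb, zero_smul] at h; exact (hwπ k hk) h.symm
      apply hk2
      apply hdir k hk L₂ hL₂
      rw [← h, span_singleton_smul_eq (IsUnit.mk0 _ hβk)]
    · intro h0
      have h := hαβ k hk
      rw [h0, zero_smul, add_zero] at h
      have hαk : α k ≠ 0 := by
        intro hb; rw [hb, zero_smul] at h; exact (hwπ k hk) h.symm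
      apply hk1
      apply hdir k hk L₁ hL₁
      rw [← h, span_singleton_smul_eq (IsUnit.mk0 _ hαk)]
  -- move to the 2-dimensional space m
  set Am : Submodule F V → ↥m := fun L => if h : a L ∈ m then (⟨a L, h⟩ : ↥m) else 0 with hAm
  set Cm : Submodule F V → ↥m := fun L => (⟨c L, hcm L⟩ : ↥m) with hCm
  have hAmcoe : ∀ L ∈ T, (Am L : V) = a L := by
    intro L hL
    simp only [hAm, dif_pos (ham L hL)]
  have hAm0 : ∀ L ∈ T, Am L ≠ 0 := by
    intro L hL h0
    apply ha0 L hL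
    have := congrArg (Subtype.val) h0
    rwa [hAmcoe L hL] at this
  have hspanab' : span F {Am L₁} ≠ span F {Am L₂} := by
    intro h
    apply hspanab
    have h1 := congrArg (fun s => Submodule.map m.subtype s) h
    simp only [Submodule.map_span, Set.image_singleton] at h1
    rwa [Submodule.coe_subtype, hAmcoe L₁ hL₁, hAmcoe L₂ hL₂] at h1
  have hamind : LinearIndependent F ![Am L₁, Am L₂] :=
    pair_indep_of_span_ne (hAm0 L₁ hL₁) (hAm0 L₂ hL₂) hspanab'
  set Kf : Finset (Submodule F V) := (hTfin.toFinset.erase L₁).erase L₂ with hKf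
  have hKfmem : ∀ k, k ∈ Kf ↔ (k ∈ T ∧ k ≠ L₁ ∧ k ≠ L₂) := by
    intro k
    simp only [hKf, Finset.mem_erase, Set.Finite.mem_toFinset]
    tauto
  have hKfcard : Kf.card + 2 ≤ q + 1 := by
    have h1 : hTfin.toFinset.card = q + 1 := by
      rw [← Set.ncard_eq_toFinset_card T hTfin]; exact hcard
    have h2 : (hTfin.toFinset.erase L₁).card = q := by
      rw [Finset.card_erase_of_mem (hTfin.mem_toFinset.mpr hL₁), h1]
      omega
    have h4 : L₂ ∈ hTfin.toFinset.erase L₁ :=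
      Finset.mem_erase.mpr ⟨fun h => hL12 h.symm, hTfin.mem_toFinset.mpr hL₂⟩
    have h3 : Kf.card = q - 1 := by
      rw [hKf, Finset.card_erase_of_mem h4, h2]
    omega
  obtain ⟨u, v, huavoid, hvavoid, hkavoid⟩ :=
    avoid_lemma hm2 hamind (Cm L₁) (Cm L₂) Kf hKfcard α β Am Cm
      (fun k hk => ((hKfmem k).mp hk).2.1 |> fun h1 =>
        (hαβ0 k ((hKfmem k).mp hk).1 h1 ((hKfmem k).mp hk).2.2).1)
      (fun k hk => (hαβ0 k ((hKfmem k).mp hk).1 ((hKfmem k).mp hk).2.1 ((hKfmem k).mp hk).2.2).2)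
      (fun k hk => hAm0 k ((hKfmem k).mp hk).1)
  -- build the blocking line and derive the contradiction
  set nn : Submodule F V := span F {e L₁ + ↑u, e L₂ + ↑v} with hnn
  have hπeu : πV (e L₁ + ↑u) = e L₁ := by
    rw [map_add, hπC _ (hem L₁), hπm _ u.2, add_zero]
  have hπfv : πV (e L₂ + ↑v) = e L₂ := by
    rw [map_add, hπC _ (hem L₂), hπm _ v.2, add_zero]
  have hnu0 : e L₁ + ↑u ≠ 0 := by
    intro h
    apply hee0
    rw [← hπeu, h, map_zero]
  have hnv0 : e L₂ + ↑v ≠ 0 := by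
    intro h
    apply hff0
    rw [← hπfv, h, map_zero]
  have hnspanne : span F {e L₁ + ↑u} ≠ span F {e L₂ + ↑v} := by
    intro h
    have h1 : e L₂ + ↑v ∈ span F {e L₁ + ↑u} := h ▸ mem_span_singleton_self _
    obtain ⟨tt, htt⟩ := mem_span_singleton.mp h1
    have h2 : e L₂ = tt • e L₁ := by
      rw [← hπfv, ← htt, map_smul, hπeu]
    have htt0 : tt ≠ 0 := by
      rintro rfl; rw [zero_smul] at h2; exact hff0 h2
    apply heeff
    rw [h2, span_singleton_smul_eq (IsUnit.mk0 _ htt0)]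
  have hn2 : finrank F nn = 2 := by
    rw [hnn, show ({e L₁ + ↑u, e L₂ + ↑v} : Set V) = insert (e L₁ + ↑u) {e L₂ + ↑v} from rfl,
      Submodule.span_insert]
    exact point_sup_point (finrank_span_singleton hnu0) (finrank_span_singleton hnv0) hnspanne
  obtain ⟨L, hLT, hLne⟩ := hblock nn hn2
  obtain ⟨g, hgmem, hg0⟩ := Submodule.exists_mem_ne_zero_of_ne_bot hLne
  obtain ⟨γ, δ, hγδ⟩ := mem_span_pair.mp hgmem.1
  have hgspan : g ∈ span F {a L, w L} := by
    rw [← hLspan L hLT]; exact hgmem.2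
  obtain ⟨s, t, hst⟩ := mem_span_pair.mp hgspan
  have hg1 : πV g = γ • e L₁ + δ • e L₂ := by
    rw [← hγδ, map_add, map_smul, map_smul, hπeu, hπfv]
  have hg2 : πV g = t • e L := by
    rw [← hst, map_add, map_smul, map_smul, hπa L hLT, smul_zero, zero_add]
  have hcoe : γ = t * α L ∧ δ = t * β L := by
    have h := hg1.symm.trans hg2
    rw [← hαβ L hLT] at h
    have h2 : (γ - t * α L) • e L₁ + (δ - t * β L) • e L₂
        = (γ • e L₁ + δ • e L₂) - t • (α L • e L₁ + β L • e L₂) := by module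
    rw [h, sub_self] at h2
    obtain ⟨h3, h4⟩ := hcoeff _ _ h2
    exact ⟨sub_eq_zero.mp h3, sub_eq_zero.mp h4⟩
  have ht0 : t ≠ 0 := by
    rintro rfl
    obtain ⟨h5, h6⟩ := hcoe
    rw [zero_mul] at h5 h6
    apply hg0
    rw [← hγδ, h5, h6, zero_smul, zero_smul, add_zero]
  have hmeq : (α L) • (↑u : V) + (β L) • ↑v = c L + (t⁻¹ * s) • a L := by
    have w1 : γ • (↑u : V) + δ • ↑v = g - πV g := by
      rw [hg1, ← hγδ]; module
    have w2 : g - πV g = s • a L + t • c L := by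
      rw [hg2, ← hst]
      show s • a L + t • w L - t • e L = s • a L + t • (w L - e L)
      module
    have w3 : (t * α L) • (↑u : V) + (t * β L) • ↑v = s • a L + t • c L := by
      rw [← hcoe.1, ← hcoe.2, w1, w2]
    have w4 : (α L) • (↑u : V) + (β L) • ↑v
        = t⁻¹ • ((t * α L) • (↑u : V) + (t * β L) • ↑v) := by
      rw [smul_add, smul_smul, smul_smul, ← mul_assoc, ← mul_assoc,
        inv_mul_cancel₀ ht0, one_mul, one_mul]
    rw [w4, w3, smul_add, smul_smul, smul_smul, inv_mul_cancel₀ ht0, one_smul]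
    abel
  -- contradiction in each case
  by_cases hcase1 : L = L₁
  · subst hcase1
    apply huavoid
    refine ⟨t⁻¹ * s, ?_⟩
    apply Subtype.ext
    show (↑u : V) = ↑(Cm L) + (t⁻¹ * s) • ↑(Am L)
    have h1 := hmeq
    rw [hαβ1.1, hαβ1.2, one_smul, zero_smul, add_zero] at h1
    rw [h1, hCm, hAmcoe L hL₁]
  · by_cases hcase2 : L = L₂
    · subst hcase2
      apply hvavoid
      refine ⟨t⁻¹ * s, ?_⟩
      apply Subtype.ext
      show (↑v : V) = ↑(Cm L) + (t⁻¹ * s) • ↑(Am L)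
      have h1 := hmeq
      rw [hαβ2.1, hαβ2.2, one_smul, zero_smul, zero_add] at h1
      have h2 : ((Cm L : V)) = c L := rfl
      rw [h1, h2, hAmcoe L hL₂]
    · apply hkavoid L ((hKfmem L).mpr ⟨hLT, hcase1, hcase2⟩)
      refine ⟨t⁻¹ * s, ?_⟩
      apply Subtype.ext
      show (↑((α L) • u + (β L) • v) : V) = ↑(Cm L) + (t⁻¹ * s) • ↑(Am L)
      show (α L) • (↑u : V) + (β L) • ↑v = ↑(Cm L) + (t⁻¹ * s) • ↑(Am L)
      rw [hmeq, hAmcoe L hLT]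

end mainparts

/-- In `PG(3,q)`, if `T` is a set of `q+1` lines (2-dimensional subspaces of
`F_q^4`) such that every line of `PG(3,q)` meets some member of `T`, then `T`
is a planar line pencil: there are a point `p` (1-dimensional subspace) and a
plane `W` (3-dimensional subspace) with `p ≤ W` such that `T` is exactly the
set of lines through `p` contained in `W`. -/
theorem stmt3 (q : ℕ) (F : Type*) [Field F] [Fintype F] (hq : Fintype.card F = q)
    (T : Set (Submodule F (Fin 4 → F)))
    (hTlines : ∀ M ∈ T, Module.finrank F M = 2)
    (hcard : T.ncard = q + 1)
    (hblock : ∀ L : Submodule F (Fin 4 → F), Module.finrank F L = 2 →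
      ∃ M ∈ T, L ⊓ M ≠ ⊥) :
    ∃ p W : Submodule F (Fin 4 → F), Module.finrank F p = 1 ∧
      Module.finrank F W = 3 ∧ p ≤ W ∧
      T = {L : Submodule F (Fin 4 → F) | Module.finrank F L = 2 ∧ p ≤ L ∧ L ≤ W} := by
  subst hq
  have hV : finrank F (Fin 4 → F) = 4 := by
    rw [Module.finrank_fin_fun]
  obtain ⟨m, hm2, hmL, hpinj⟩ := exists_transversal hV T hTlines hcard hblock
  by_cases hconc : ∀ L ∈ T, ∀ L' ∈ T, m ⊓ L = m ⊓ L'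
  · have hTne : T.Nonempty := Set.nonempty_of_ncard_ne_zero (s := T) (by omega)
    obtain ⟨L₀, hL₀⟩ := hTne
    have hp1 : finrank F (m ⊓ L₀ : Submodule F (Fin 4 → F)) = 1 := hmL L₀ hL₀
    have hpT : ∀ L ∈ T, m ⊓ L₀ ≤ L := fun L hL =>
      le_trans (le_of_eq (hconc L₀ hL₀ L hL)) inf_le_right
    exact concurrent_case hV T hTlines hcard hblock (m ⊓ L₀) hp1 hpT
  · push_neg at hconc
    obtain ⟨L₁, hL₁, L₂, hL₂, hne12⟩ := hconc
    exact (nonconcurrent_absurd hV T hTlines hcard hblock m hm2 hmL hpinj hL₁ hL₂ hne12).elim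
end

section
/- Let Δ be a finite generalised quadrangle of order (s,t) with t ≥ 2, and let T be a set of s+1 distinct points containing two collinear points, such that no point of Δ is non-collinear with every point of T. Then T is the point set of a line of Δ. -/
/-- A finite generalised quadrangle of order `(s,t)`. -/
structure GenQuadrangle (P L : Type*) (s t : ℕ) where
  incid : P → L → Prop
  finPts : ∀ l : L, {p : P | incid p l}.Finite
  finLines : ∀ p : P, {l : L | incid p l}.Finite
  ptsPerLine : ∀ l : L, {p : P | incid p l}.ncard = s + 1
  linesPerPt : ∀ p : P, {l : L | incid p l}.ncard = t + 1
  uniqueLine : ∀ p q : P, p ≠ q → ∀ l m : L,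
    incid p l → incid q l → incid p m → incid q m → l = m
  gqAxiom : ∀ (p : P) (l : L), ¬ incid p l →
    ∃! q : P, incid q l ∧ ∃ m : L, incid p m ∧ incid q m

/-- In a finite generalised quadrangle of order `(s,t)` with `t ≥ 2`, a set `T`
of `s+1` points containing two distinct collinear points, such that no point of
the quadrangle is non-collinear with every point of `T`, is the point set of a
line. -/
theorem stmt12 {P L : Type*} {s t : ℕ} (ht : 2 ≤ t)
    (Δ : GenQuadrangle P L s t) (T : Set P)
    (hcard : T.ncard = s + 1)
    (hcol : ∃ x ∈ T, ∃ y ∈ T, x ≠ y ∧ ∃ m : L, Δ.incid x m ∧ Δ.incid y m)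
    (hblock : ∀ p : P, ∃ x ∈ T, ∃ m : L, Δ.incid p m ∧ Δ.incid x m) :
    ∃ l : L, T = {p : P | Δ.incid p l} := by
  classical
  obtain ⟨x, hxT, y, hyT, hxy, l, hxl, hyl⟩ := hcol
  refine ⟨l, ?_⟩
  set K : Set P := {p : P | Δ.incid p l} with hKdef
  have hKfin : K.Finite := Δ.finPts l
  have hKcard : K.ncard = s + 1 := Δ.ptsPerLine l
  have hTfin : T.Finite := Set.finite_of_ncard_ne_zero (by omega)
  -- choice function from the blocking hypothesis
  choose f hfT g hg1 hg2 using hblock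
  -- T ∩ K has at least two points
  have hl2 : 2 ≤ (T ∩ K).ncard := by
    have : 1 < (T ∩ K).ncard := (Set.one_lt_ncard (hTfin.inter_of_left K)).mpr
      ⟨x, ⟨hxT, hxl⟩, y, ⟨hyT, hyl⟩, hxy⟩
    omega
  have hsplit : (T ∩ K).ncard + (T \ K).ncard = s + 1 := by
    rw [Set.ncard_inter_add_ncard_diff_eq_ncard T K hTfin, hcard]
  have hsplitK : (K ∩ T).ncard + (K \ T).ncard = s + 1 := by
    rw [Set.ncard_inter_add_ncard_diff_eq_ncard K T hKfin, hKcard]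
  -- Key claim: every line M ≠ l through a point p of K \ T meets T \ K
  have claim : ∀ p ∈ K \ T, ∀ M : L, Δ.incid p M → M ≠ l →
      ∃ q ∈ T \ K, Δ.incid q M := by
    intro p hp M hpM hMl
    by_contra hcon
    push_neg at hcon
    set D : Set P := {r : P | Δ.incid r M} \ {p} with hDdef
    have hDfin : D.Finite := (Δ.finPts M).diff
    have hfmem : ∀ r ∈ D, f r ∈ T \ K := by
      intro r hr
      obtain ⟨hrM, hrp⟩ := hr
      have hrp' : r ≠ p := hrp
      have hrK : ¬ Δ.incid r l := by
        intro h
        exact hMl (Δ.uniqueLine r p hrp' M l hrM hpM h hp.1)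
      refine ⟨hfT r, ?_⟩
      intro hfl
      obtain ⟨q, hq, huniq⟩ := Δ.gqAxiom r l hrK
      have h1 : f r = q := huniq (f r) ⟨hfl, g r, hg1 r, hg2 r⟩
      have h2 : p = q := huniq p ⟨hp.1, M, hrM, hpM⟩
      exact hp.2 (by rw [h2, ← h1]; exact hfT r)
    have hinj : Set.InjOn f D := by
      intro r hr r' hr' heq
      have hu : f r ∈ T \ K := hfmem r hr
      have huM : ¬ Δ.incid (f r) M := hcon (f r) hu
      obtain ⟨q, hq, huniq⟩ := Δ.gqAxiom (f r) M huM
      have h1 : r = q := huniq r ⟨hr.1, g r, hg2 r, hg1 r⟩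
      have h2 : r' = q := huniq r' ⟨hr'.1, g r', heq ▸ hg2 r', hg1 r'⟩
      rw [h1, h2]
    have hle : D.ncard ≤ (T \ K).ncard :=
      Set.ncard_le_ncard_of_injOn f hfmem hinj hTfin.diff
    have hD : D.ncard = s := by
      rw [hDdef, Set.ncard_diff_singleton_of_mem
        (show p ∈ {r : P | Δ.incid r M} from hpM) , Δ.ptsPerLine M]
      omega
    omega
  -- Every point of K is in T
  have hsub : K ⊆ T := by
    by_contra hsub
    have hA : (K \ T).Nonempty := by
      rw [Set.diff_nonempty]; exact hsub
    -- the sets of points of T \ K collinear (off l) with a point p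
    set S : P → Set P := fun p => {q : P | q ∈ T \ K ∧ ∃ m : L, m ≠ l ∧ Δ.incid p m ∧ Δ.incid q m}
      with hSdef
    have hSsub : ∀ p, S p ⊆ T \ K := fun p q hq => hq.1
    have hSfin : ∀ p, (S p).Finite := fun p => hTfin.diff.subset (hSsub p)
    -- each such S p has at least two elements
    have hS2 : ∀ p ∈ K \ T, 2 ≤ (S p).ncard := by
      intro p hp
      have hlines : 2 ≤ ({m : L | Δ.incid p m} \ {l}).ncard := by
        have : ({m : L | Δ.incid p m} \ {l}).ncard = t := by
          rw [Set.ncard_diff_singleton_of_mem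
            (show l ∈ {m : L | Δ.incid p m} from hp.1) , Δ.linesPerPt p]
          omega
        omega
      have hfin2 : ({m : L | Δ.incid p m} \ {l}).Finite := (Δ.finLines p).diff
      obtain ⟨M₁, hM₁, M₂, hM₂, hMne⟩ := (Set.one_lt_ncard hfin2).mp (by omega)
      obtain ⟨q₁, hq₁, hq₁M⟩ := claim p hp M₁ hM₁.1 hM₁.2
      obtain ⟨q₂, hq₂, hq₂M⟩ := claim p hp M₂ hM₂.1 hM₂.2
      have hq12 : q₁ ≠ q₂ := by
        intro h
        subst h
        have hq1p : q₁ ≠ p := fun h => hp.2 (h ▸ hq₁.1)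
        exact hMne (Δ.uniqueLine q₁ p hq1p M₁ M₂ hq₁M hM₁.1 hq₂M hM₂.1)
      have : 1 < (S p).ncard := (Set.one_lt_ncard (hSfin p)).mpr
        ⟨q₁, ⟨hq₁, M₁, hM₁.2, hM₁.1, hq₁M⟩, q₂, ⟨hq₂, M₂, hM₂.2, hM₂.1, hq₂M⟩, hq12⟩
      omega
    -- the sets S p for p ∈ K \ T are pairwise disjoint
    have hdisj : ∀ p₁ ∈ K \ T, ∀ p₂ ∈ K \ T, p₁ ≠ p₂ → Disjoint (S p₁) (S p₂) := by
      intro p₁ hp₁ p₂ hp₂ hne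
      rw [Set.disjoint_left]
      rintro q ⟨⟨hqT, hqK⟩, m₁, hm₁l, hp₁m, hqm₁⟩ ⟨-, m₂, hm₂l, hp₂m, hqm₂⟩
      obtain ⟨w, hw, huniq⟩ := Δ.gqAxiom q l hqK
      have h1 : p₁ = w := huniq p₁ ⟨hp₁.1, m₁, hqm₁, hp₁m⟩
      have h2 : p₂ = w := huniq p₂ ⟨hp₂.1, m₂, hqm₂, hp₂m⟩
      exact hne (h1.trans h2.symm)
    -- counting
    have hAfin : (K \ T).Finite := hKfin.diff
    set Af : Finset P := hAfin.toFinset with hAf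
    have hbi : (Af.biUnion (fun p => (hSfin p).toFinset)).card
        = ∑ p ∈ Af, (hSfin p).toFinset.card := by
      apply Finset.card_biUnion
      intro p₁ h1 p₂ h2 hne
      simp only [Set.Finite.disjoint_toFinset]
      exact hdisj p₁ (hAfin.mem_toFinset.mp h1) p₂ (hAfin.mem_toFinset.mp h2) hne
    have hsum : 2 * Af.card ≤ ∑ p ∈ Af, (hSfin p).toFinset.card := by
      rw [mul_comm, ← smul_eq_mul]
      apply Finset.card_nsmul_le_sum
      intro p hp
      have := hS2 p (hAfin.mem_toFinset.mp hp)
      rwa [Set.ncard_eq_toFinset_card _ (hSfin p)] at this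
    have hsub2 : Af.biUnion (fun p => (hSfin p).toFinset) ⊆ (hTfin.diff (t := K)).toFinset := by
      intro q hq
      rw [Finset.mem_biUnion] at hq
      obtain ⟨p, -, hqF⟩ := hq
      rw [Set.Finite.mem_toFinset] at hqF ⊢
      exact hSsub p hqF
    have hcard2 : (Af.biUnion (fun p => (hSfin p).toFinset)).card ≤ (T \ K).ncard := by
      rw [Set.ncard_eq_toFinset_card _ (hTfin.diff (t := K))]
      exact Finset.card_le_card hsub2
    have hAcard : Af.card = (K \ T).ncard :=
      (Set.ncard_eq_toFinset_card _ hAfin).symm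
    have hApos : 0 < (K \ T).ncard := (Set.ncard_pos hAfin).mpr hA
    have hTK : (T ∩ K).ncard = (K ∩ T).ncard := by rw [Set.inter_comm]
    omega
  exact (Set.eq_of_subset_of_ncard_le hsub (by rw [hKcard, hcard]) hTfin).symm
end

section
/- In a finite generalised quadrangle of order (s,s) with s ≥ 2, if T is a set of s+1 pairwise non-collinear points such that no point is non-collinear with all of T, then T = {x,y}^{⊥⊥} for any two distinct x, y ∈ T; that is, T is a large hyperbolic line, equal to {u,v}^⊥ for any two distinct points u, v of T^⊥. -/
/-- Collinearity in a generalised quadrangle (includes equality). -/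
def GenQuadrangle.collin {P L : Type*} {s t : ℕ} (Δ : GenQuadrangle P L s t)
    (p q : P) : Prop :=
  ∃ m : L, Δ.incid p m ∧ Δ.incid q m

/-- The perp of a set of points. -/
def GenQuadrangle.perp {P L : Type*} {s t : ℕ} (Δ : GenQuadrangle P L s t)
    (S : Set P) : Set P :=
  {p : P | ∀ x ∈ S, Δ.collin p x}

namespace GenQuadrangle

variable {P L : Type*} {s t : ℕ}

lemma collin_symm (Δ : GenQuadrangle P L s t) {p q : P} (h : Δ.collin p q) :
    Δ.collin q p := by
  obtain ⟨m, h1, h2⟩ := h; exact ⟨m, h2, h1⟩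

/-- If `p` is off the line `l`, then the point of `l` collinear with `p` is unique. -/
lemma proj_eq (Δ : GenQuadrangle P L s t) {p : P} {l : L} (hp : ¬ Δ.incid p l)
    {q q' : P} (hq : Δ.incid q l) (hq1 : Δ.collin p q)
    (hq' : Δ.incid q' l) (hq1' : Δ.collin p q') : q = q' := by
  obtain ⟨w, hw, hu⟩ := Δ.gqAxiom p l hp
  rw [hu q ⟨hq, hq1⟩, hu q' ⟨hq', hq1'⟩]

/-- For non-collinear `u, v`, the perp of the pair is finite of size `t+1`. -/
lemma perp_pair (Δ : GenQuadrangle P L s t) {u v : P} (huv : ¬ Δ.collin u v) :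
    (Δ.perp {u, v}).Finite ∧ (Δ.perp {u, v}).ncard = t + 1 := by
  classical
  have hvnu : ¬ Δ.collin v u := fun h => huv (Δ.collin_symm h)
  set Lu : Set L := {l : L | Δ.incid u l} with hLu
  have hvoff : ∀ l : L, Δ.incid u l → ¬ Δ.incid v l := by
    intro l hl hv
    exact huv ⟨l, hl, hv⟩
  set π : L → P := fun l =>
    if h : Δ.incid u l then (Δ.gqAxiom v l (hvoff l h)).choose else u with hπ
  have hspec : ∀ l : L, (h : Δ.incid u l) →
      Δ.incid (π l) l ∧ Δ.collin v (π l) := by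
    intro l h
    have := (Δ.gqAxiom v l (hvoff l h)).choose_spec.1
    simpa [hπ, dif_pos h, collin] using this
  have huniq : ∀ l : L, (h : Δ.incid u l) → ∀ q : P,
      Δ.incid q l → Δ.collin v q → q = π l := by
    intro l h q h1 h2
    have := (Δ.gqAxiom v l (hvoff l h)).choose_spec.2 q ⟨h1, h2⟩
    simpa [hπ, dif_pos h] using this
  have himg : Δ.perp {u, v} = π '' Lu := by
    ext w
    constructor
    · intro hw
      obtain ⟨l, hwl, hul⟩ := hw u (by simp)
      have hwv : Δ.collin v w := Δ.collin_symm (hw v (by simp))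
      exact ⟨l, hul, (huniq l hul w hwl hwv).symm⟩
    · rintro ⟨l, hl, rfl⟩
      have hsp := hspec l hl
      intro x hx
      rcases hx with rfl | rfl
      · exact ⟨l, hsp.1, hl⟩
      · exact Δ.collin_symm hsp.2
  have hinj : Set.InjOn π Lu := by
    intro l hl l' hl' he
    have h1 := hspec l hl
    have h2 := hspec l' hl'
    have hne : u ≠ π l := by
      intro hc
      exact hvnu (hc ▸ h1.2)
    exact Δ.uniqueLine u (π l) hne l l' hl h1.1 hl' (he ▸ h2.1)
  have hLfin : Lu.Finite := Δ.finLines u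
  constructor
  · rw [himg]; exact hLfin.image π
  · rw [himg, Set.ncard_image_of_injOn hinj]
    exact Δ.linesPerPt u

end GenQuadrangle

/-- Key lemma: if a point is collinear with two distinct points of `T`, it is
collinear with every point of `T`. -/
lemma two_implies_all {P L : Type*} {s : ℕ} (hs : 2 ≤ s)
    (Δ : GenQuadrangle P L s s) (T : Set P)
    (hcard : T.ncard = s + 1)
    (hnoncol : ∀ x ∈ T, ∀ y ∈ T, x ≠ y → ¬ Δ.collin x y)
    (hblock : ∀ p : P, ∃ x ∈ T, Δ.collin p x)
    {p x y : P} (hx : x ∈ T) (hy : y ∈ T) (hxy : x ≠ y)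
    (hpx : Δ.collin p x) (hpy : Δ.collin p y) :
    ∀ z ∈ T, Δ.collin p z := by
  classical
  have hTfin : T.Finite := Set.finite_of_ncard_ne_zero (by omega)
  have hpT : p ∉ T := by
    intro hpT
    have h1 : p = x := by
      by_contra hne
      exact hnoncol p hpT x hx hne hpx
    have h2 : p = y := by
      by_contra hne
      exact hnoncol p hpT y hy hne hpy
    exact hxy (h1 ▸ h2)
  -- Every line through p contains a point of T.
  have C1 : ∀ l : L, Δ.incid p l → ∃ t ∈ T, Δ.incid t l := by
    intro l hpl
    by_contra hno
    push_neg at hno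
    set g : P → P := fun t =>
      if h : Δ.incid t l then p else (Δ.gqAxiom t l h).choose with hg
    have hgspec : ∀ t : P, (h : ¬ Δ.incid t l) →
        Δ.incid (g t) l ∧ Δ.collin t (g t) := by
      intro t h
      have := (Δ.gqAxiom t l h).choose_spec.1
      simpa [hg, dif_neg h, GenQuadrangle.collin] using this
    have huniq : ∀ t : P, (h : ¬ Δ.incid t l) → ∀ q : P,
        Δ.incid q l → Δ.collin t q → q = g t := by
      intro t h q h1 h2
      have := (Δ.gqAxiom t l h).choose_spec.2 q ⟨h1, h2⟩
      simpa [hg, dif_neg h] using this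
    have hsub : {q : P | Δ.incid q l} ⊆ g '' (T \ {y}) := by
      intro q hq
      obtain ⟨w, hw, hqw⟩ := hblock q
      have hwoff : ¬ Δ.incid w l := hno w hw
      have hqgw : q = g w := huniq w hwoff q hq (Δ.collin_symm hqw)
      by_cases hwy : w = y
      · -- then q = p, and p = g x as well
        subst hwy
        have hqp : q = p := Δ.proj_eq hwoff hq (Δ.collin_symm hqw) hpl
          (Δ.collin_symm hpy)
        have hxoff : ¬ Δ.incid x l := hno x hx
        have hpgx : p = g x := huniq x hxoff p hpl (Δ.collin_symm hpx)
        exact ⟨x, ⟨hx, by simp [hxy]⟩, (hqp.trans hpgx).symm⟩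
      · exact ⟨w, ⟨hw, by simp [hwy]⟩, hqgw.symm⟩
    have h1 : ({q : P | Δ.incid q l}).ncard = s + 1 := Δ.ptsPerLine l
    have hdfin : (T \ {y}).Finite := hTfin.diff
    have h2 : (g '' (T \ {y})).ncard ≤ (T \ {y}).ncard := Set.ncard_image_le hdfin
    have h3 : (T \ {y}).ncard = s := by
      rw [Set.ncard_diff_singleton_of_mem hy, hcard]; omega
    have h4 : ({q : P | Δ.incid q l}).ncard ≤ (g '' (T \ {y})).ncard :=
      Set.ncard_le_ncard hsub (hdfin.image g)
    omega
  -- map each line through p to its T-point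
  set σ : L → P := fun l =>
    if h : Δ.incid p l then (C1 l h).choose else x with hσdef
  have hσ : ∀ l : L, (h : Δ.incid p l) → σ l ∈ T ∧ Δ.incid (σ l) l := by
    intro l h
    have := (C1 l h).choose_spec
    simpa [hσdef, dif_pos h] using this
  have hinj : Set.InjOn σ {l : L | Δ.incid p l} := by
    intro l hl l' hl' he
    have h1 := hσ l hl
    have h2 := hσ l' hl'
    have hne : p ≠ σ l := by
      intro hc
      exact hpT (hc ▸ h1.1)
    exact Δ.uniqueLine p (σ l) hne l l' hl h1.2 hl' (he ▸ h2.2)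
  have himg : σ '' {l : L | Δ.incid p l} ⊆ T := by
    rintro _ ⟨l, hl, rfl⟩
    exact (hσ l hl).1
  have hicard : (σ '' {l : L | Δ.incid p l}).ncard = s + 1 := by
    rw [Set.ncard_image_of_injOn hinj]
    exact Δ.linesPerPt p
  have heq : σ '' {l : L | Δ.incid p l} = T :=
    Set.eq_of_subset_of_ncard_le himg (by omega) hTfin
  intro z hz
  rw [← heq] at hz
  obtain ⟨l, hl, rfl⟩ := hz
  exact ⟨l, hl, (hσ l hl).2⟩

/-- In a finite generalised quadrangle of order `(s,s)` with `s ≥ 2`, if `T` is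
a set of `s+1` pairwise non-collinear points such that no point is non-collinear
with all of `T`, then `T = {x,y}^{⊥⊥}` for any two distinct `x, y ∈ T`: `T` is a
large hyperbolic line, equal to `{u,v}^⊥` for any two distinct `u, v ∈ T^⊥`. -/
theorem stmt14 {P L : Type*} {s : ℕ} (hs : 2 ≤ s)
    (Δ : GenQuadrangle P L s s) (T : Set P)
    (hcard : T.ncard = s + 1)
    (hnoncol : ∀ x ∈ T, ∀ y ∈ T, x ≠ y → ¬ Δ.collin x y)
    (hblock : ∀ p : P, ∃ x ∈ T, Δ.collin p x) :
    (∀ x ∈ T, ∀ y ∈ T, x ≠ y → T = Δ.perp (Δ.perp {x, y})) ∧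
    (∀ u ∈ Δ.perp T, ∀ v ∈ Δ.perp T, u ≠ v → T = Δ.perp {u, v}) := by
  have hTfin : T.Finite := Set.finite_of_ncard_ne_zero (by omega)
  -- pick two distinct points of T
  obtain ⟨x₀, hx₀, y₀, hy₀, hxy₀⟩ := (Set.one_lt_ncard hTfin).mp (by omega)
  have hx0y0 : ¬ Δ.collin x₀ y₀ := hnoncol x₀ hx₀ y₀ hy₀ hxy₀
  -- the perp of any pair from T equals the perp of T
  have hpair : ∀ x ∈ T, ∀ y ∈ T, x ≠ y → Δ.perp {x, y} = Δ.perp T := by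
    intro x hx y hy hxy
    ext q
    constructor
    · intro hq z hz
      exact two_implies_all hs Δ T hcard hnoncol hblock hx hy hxy
        (hq x (by simp)) (hq y (by simp)) z hz
    · intro hq w hw
      rcases hw with rfl | rfl
      · exact hq w hx
      · exact hq w hy
  have hperpfin : (Δ.perp T).Finite := by
    rw [← hpair x₀ hx₀ y₀ hy₀ hxy₀]
    exact (Δ.perp_pair hx0y0).1
  have hperpcard : (Δ.perp T).ncard = s + 1 := by
    rw [← hpair x₀ hx₀ y₀ hy₀ hxy₀]
    exact (Δ.perp_pair hx0y0).2
  -- the perp of T is pairwise non-collinear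
  have hTperp_noncol : ∀ u ∈ Δ.perp T, ∀ v ∈ Δ.perp T, u ≠ v → ¬ Δ.collin u v := by
    intro u hu v hv huv hcol
    obtain ⟨m, hum, hvm⟩ := hcol
    by_cases hxm : Δ.incid x₀ m
    · have hym : ¬ Δ.incid y₀ m := fun hym => hx0y0 ⟨m, hxm, hym⟩
      exact huv (Δ.proj_eq hym hum (Δ.collin_symm (hu y₀ hy₀)) hvm
        (Δ.collin_symm (hv y₀ hy₀)))
    · exact huv (Δ.proj_eq hxm hum (Δ.collin_symm (hu x₀ hx₀)) hvm
        (Δ.collin_symm (hv x₀ hx₀)))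
  -- T = T^{⊥⊥}
  have hTdd : Δ.perp (Δ.perp T) = T := by
    apply Set.Subset.antisymm
    · intro p hp
      by_contra hpT
      -- p is not in the perp of T
      have hpnp : p ∉ Δ.perp T := by
        intro hpp
        obtain ⟨a, ha, b, hb, hab⟩ := (Set.one_lt_ncard hperpfin).mp (by omega)
        by_cases hap : a = p
        · exact hTperp_noncol p hpp b hb (hap ▸ hab) (hp b hb)
        · exact hTperp_noncol p hpp a ha (Ne.symm hap) (hp a ha)
      -- p is collinear with some point z₀ of T
      obtain ⟨z₀, hz₀, hpz₀⟩ := hblock p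
      obtain ⟨l0, hpl0, hz0l0⟩ := hpz₀
      -- find u in perp T not on l0
      obtain ⟨a, ha, b, hb, hab⟩ := (Set.one_lt_ncard hperpfin).mp (by omega)
      have hnotboth : ¬ (Δ.incid a l0 ∧ Δ.incid b l0) := by
        rintro ⟨h1, h2⟩
        exact hTperp_noncol a ha b hb hab ⟨l0, h1, h2⟩
      obtain ⟨u, hu, hul0⟩ : ∃ u ∈ Δ.perp T, ¬ Δ.incid u l0 := by
        by_cases h1 : Δ.incid a l0
        · exact ⟨b, hb, fun h2 => hnotboth ⟨h1, h2⟩⟩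
        · exact ⟨a, ha, h1⟩
      -- u is collinear with both p and z₀, both on l0, so p = z₀
      have hup : Δ.collin u p := Δ.collin_symm (hp u hu)
      have huz : Δ.collin u z₀ := hu z₀ hz₀
      have : p = z₀ := Δ.proj_eq hul0 hpl0 hup hz0l0 huz
      exact hpT (this ▸ hz₀)
    · intro z hz u hu
      exact Δ.collin_symm (hu z hz)
  constructor
  · intro x hx y hy hxy
    rw [hpair x hx y hy hxy, hTdd]
  · intro u hu v hv huv
    have huvnc : ¬ Δ.collin u v := hTperp_noncol u hu v hv huv
    obtain ⟨hfin, hcard'⟩ := Δ.perp_pair huvnc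
    have hsub : T ⊆ Δ.perp {u, v} := by
      intro z hz w hw
      rcases hw with rfl | rfl
      · exact Δ.collin_symm (hu z hz)
      · exact Δ.collin_symm (hv z hz)
    exact Set.eq_of_subset_of_ncard_le hsub (by omega) hfin
end

section
/- If in a spherical building every panel is contained in at least s+1 chambers, then for every set of s chambers there exists a chamber opposite all of them. -/
namespace Stmt15Aux

open CoxeterSystem List
open scoped Classical

variable {W I : Type*} [Group W] {M : CoxeterMatrix I} (cs : CoxeterSystem M W)

local prefix:100 "σ" => cs.simple
local prefix:100 "ℓ" => cs.length
local prefix:100 "π" => cs.wordProd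

set_option linter.unusedSectionVars false

/-- The basic permutation-representation map on `W × ZMod 2`. -/
noncomputable def ff (i : I) : Function.End (W × ZMod 2) :=
  fun p => (σ i * p.1 * σ i, p.2 + if p.1 = σ i then 1 else 0)

lemma end_mul_apply (f g : Function.End (W × ZMod 2)) (x : W × ZMod 2) :
    (f * g) x = f (g x) := rfl

lemma zmod2_add_self (x : ZMod 2) : x + x = 0 := by
  have h2 : (2 : ZMod 2) = 0 := by decide
  rw [← two_mul, h2, zero_mul]

lemma simple_conj_pow (i i' : I) (r : ℕ) :
    σ i' * (σ i * σ i') ^ r = ((σ i * σ i') ^ r)⁻¹ * σ i' := by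
  have key : σ i' * (σ i * σ i') * (σ i')⁻¹ = (σ i * σ i')⁻¹ := by
    rw [mul_inv_rev, inv_simple, inv_simple]; simp only [← mul_assoc, mul_assoc, cs.simple_mul_simple_self, cs.simple_mul_simple_cancel_left, cs.simple_mul_simple_cancel_right, one_mul, mul_one]
  have h := conj_pow (i := r) (a := σ i') (b := σ i * σ i')
  rw [key, inv_pow] at h
  calc σ i' * (σ i * σ i') ^ r = (σ i' * (σ i * σ i') ^ r * (σ i')⁻¹) * σ i' := by group
  _ = ((σ i * σ i') ^ r)⁻¹ * σ i' := by rw [h]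

lemma sum_pair_range (m : ℕ) (h : ℕ → ZMod 2) :
    ∑ r ∈ Finset.range m, (h (2 * r) + h (2 * r + 1)) = ∑ k ∈ Finset.range (2 * m), h k := by
  induction m with
  | zero => simp
  | succ m ih =>
    rw [Finset.sum_range_succ, ih]
    have h2 : 2 * (m + 1) = (2 * m + 1) + 1 := by ring
    rw [h2, Finset.sum_range_succ, Finset.sum_range_succ, add_assoc]

lemma sum_range_add_zmod (m n : ℕ) (h : ℕ → ZMod 2) :
    ∑ k ∈ Finset.range (m + n), h k
      = ∑ k ∈ Finset.range m, h k + ∑ k ∈ Finset.range n, h (m + k) := by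
  induction n with
  | zero => simp
  | succ n ih =>
    rw [show m + (n + 1) = (m + n) + 1 by ring, Finset.sum_range_succ, ih,
      Finset.sum_range_succ, add_assoc]

lemma ff_liftable : M.IsLiftable (ff cs) := by
  intro i i'
  set m := M i i' with hm
  obtain ⟨a, ha, haPow⟩ : ∃ a : W, a = σ i * σ i' ∧ a ^ m = 1 :=
    ⟨_, rfl, cs.simple_mul_simple_pow i i'⟩
  have hg : ∀ p : W × ZMod 2, (ff cs i * ff cs i') p
      = (a * p.1 * a⁻¹, p.2 + ((if p.1 = σ i' then 1 else 0)
          + (if p.1 = (σ i' * σ i * σ i') then 1 else 0))) := by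
    intro p
    rw [end_mul_apply]
    show (σ i * (σ i' * p.1 * σ i') * σ i,
      (p.2 + if p.1 = σ i' then 1 else 0) + if σ i' * p.1 * σ i' = σ i then 1 else 0) = _
    refine Prod.ext ?_ ?_
    · show σ i * (σ i' * p.1 * σ i') * σ i = a * p.1 * a⁻¹
      rw [ha, mul_inv_rev, inv_simple, inv_simple]; group
    · show _ = p.2 + ((if p.1 = σ i' then 1 else 0)
          + (if p.1 = (σ i' * σ i * σ i') then 1 else 0))
      have hiff : (σ i' * p.1 * σ i' = σ i) ↔ (p.1 = σ i' * σ i * σ i') := by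
        constructor
        · intro h; rw [← h]; simp only [← mul_assoc, mul_assoc, cs.simple_mul_simple_self, cs.simple_mul_simple_cancel_left, cs.simple_mul_simple_cancel_right, one_mul, mul_one]
        · intro h; rw [h]; simp only [← mul_assoc, mul_assoc, cs.simple_mul_simple_self, cs.simple_mul_simple_cancel_left, cs.simple_mul_simple_cancel_right, one_mul, mul_one]
      simp only [hiff]
      rw [add_assoc]
  have hpow : ∀ k : ℕ, ∀ p : W × ZMod 2, ((ff cs i * ff cs i') ^ k) p
      = (a ^ k * p.1 * (a ^ k)⁻¹, p.2 + ∑ r ∈ Finset.range k,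
          ((if p.1 = (a ^ r)⁻¹ * σ i' * a ^ r then 1 else 0)
            + (if p.1 = (a ^ r)⁻¹ * (σ i' * σ i * σ i') * a ^ r then 1 else 0))) := by
    intro k
    induction k with
    | zero =>
      intro p
      rw [pow_zero]
      show p = _
      simp
    | succ k ih =>
      intro p
      rw [pow_succ', end_mul_apply, ih p, hg]
      have h1 : a * (a ^ k * p.1 * (a ^ k)⁻¹) * a⁻¹ = a ^ (k+1) * p.1 * (a ^ (k+1))⁻¹ := by
        rw [pow_succ' a k, mul_inv_rev]; simp only [mul_assoc]
      have h2 : (a ^ k * p.1 * (a ^ k)⁻¹ = σ i') ↔ (p.1 = (a ^ k)⁻¹ * σ i' * a ^ k) := by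
        constructor
        · intro h; rw [← h]; group
        · intro h; rw [h]; group
      have h3 : (a ^ k * p.1 * (a ^ k)⁻¹ = σ i' * σ i * σ i')
          ↔ (p.1 = (a ^ k)⁻¹ * (σ i' * σ i * σ i') * a ^ k) := by
        constructor
        · intro h; rw [← h]; group
        · intro h; rw [h]; group
      rw [Finset.sum_range_succ]
      simp only [h1, h2, h3]
      refine Prod.ext rfl ?_
      show p.2 + _ + _ = _
      rw [add_assoc]
  show (ff cs i * ff cs i') ^ m = 1
  funext p
  rw [hpow m p]
  have hA : ∀ r : ℕ, (a ^ r)⁻¹ * σ i' * a ^ r = (a ^ (2 * r))⁻¹ * σ i' := by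
    intro r
    have h := simple_conj_pow cs i i' r
    rw [← ha] at h
    rw [show (a ^ r)⁻¹ * σ i' * a ^ r = (a ^ r)⁻¹ * (σ i' * a ^ r) by group, h,
      two_mul, pow_add, mul_inv_rev]
    group
  have hB : ∀ r : ℕ, (a ^ r)⁻¹ * (σ i' * σ i * σ i') * a ^ r = (a ^ (2 * r + 1))⁻¹ * σ i' := by
    intro r
    have h := simple_conj_pow cs i i' r
    rw [← ha] at h
    have hss : σ i' * σ i * σ i' = a⁻¹ * σ i' := by
      rw [ha, mul_inv_rev, inv_simple, inv_simple]
    rw [hss, show (a ^ r)⁻¹ * (a⁻¹ * σ i') * a ^ r = (a ^ r * a)⁻¹ * (σ i' * a ^ r) by group, h,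
      show 2 * r + 1 = (r + 1) + r by ring, pow_add, pow_succ, mul_inv_rev]
    group
  have hsum : (∑ r ∈ Finset.range m,
      ((if p.1 = (a ^ r)⁻¹ * σ i' * a ^ r then (1 : ZMod 2) else 0)
        + (if p.1 = (a ^ r)⁻¹ * (σ i' * σ i * σ i') * a ^ r then 1 else 0))) = 0 := by
    have step1 : ∀ r ∈ Finset.range m,
        ((if p.1 = (a ^ r)⁻¹ * σ i' * a ^ r then (1 : ZMod 2) else 0)
          + (if p.1 = (a ^ r)⁻¹ * (σ i' * σ i * σ i') * a ^ r then 1 else 0))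
        = ((fun k => if p.1 = (a ^ k)⁻¹ * σ i' then (1 : ZMod 2) else 0) (2 * r)
          + (fun k => if p.1 = (a ^ k)⁻¹ * σ i' then (1 : ZMod 2) else 0) (2 * r + 1)) := by
      intro r _
      simp only
      rw [hA r, hB r]
    rw [Finset.sum_congr rfl step1,
      sum_pair_range m (fun k => if p.1 = (a ^ k)⁻¹ * σ i' then (1 : ZMod 2) else 0),
      two_mul, sum_range_add_zmod]
    have step2 : ∀ k ∈ Finset.range m,
        (if p.1 = (a ^ (m + k))⁻¹ * σ i' then (1 : ZMod 2) else 0)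
        = (if p.1 = (a ^ k)⁻¹ * σ i' then (1 : ZMod 2) else 0) := by
      intro k _
      rw [pow_add, haPow, one_mul]
    rw [Finset.sum_congr rfl step2, ← Finset.sum_add_distrib,
      Finset.sum_congr rfl (fun k _ => zmod2_add_self _)]
    simp
  rw [hsum, add_zero, haPow]
  show _ = p
  simp

/-- The lifted homomorphism. -/
noncomputable def Phi : W →* Function.End (W × ZMod 2) :=
  cs.lift ⟨ff cs, ff_liftable cs⟩

/-- The reflection cocycle. -/
noncomputable def nn (w t : W) : ZMod 2 := ((Phi cs w) (t, 0)).2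

lemma phi_apply' (w : W) : ∀ (t : W) (ε : ZMod 2),
    (Phi cs w) (t, ε) = (w * t * w⁻¹, ε + nn cs w t) := by
  induction w using cs.simple_induction_left with
  | one =>
    intro t ε
    have h1 : Phi cs 1 = 1 := map_one _
    have : ∀ ε : ZMod 2, (Phi cs (1 : W)) (t, ε) = (t, ε) := by
      intro ε'; rw [h1]; rfl
    rw [this ε, nn, this 0]
    simp
  | mul_simple_left w i ih =>
    intro t ε
    have hm : Phi cs (σ i * w) = Phi cs (σ i) * Phi cs w := map_mul _ _ _
    have hs : Phi cs (σ i) = ff cs i := cs.lift_apply_simple (ff_liftable cs) i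
    have key : ∀ ε' : ZMod 2, (Phi cs (σ i * w)) (t, ε')
        = (σ i * w * t * w⁻¹ * σ i, ε' + nn cs w t + if w * t * w⁻¹ = σ i then 1 else 0) := by
      intro ε'
      rw [hm, end_mul_apply, ih t ε', hs]
      show (σ i * (w * t * w⁻¹) * σ i, _) = _
      refine Prod.ext ?_ rfl
      show σ i * (w * t * w⁻¹) * σ i = σ i * w * t * w⁻¹ * σ i
      simp only [mul_assoc]
    rw [key ε]
    have hnn : nn cs (σ i * w) t = nn cs w t + if w * t * w⁻¹ = σ i then 1 else 0 := by
      rw [nn, key 0, zero_add]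
    refine Prod.ext ?_ ?_
    · show σ i * w * t * w⁻¹ * σ i = (σ i * w) * t * (σ i * w)⁻¹
      rw [mul_inv_rev, inv_simple]
      simp only [mul_assoc]
    · show ε + nn cs w t + _ = ε + nn cs (σ i * w) t
      rw [hnn, add_assoc]

lemma phi_apply (w t : W) (ε : ZMod 2) :
    (Phi cs w) (t, ε) = (w * t * w⁻¹, ε + nn cs w t) := phi_apply' cs w t ε

lemma nn_mul (x y t : W) : nn cs (x * y) t = nn cs y t + nn cs x (y * t * y⁻¹) := by
  have h := phi_apply cs (x * y) t 0
  have h2 : (Phi cs (x * y)) (t, 0) = (Phi cs x) ((Phi cs y) (t, 0)) := by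
    rw [map_mul]; rfl
  rw [h2, phi_apply cs y t 0, zero_add, phi_apply cs x (y * t * y⁻¹) (nn cs y t)] at h
  have := congrArg Prod.snd h
  simp only at this
  rw [zero_add] at this
  exact this.symm

lemma nn_one (t : W) : nn cs 1 t = 0 := by
  have : (Phi cs (1 : W)) (t, 0) = (t, 0) := by rw [map_one]; rfl
  rw [nn, this]

lemma nn_simple (i : I) (t : W) : nn cs (σ i) t = if t = σ i then 1 else 0 := by
  have hs : Phi cs (σ i) = ff cs i := cs.lift_apply_simple (ff_liftable cs) i
  rw [nn, hs]
  show ((σ i * t * σ i, 0 + if t = σ i then 1 else 0) : W × ZMod 2).2 = _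
  rw [zero_add]

lemma nn_inv (w t : W) : nn cs w⁻¹ t = nn cs w (w⁻¹ * t * w) := by
  have h := nn_mul cs w⁻¹ w (w⁻¹ * t * w)
  rw [inv_mul_cancel, nn_one] at h
  have h2 : w * (w⁻¹ * t * w) * w⁻¹ = t := by simp only [mul_assoc]; group
  rw [h2] at h
  have := zmod2_add_self (nn cs w (w⁻¹ * t * w))
  -- h : 0 = nn w (w⁻¹ t w) + nn w⁻¹ t
  have h3 : nn cs w (w⁻¹ * t * w) + (nn cs w (w⁻¹ * t * w) + nn cs w⁻¹ t)
      = nn cs w (w⁻¹ * t * w) := by rw [← h, add_zero]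
  rw [← add_assoc, this, zero_add] at h3
  exact h3

lemma nn_wordProd (ω : List I) (t : W) :
    nn cs (π ω) t = ((cs.rightInvSeq ω).count t : ZMod 2) := by
  induction ω generalizing t with
  | nil => simp [nn_one]
  | cons i ω ih =>
    rw [cs.wordProd_cons, nn_mul, nn_simple, ih]
    have hiff : (π ω * t * (π ω)⁻¹ = σ i) ↔ (t = (π ω)⁻¹ * σ i * π ω) := by
      constructor
      · intro h; rw [← h]; group
      · intro h; rw [h]; group
    show (((List.count t (cs.rightInvSeq ω) : ℕ)) : ZMod 2)
        + (if π ω * t * (π ω)⁻¹ = σ i then (1 : ZMod 2) else 0)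
      = ((List.count t ((π ω)⁻¹ * σ i * π ω :: cs.rightInvSeq ω) : ℕ) : ZMod 2)
    rw [List.count_cons]
    simp only [hiff]
    push_cast
    by_cases h : t = (π ω)⁻¹ * σ i * π ω
    · simp [h, add_comm]
    · simp only [if_neg h]
      have hne : ((π ω)⁻¹ * σ i * π ω == t) = false := by
        simp [beq_eq_false_iff_ne]
        exact fun hh => h hh.symm
      simp [hne, h]

lemma length_mul_lt_of_nn_eq_one {w t : W} (h : nn cs w t = 1) : ℓ (w * t) < ℓ w := by
  obtain ⟨ω, hlen, hw⟩ := cs.exists_reduced_word w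
  have hcount : ((cs.rightInvSeq ω).count t : ZMod 2) = 1 := by
    rw [← nn_wordProd, ← hw, h]
  have hmem : t ∈ cs.rightInvSeq ω := by
    by_contra hmem
    rw [List.count_eq_zero_of_not_mem hmem] at hcount
    exact absurd hcount (by decide)
  obtain ⟨j, hj, hget⟩ := List.getElem_of_mem hmem
  rw [cs.length_rightInvSeq] at hj
  have hgetD : (cs.rightInvSeq ω).getD j 1 = t := by
    rw [List.getD_eq_getElem _ _ (by rw [cs.length_rightInvSeq]; exact hj), hget]
  have herase : π (ω.eraseIdx j) = w * t := by
    rw [← cs.wordProd_mul_getD_rightInvSeq, hgetD, hw]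
  calc ℓ (w * t) ≤ (ω.eraseIdx j).length := herase ▸ cs.length_wordProd_le _
  _ < ω.length := by
      have := List.length_eraseIdx_add_one hj
      omega
  _ = ℓ w := by rw [hw]; exact hlen.symm

lemma nn_eq_one_of_rightDescent {w : W} {i : I} (h : ℓ (w * σ i) < ℓ w) :
    nn cs w (σ i) = 1 := by
  rcases (by decide : ∀ x : ZMod 2, x = 0 ∨ x = 1) (nn cs w (σ i)) with h0 | h1
  · exfalso
    have hrel : nn cs (w * σ i) (σ i) = 1 := by
      have := nn_mul cs w (σ i) (σ i)
      rw [nn_simple, if_pos rfl, show σ i * σ i * (σ i)⁻¹ = σ i by group, h0, add_zero] at this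
      exact this
    have := length_mul_lt_of_nn_eq_one cs hrel
    rw [cs.simple_mul_simple_cancel_right] at this
    omega
  · exact h1

lemma nn_refl_self {t : W} (ht : cs.IsReflection t) : nn cs t t = 1 := by
  obtain ⟨v, i, rfl⟩ := ht
  have h1 : nn cs (v * σ i * v⁻¹) (v * σ i * v⁻¹)
      = nn cs v⁻¹ (v * σ i * v⁻¹) + nn cs (v * σ i) (σ i) := by
    have := nn_mul cs (v * σ i) v⁻¹ (v * σ i * v⁻¹)
    rw [show v⁻¹ * (v * σ i * v⁻¹) * (v⁻¹)⁻¹ = σ i by group] at this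
    exact this
  have h2 : nn cs (v * σ i) (σ i) = 1 + nn cs v (σ i) := by
    have := nn_mul cs v (σ i) (σ i)
    rw [nn_simple, if_pos rfl, show σ i * σ i * (σ i)⁻¹ = σ i by group] at this
    exact this
  have h3 : nn cs v⁻¹ (v * σ i * v⁻¹) = nn cs v (σ i) := by
    rw [nn_inv, show v⁻¹ * (v * σ i * v⁻¹) * v = σ i by group]
  rw [h1, h2, h3, ← add_assoc, show nn cs v (σ i) + 1 = 1 + nn cs v (σ i) by ring, add_assoc,
    zmod2_add_self, add_zero]

/-- In a finite Coxeter group, an element all of whose right multiplications by simple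
reflections decrease length is the longest element. -/
lemma length_le_of_all_rightDescent [Finite W] (u : W)
    (h : ∀ i : I, ℓ (u * σ i) < ℓ u) (v : W) : ℓ v ≤ ℓ u := by
  haveI := Fintype.ofFinite W
  obtain ⟨w₀, -, hw₀⟩ := Finset.exists_max_image Finset.univ cs.length ⟨1, Finset.mem_univ 1⟩
  have hw₀max : ∀ x : W, ℓ x ≤ ℓ w₀ := fun x => hw₀ x (Finset.mem_univ x)
  -- every reflection t satisfies nn w₀ t = 1
  have hrefl : ∀ t : W, cs.IsReflection t → nn cs w₀ t = 1 := by
    intro t ht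
    rcases (by decide : ∀ x : ZMod 2, x = 0 ∨ x = 1) (nn cs w₀ t) with h0 | h1
    · exfalso
      have hrel : nn cs (w₀ * t) t = 1 := by
        have := nn_mul cs w₀ t t
        rw [show t * t * t⁻¹ = t by group, nn_refl_self cs ht, h0, add_zero] at this
        exact this
      have hlt := length_mul_lt_of_nn_eq_one cs hrel
      rw [mul_assoc, ht.mul_self, mul_one] at hlt
      exact absurd (hw₀max (w₀ * t)) (by omega)
    · exact h1
  -- u = w₀
  have key : u = w₀ := by
    have hy : ∀ i : I, nn cs (w₀⁻¹ * u) (σ i) = 0 := by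
      intro i
      have hmul := nn_mul cs w₀ (w₀⁻¹ * u) (σ i)
      rw [mul_inv_cancel_left] at hmul
      have hre : nn cs w₀ ((w₀⁻¹ * u) * σ i * (w₀⁻¹ * u)⁻¹) = 1 :=
        hrefl _ ⟨w₀⁻¹ * u, i, rfl⟩
      have hd : nn cs u (σ i) = 1 := nn_eq_one_of_rightDescent cs (h i)
      rw [hd, hre] at hmul
      -- 1 = nn (w₀⁻¹ u) (σ i) + 1
      have := congrArg (· + 1) hmul
      rw [add_assoc, zmod2_add_self, add_zero] at this
      exact this.symm
    by_contra hne
    have hne1 : w₀⁻¹ * u ≠ 1 := by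
      intro h1
      exact hne (by rw [← one_mul u, ← mul_inv_cancel w₀, mul_assoc, h1, mul_one])
    obtain ⟨i, hi⟩ := cs.exists_rightDescent_of_ne_one hne1
    have := nn_eq_one_of_rightDescent cs hi
    rw [hy i] at this
    exact absurd this (by decide)
  rw [key]
  exact hw₀max v

end Stmt15Aux
/-- If every panel of a spherical building (formalised via its Weyl-distance
function `δ` on chambers, with spherical meaning the Coxeter group `W` is
finite) is contained in at least `s+1` chambers, then every set of `s` chambers
admits a common opposite chamber, i.e. a chamber at maximal Weyl-distance from
each of them. -/
theorem stmt15 {B W I : Type*} [Nonempty B] [Group W] [Finite W]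
    {M : CoxeterMatrix I} (cs : CoxeterSystem M W)
    (δ : B → B → W)
    (WD1 : ∀ c d : B, δ c d = 1 ↔ c = d)
    (WDsymm : ∀ c d : B, δ d c = (δ c d)⁻¹)
    (WD2 : ∀ (c d e : B) (i : I), δ d e = cs.simple i →
      ((δ c e = δ c d * cs.simple i ∨ δ c e = δ c d) ∧
        (cs.length (δ c d * cs.simple i) = cs.length (δ c d) + 1 →
          δ c e = δ c d * cs.simple i)))
    (WD3 : ∀ (c d : B) (i : I), ∃ e : B,
      δ d e = cs.simple i ∧ δ c e = δ c d * cs.simple i)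
    (s : ℕ)
    (hthick : ∀ (c : B) (i : I), ∃ f : Fin (s + 1) → B, Function.Injective f ∧
      ∀ j, δ c (f j) = 1 ∨ δ c (f j) = cs.simple i)
    (ch : Fin s → B) :
    ∃ d : B, ∀ j : Fin s, ∀ w : W, cs.length w ≤ cs.length (δ (ch j) d) := by
  classical
  haveI := Fintype.ofFinite W
  obtain ⟨w₀, -, hw₀⟩ :=
    Finset.exists_max_image Finset.univ cs.length ⟨1, Finset.mem_univ 1⟩
  have hw₀max : ∀ x : W, cs.length x ≤ cs.length w₀ := fun x => hw₀ x (Finset.mem_univ x)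
  set F : B → ℕ := fun e => ∑ j : Fin s, cs.length (δ (ch j) e) with hF
  have hbdd : BddAbove (Set.range F) := by
    refine ⟨s * cs.length w₀, ?_⟩
    rintro _ ⟨e, rfl⟩
    calc F e ≤ ∑ _j : Fin s, cs.length w₀ := Finset.sum_le_sum (fun j _ => hw₀max _)
    _ = s * cs.length w₀ := by
        rw [Finset.sum_const, Finset.card_univ, Fintype.card_fin, smul_eq_mul]
  obtain ⟨b0⟩ := ‹Nonempty B›
  have hne : (Set.range F).Nonempty := ⟨F b0, b0, rfl⟩
  obtain ⟨d, hd⟩ := Nat.sSup_mem hne hbdd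
  have hmax : ∀ e : B, F e ≤ F d := fun e => by
    rw [hd]; exact le_csSup hbdd ⟨e, rfl⟩
  refine ⟨d, ?_⟩
  have hsne : ∀ i : I, cs.simple i ≠ 1 := by
    intro i hh
    have h1 := cs.length_simple i
    rw [hh, cs.length_one] at h1
    omega
  have hdesc : ∀ (j : Fin s) (i : I),
      cs.length (δ (ch j) d * cs.simple i) < cs.length (δ (ch j) d) := by
    by_contra hcon
    push_neg at hcon
    obtain ⟨j₀, i, hge⟩ := hcon
    have hasc : cs.length (δ (ch j₀) d * cs.simple i) = cs.length (δ (ch j₀) d) + 1 := by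
      rcases cs.length_mul_simple (δ (ch j₀) d) i with h | h
      · exact h
      · omega
    obtain ⟨f, hinj, hf⟩ := hthick d i
    have hpanel : ∀ k, f k ≠ d → δ d (f k) = cs.simple i := by
      intro k hk
      rcases hf k with h1 | h2
      · exact absurd ((WD1 d (f k)).mp h1).symm hk
      · exact h2
    have htrans : ∀ k k', f k ≠ d → f k' ≠ d → f k ≠ f k' →
        δ (f k) (f k') = cs.simple i := by
      intro k k' hkd hk'd hfne
      have hfd : δ (f k) d = cs.simple i := by
        rw [WDsymm d (f k), hpanel k hkd, cs.inv_simple]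
      rcases (WD2 (f k) d (f k') i (hpanel k' hk'd)).1 with h | h
      · rw [hfd, cs.simple_mul_simple_self] at h
        exact absurd ((WD1 _ _).mp h) hfne
      · rw [hfd] at h
        exact h
    set bad : Fin s → Fin (s + 1) → Prop :=
      fun j k => δ (ch j) (f k) = δ (ch j) d * cs.simple i ∧
        cs.length (δ (ch j) d * cs.simple i) < cs.length (δ (ch j) d) with hbad
    have hbadne : ∀ j k, bad j k → f k ≠ d := by
      intro j k hb hh
      have h1 := hb.1
      rw [hh] at h1
      exact hsne i (left_eq_mul.mp h1)
    have huniq : ∀ j k k', bad j k → bad j k' → k = k' := by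
      intro j k k' hb hb'
      by_contra hkk
      have hfne : f k ≠ f k' := fun hh => hkk (hinj hh)
      have h3 : δ (f k) (f k') = cs.simple i :=
        htrans k k' (hbadne j k hb) (hbadne j k' hb') hfne
      have hlen : cs.length (δ (ch j) (f k) * cs.simple i)
          = cs.length (δ (ch j) (f k)) + 1 := by
        rw [hb.1, cs.simple_mul_simple_cancel_right]
        rcases cs.length_mul_simple (δ (ch j) d) i with h | h
        · omega
        · omega
      have hforce := (WD2 (ch j) (f k) (f k') i h3).2 hlen
      rw [hb.1, cs.simple_mul_simple_cancel_right] at hforce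
      have heq : δ (ch j) d = δ (ch j) d * cs.simple i := hforce.symm.trans hb'.1
      exact hsne i (left_eq_mul.mp heq)
    have hbadj₀ : ∀ k, ¬ bad j₀ k := by
      intro k hb
      have := hb.2
      omega
    have hex : ∃ k, f k ≠ d ∧ ∀ j, ¬ bad j k := by
      by_contra hco
      push_neg at hco
      set g : Fin (s + 1) → Option {j : Fin s // j ≠ j₀} := fun k =>
        if hk : f k = d then none
        else some ⟨(hco k hk).choose,
          fun hh => hbadj₀ k (hh ▸ (hco k hk).choose_spec)⟩ with hg
      have hginj : Function.Injective g := by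
        intro k k' hkk
        by_cases h1 : f k = d <;> by_cases h2 : f k' = d <;>
          simp only [hg, h1, h2, dif_pos, dif_neg, not_false_iff,
            Option.some.injEq, Subtype.mk.injEq, reduceCtorEq] at hkk
        · exact hinj (h1.trans h2.symm)
        · have hb1 := (hco k h1).choose_spec
          have hb2 := (hco k' h2).choose_spec
          rw [hkk] at hb1
          exact huniq _ k k' hb1 hb2
      have hcard := Fintype.card_le_of_injective g hginj
      rw [Fintype.card_option, Fintype.card_fin] at hcard
      have hsub : Fintype.card {j : Fin s // j ≠ j₀} = s - 1 := by
        rw [Fintype.card_subtype_compl, Fintype.card_subtype_eq, Fintype.card_fin]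
      rw [hsub] at hcard
      have hs1 := j₀.isLt
      omega
    obtain ⟨k, hkd, hkgood⟩ := hex
    have hde : δ d (f k) = cs.simple i := hpanel k hkd
    have hgej : ∀ j : Fin s, cs.length (δ (ch j) d) ≤ cs.length (δ (ch j) (f k)) := by
      intro j
      rcases (WD2 (ch j) d (f k) i hde).1 with h | h
      · by_cases hlt : cs.length (δ (ch j) d * cs.simple i) < cs.length (δ (ch j) d)
        · exact absurd ⟨h, hlt⟩ (hkgood j)
        · rw [h]
          omega
      · rw [h]
    have hgtj₀ : cs.length (δ (ch j₀) d) < cs.length (δ (ch j₀) (f k)) := by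
      have h := (WD2 (ch j₀) d (f k) i hde).2 hasc
      rw [h, hasc]
      omega
    have hlt : F d < F (f k) := by
      rw [hF]
      exact Finset.sum_lt_sum (fun j _ => hgej j) ⟨j₀, Finset.mem_univ _, hgtj₀⟩
    have := hmax (f k)
    omega
  intro j w
  exact Stmt15Aux.length_le_of_all_rightDescent cs (δ (ch j) d) (fun i => hdesc j i) w
end

section
/- Let Q be a parabolic quadric of Witt index n ≥ 2 naturally embedded in a hyperbolic quadric Q' of Witt index n+1 (as a hyperplane section). Then every maximal singular subspace M of Q extends to a unique maximal singular subspace M' of Q' of a fixed given type, and if W' is a maximal singular subspace of Q' opposite (i.e., disjoint from) every M' arising from a family T of maximal singular subspaces of Q, then W = W' ∩ Q is a maximal singular subspace of Q disjoint from every member of T. -/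
def TotSing {F V : Type*} [Field F] [AddCommGroup V] [Module F V]
    (Q : QuadraticForm F V) (U : Submodule F V) : Prop :=
  ∀ v ∈ U, Q v = 0

namespace Stmt16Aux

open Module QuadraticMap Submodule

variable {F V : Type*} [Field F] [AddCommGroup V] [Module F V]

section basic
variable (Q : QuadraticForm F V)

lemma q_add (x y : V) : Q (x + y) = Q x + Q y + polar Q x y := by
  unfold QuadraticMap.polar; ring

lemma q_smul (t : F) (x : V) : Q (t • x) = t * t * Q x := by
  simpa using Q.map_smul t x

/-- Orthogonal complement w.r.t. the polar form. -/
def orthQ (N : Submodule F V) : Submodule F V :=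
  LinearMap.BilinForm.orthogonal (QuadraticMap.polarBilin Q) N

variable {Q}

lemma ts_polar {U : Submodule F V} (hU : TotSing Q U) {x y : V} (hx : x ∈ U) (hy : y ∈ U) :
    polar Q x y = 0 := by
  have h := hU _ (U.add_mem hx hy)
  simp [polar, h, hU _ hx, hU _ hy]

lemma isRefl : (Q.polarBilin).IsRefl := fun x y h => by
  simpa [polar_comm] using h

lemma mem_orth {N : Submodule F V} {x : V} :
    x ∈ orthQ Q N ↔ ∀ n ∈ N, polar Q n x = 0 := by
  simp [orthQ, LinearMap.BilinForm.mem_orthogonal_iff, LinearMap.BilinForm.IsOrtho]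

lemma ts_le_orth {U W : Submodule F V} (hW : W ≤ U) (hU : TotSing Q U) :
    U ≤ orthQ Q W := fun x hx => mem_orth.2 fun n hn => ts_polar hU (hW hn) hx

end basic

section fd
variable [Module.Finite F V] {Q : QuadraticForm F V}

lemma orth_rank (hnd : LinearMap.BilinForm.Nondegenerate (QuadraticMap.polarBilin Q))
    (W : Submodule F V) :
    finrank F (orthQ Q W) + finrank F W = finrank F V := by
  have h := LinearMap.BilinForm.finrank_orthogonal (B := Q.polarBilin) hnd W
  rw [show LinearMap.BilinForm.orthogonal (QuadraticMap.polarBilin Q) W = orthQ Q W from rfl] at h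
  have h2 : finrank F W ≤ finrank F V := W.finrank_le
  omega

lemma ts_rank_le (hnd : LinearMap.BilinForm.Nondegenerate (QuadraticMap.polarBilin Q))
    {U : Submodule F V} (hU : TotSing Q U) :
    2 * finrank F U ≤ finrank F V := by
  have h1 : U ≤ orthQ Q U := ts_le_orth le_rfl hU
  have h2 := orth_rank hnd U
  have h3 : finrank F U ≤ finrank F (orthQ Q U) := Submodule.finrank_mono h1
  omega

lemma inf_rank_ge (p q : Submodule F V) :
    finrank F p + finrank F q ≤ finrank F ↥(p ⊓ q) + finrank F V := by
  have h := Submodule.finrank_sup_add_finrank_inf_eq p q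
  have h2 : finrank F ↥(p ⊔ q) ≤ finrank F V := (p ⊔ q).finrank_le
  omega

lemma rank_sup_span {M : Submodule F V} {v : V} (hv : v ∉ M) :
    finrank F ↥(M ⊔ span F {v}) = finrank F M + 1 := by
  have hv0 : v ≠ 0 := fun h => hv (h ▸ M.zero_mem)
  have hd : M ⊓ span F {v} = ⊥ :=
    (Submodule.disjoint_span_singleton.2 fun h => absurd h hv).eq_bot
  have h := Submodule.finrank_sup_add_finrank_inf_eq M (span F {v})
  rw [hd, finrank_bot, finrank_span_singleton hv0] at h
  omega

lemma le_or_le_of_subset_union {S A B : Submodule F V} (h : ∀ x ∈ S, x ∈ A ∨ x ∈ B) :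
    S ≤ A ∨ S ≤ B := by
  by_contra hc
  push_neg at hc
  obtain ⟨hcA, hcB⟩ := hc
  obtain ⟨s, hs, hsA⟩ := SetLike.not_le_iff_exists.1 hcA
  obtain ⟨t, ht, htB⟩ := SetLike.not_le_iff_exists.1 hcB
  have hsB : s ∈ B := (h s hs).resolve_left hsA
  have htA : t ∈ A := (h t ht).resolve_right htB
  rcases h (s + t) (S.add_mem hs ht) with h' | h'
  · exact hsA (by simpa using A.sub_mem h' htA)
  · exact htB (by simpa using B.sub_mem h' hsB)

lemma parity_pick {n d₁ d₂ : ℕ} (h₁ : d₁ ≤ n + 1) (h₂ : d₂ ≤ n + 1) (hodd : Odd (d₁ + d₂)) :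
    Even (n + 1 - d₁) ↔ ¬Even (n + 1 - d₂) := by
  rw [Nat.odd_iff] at hodd
  rw [Nat.even_iff, Nat.even_iff]
  omega

lemma ts_sup_span {Q : QuadraticForm F V} {M : Submodule F V} (hMt : TotSing Q M) {v : V}
    (hv : Q v = 0) (hvO : ∀ m ∈ M, polar Q m v = 0) : TotSing Q (M ⊔ span F {v}) := by
  intro x hx
  rcases mem_sup.1 hx with ⟨y, hy, z, hz, rfl⟩
  rcases mem_span_singleton.1 hz with ⟨t, rfl⟩
  rw [q_add, q_smul, polar_smul_right, hv, hvO y hy, hMt y hy]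
  simp

lemma orthQ_orthQ {Q : QuadraticForm F V}
    (hnd : LinearMap.BilinForm.Nondegenerate (QuadraticMap.polarBilin Q))
    (N : Submodule F V) : orthQ Q (orthQ Q N) = N :=
  LinearMap.BilinForm.orthogonal_orthogonal hnd isRefl N

lemma two_ext {n : ℕ} {Q : QuadraticForm F V}
    (hnd : LinearMap.BilinForm.Nondegenerate (QuadraticMap.polarBilin Q))
    (hdim : finrank F V = 2 * n + 2)
    (hWittEx : ∃ U : Submodule F V, TotSing Q U ∧ finrank F U = n + 1)
    {M : Submodule F V} (hMt : TotSing Q M) (hMr : finrank F M = n) :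
    ∃ M₁ M₂ : Submodule F V,
      (TotSing Q M₁ ∧ finrank F M₁ = n + 1 ∧ M ≤ M₁) ∧
      (TotSing Q M₂ ∧ finrank F M₂ = n + 1 ∧ M ≤ M₂) ∧
      finrank F ↥(M₁ ⊓ M₂) = n ∧
      ∀ M' : Submodule F V, TotSing Q M' → finrank F M' = n + 1 → M ≤ M' →
        M' = M₁ ∨ M' = M₂ := by
  classical
  obtain ⟨U, hUt, hUr⟩ := hWittEx
  set O := orthQ Q M with hOdef
  have hOr : finrank F O = n + 2 := by
    have h := orth_rank hnd M
    rw [← hOdef] at h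
    omega
  have hMO : M ≤ O := ts_le_orth le_rfl hMt
  -- find a singular vector in `O` outside `M`
  have hUO : ∃ v, v ∈ U ⊓ O ∧ v ∉ M := by
    by_contra hcon
    push_neg at hcon
    have hle : U ⊓ O ≤ U ⊓ M := le_inf inf_le_left (fun x hx => hcon x hx)
    have hsup : U ⊔ O ≤ orthQ Q (U ⊓ M) := sup_le (ts_le_orth inf_le_left hUt)
      (LinearMap.BilinForm.orthogonal_le (inf_le_right : U ⊓ M ≤ M))
    have h1 := orth_rank hnd (U ⊓ M)
    have h2 := Submodule.finrank_sup_add_finrank_inf_eq U O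
    have h3 := Submodule.finrank_mono hsup
    have h4 := Submodule.finrank_mono hle
    omega
  obtain ⟨v, hvUO, hvM⟩ := hUO
  have hvU : v ∈ U := hvUO.1
  have hvO : v ∈ O := hvUO.2
  have hQv : Q v = 0 := hUt v hvU
  have hvMp : ∀ m ∈ M, polar Q m v = 0 := mem_orth.1 hvO
  -- find the hyperbolic partner direction `w`
  have hOO : orthQ Q O = M := by rw [hOdef, orthQ_orthQ hnd]
  have hvno : v ∉ orthQ Q O := by rwa [hOO]
  rw [mem_orth] at hvno
  push_neg at hvno
  obtain ⟨w₀, hw₀O, hw₀⟩ := hvno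
  have hpvv : polar Q v v = 0 := by rw [polar_self, hQv]; simp
  have hw₀' : polar Q v w₀ ≠ 0 := by rwa [polar_comm] at hw₀
  obtain ⟨w₁, hw₁O, hpvw₁⟩ : ∃ w₁ ∈ O, polar Q v w₁ = 1 := by
    refine ⟨(polar Q v w₀)⁻¹ • w₀, O.smul_mem _ hw₀O, ?_⟩
    rw [polar_smul_right, smul_eq_mul, inv_mul_cancel₀ hw₀']
  obtain ⟨w, hwO, hpvw, hQw⟩ : ∃ w ∈ O, polar Q v w = 1 ∧ Q w = 0 := by
    refine ⟨w₁ + (-(Q w₁)) • v, O.add_mem hw₁O (O.smul_mem _ hvO), ?_, ?_⟩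
    · rw [polar_add_right, polar_smul_right, hpvw₁, hpvv]
      simp
    · rw [q_add, q_smul, polar_smul_right, hQv, polar_comm _ w₁ v, hpvw₁, smul_eq_mul]
      ring
  have hwM : w ∉ M := fun hw => by
    have : polar Q w v = 0 := hvMp w hw
    rw [polar_comm] at this
    rw [this] at hpvw
    exact one_ne_zero hpvw.symm
  set M₁ := M ⊔ span F {v} with hM₁def
  set M₂ := M ⊔ span F {w} with hM₂def
  have hM₁t : TotSing Q M₁ := ts_sup_span hMt hQv hvMp
  have hM₂t : TotSing Q M₂ := ts_sup_span hMt hQw (fun m hm => mem_orth.1 hwO m hm)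
  have hM₁r : finrank F M₁ = n + 1 := by rw [hM₁def, rank_sup_span hvM, hMr]
  have hM₂r : finrank F M₂ = n + 1 := by rw [hM₂def, rank_sup_span hwM, hMr]
  have hvM₁ : v ∈ M₁ := mem_sup_right (mem_span_singleton_self v)
  have hwM₂ : w ∈ M₂ := mem_sup_right (mem_span_singleton_self w)
  have hwM₁ : w ∉ M₁ := fun hw => by
    have := ts_polar hM₁t hvM₁ hw
    rw [this] at hpvw
    exact one_ne_zero hpvw.symm
  have hM₁O : M₁ ≤ O := sup_le hMO ((span_singleton_le_iff_mem v O).2 hvO)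
  have hOsup : M₁ ⊔ span F {w} = O := by
    apply Submodule.eq_of_le_of_finrank_le
      (sup_le hM₁O ((span_singleton_le_iff_mem w O).2 hwO))
    rw [rank_sup_span hwM₁, hM₁r, hOr]
  have hMle₁ : M ≤ M₁ := le_sup_left
  have hMle₂ : M ≤ M₂ := le_sup_left
  have hne : M₁ ≠ M₂ := fun h => hwM₁ (h ▸ hwM₂)
  -- classification of all totally singular (n+1)-dim overspaces of M
  have hcls : ∀ M' : Submodule F V, TotSing Q M' → finrank F M' = n + 1 → M ≤ M' →
      M' = M₁ ∨ M' = M₂ := by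
    intro M' hM't hM'r hMM'
    have hM'O : M' ≤ O := ts_le_orth hMM' hM't
    obtain ⟨u, hu, huM⟩ : ∃ u ∈ M', u ∉ M := by
      apply SetLike.not_le_iff_exists.1
      intro hle
      have := Submodule.finrank_mono hle
      omega
    have huO : u ∈ O := hM'O hu
    rw [← hOsup] at huO
    rcases mem_sup.1 huO with ⟨y, hy, z, hz, huyz⟩
    rcases mem_span_singleton.1 hz with ⟨t, rfl⟩
    rcases mem_sup.1 hy with ⟨m', hm', z', hz', hyz'⟩
    rcases mem_span_singleton.1 hz' with ⟨s, rfl⟩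
    have hQu : Q u = 0 := hM't u hu
    have hpm'v : polar Q m' v = 0 := hvMp m' hm'
    have hpm'w : polar Q m' w = 0 := mem_orth.1 hwO m' hm'
    have hst : s * t = 0 := by
      have expand : Q u = s * t := by
        rw [← huyz, ← hyz', q_add, q_add, q_smul, q_smul, polar_smul_right,
          polar_add_left, polar_smul_left, polar_smul_right, polar_smul_right,
          hQv, hQw, hpvw, hpm'v, hpm'w, hMt m' hm']
        simp only [smul_eq_mul, mul_zero, zero_add, add_zero, mul_one, zero_mul]
      rw [← expand, hQu]
    have husub : M ⊔ span F {u} = M' := by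
      apply Submodule.eq_of_le_of_finrank_le
        (sup_le hMM' ((span_singleton_le_iff_mem u M').2 hu))
      rw [rank_sup_span huM, hMr, hM'r]
    rcases mul_eq_zero.1 hst with hs | ht
    · right
      have huM₂ : u ∈ M₂ := by
        rw [← huyz, ← hyz', hs]
        simp only [zero_smul, add_zero]
        exact M₂.add_mem (hMle₂ hm') (M₂.smul_mem t hwM₂)
      rw [← husub]
      apply Submodule.eq_of_le_of_finrank_le
        (sup_le hMle₂ ((span_singleton_le_iff_mem u M₂).2 huM₂))
      rw [rank_sup_span huM, hMr, hM₂r]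
    · left
      have huM₁ : u ∈ M₁ := by
        rw [← huyz, ← hyz', ht]
        simp only [zero_smul, add_zero]
        exact M₁.add_mem (hMle₁ hm') (M₁.smul_mem s hvM₁)
      rw [← husub]
      apply Submodule.eq_of_le_of_finrank_le
        (sup_le hMle₁ ((span_singleton_le_iff_mem u M₁).2 huM₁))
      rw [rank_sup_span huM, hMr, hM₁r]
  have hinf : finrank F ↥(M₁ ⊓ M₂) = n := by
    have h1 : finrank F ↥(M₁ ⊓ M₂) ≤ n + 1 := hM₁r ▸ Submodule.finrank_mono inf_le_left
    have h2 : n ≤ finrank F ↥(M₁ ⊓ M₂) := hMr ▸ Submodule.finrank_mono (le_inf hMle₁ hMle₂)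
    rcases Nat.lt_or_ge (finrank F ↥(M₁ ⊓ M₂)) (n + 1) with h | h
    · omega
    · exfalso
      have he : M₁ ⊓ M₂ = M₁ := Submodule.eq_of_le_of_finrank_le inf_le_left (by omega)
      have hle12 : M₁ ≤ M₂ := he ▸ inf_le_right
      exact hne (Submodule.eq_of_le_of_finrank_le hle12 (by omega))
  exact ⟨M₁, M₂, ⟨hM₁t, hM₁r, hMle₁⟩, ⟨hM₂t, hM₂r, hMle₂⟩, hinf, hcls⟩

lemma case2_core {m : ℕ} {Q : QuadraticForm F V}
    (hnd : LinearMap.BilinForm.Nondegenerate (QuadraticMap.polarBilin Q))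
    (hdim : finrank F V = 2 * m + 2)
    {A B C : Submodule F V} (hA : TotSing Q A) (hC : TotSing Q C)
    (hrA : finrank F A = m + 1) (hrC : finrank F C = m + 1)
    (hB' : B ≤ orthQ Q (A ⊓ B))
    (hAB : finrank F ↥(A ⊓ B) = m) (hCM : C ⊓ (A ⊓ B) = ⊥)
    (hle : C ⊓ orthQ Q (A ⊓ B) ≤ A) :
    finrank F ↥(A ⊓ C) = 1 ∧ finrank F ↥(B ⊓ C) = 0 := by
  have hAO : A ≤ orthQ Q (A ⊓ B) := ts_le_orth inf_le_left hA
  have hOr : finrank F (orthQ Q (A ⊓ B)) = m + 2 := by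
    have := orth_rank hnd (A ⊓ B); omega
  have hCB : C ⊓ B = ⊥ := by
    have h2 : C ⊓ B ≤ A := le_trans (le_inf inf_le_left (le_trans inf_le_right hB')) hle
    have h1 : C ⊓ B ≤ C ⊓ (A ⊓ B) := le_inf inf_le_left (le_inf h2 inf_le_right)
    rw [hCM] at h1
    exact le_bot_iff.1 h1
  have hCO_eq : C ⊓ orthQ Q (A ⊓ B) = C ⊓ A :=
    le_antisymm (le_inf inf_le_left hle) (inf_le_inf_left _ hAO)
  have h1 : 1 ≤ finrank F ↥(C ⊓ A) := by
    have h := inf_rank_ge C (orthQ Q (A ⊓ B))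
    rw [hCO_eq] at h
    omega
  have hup : finrank F ↥(C ⊓ A) ≤ 1 := by
    have hd : (C ⊓ A) ⊓ (A ⊓ B) = ⊥ := by
      have : (C ⊓ A) ⊓ (A ⊓ B) ≤ C ⊓ (A ⊓ B) := inf_le_inf_right _ inf_le_left
      rw [hCM] at this
      exact le_bot_iff.1 this
    have hsum := Submodule.finrank_sup_add_finrank_inf_eq (C ⊓ A) (A ⊓ B)
    rw [hd, finrank_bot] at hsum
    have hsup : (C ⊓ A) ⊔ (A ⊓ B) ≤ A := sup_le inf_le_right inf_le_left
    have := Submodule.finrank_mono hsup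
    omega
  constructor
  · rw [inf_comm]; omega
  · rw [inf_comm, hCB, finrank_bot]

lemma parity_case2 {m : ℕ} {Q : QuadraticForm F V}
    (hnd : LinearMap.BilinForm.Nondegenerate (QuadraticMap.polarBilin Q))
    (hdim : finrank F V = 2 * m + 2)
    {A B C : Submodule F V} (hA : TotSing Q A) (hB : TotSing Q B) (hC : TotSing Q C)
    (hrA : finrank F A = m + 1) (hrB : finrank F B = m + 1) (hrC : finrank F C = m + 1)
    (hAB : finrank F ↥(A ⊓ B) = m) (hCM : C ⊓ (A ⊓ B) = ⊥) :
    Odd (finrank F ↥(A ⊓ C) + finrank F ↥(B ⊓ C)) := by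
  have hAO : A ≤ orthQ Q (A ⊓ B) := ts_le_orth inf_le_left hA
  have hBO : B ≤ orthQ Q (A ⊓ B) := ts_le_orth inf_le_right hB
  obtain ⟨a, haA, haB⟩ : ∃ a ∈ A, a ∉ B := by
    apply SetLike.not_le_iff_exists.1
    intro h
    rw [inf_eq_left.2 h] at hAB
    omega
  obtain ⟨b, hbB, hbA⟩ : ∃ b ∈ B, b ∉ A := by
    apply SetLike.not_le_iff_exists.1
    intro h
    rw [inf_eq_right.2 h] at hAB
    omega
  have haM : a ∉ A ⊓ B := fun h => haB (Submodule.mem_inf.1 h).2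
  have hbM : b ∉ A ⊓ B := fun h => hbA (Submodule.mem_inf.1 h).1
  have hMa : (A ⊓ B) ⊔ span F {a} = A := by
    apply Submodule.eq_of_le_of_finrank_le
      (sup_le inf_le_left ((span_singleton_le_iff_mem a A).2 haA))
    rw [rank_sup_span haM, hAB, hrA]
  have hMb : (A ⊓ B) ⊔ span F {b} = B := by
    apply Submodule.eq_of_le_of_finrank_le
      (sup_le inf_le_right ((span_singleton_le_iff_mem b B).2 hbB))
    rw [rank_sup_span hbM, hAB, hrB]
  have hab : polar Q a b ≠ 0 := by
    intro h0
    have hbAp : ∀ y ∈ A, polar Q y b = 0 := by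
      intro y hy
      rw [← hMa] at hy
      rcases mem_sup.1 hy with ⟨m', hm', z, hz, rfl⟩
      rcases mem_span_singleton.1 hz with ⟨s, rfl⟩
      rw [polar_add_left, polar_smul_left,
        ts_polar hB (Submodule.mem_inf.1 hm').2 hbB, h0]
      simp
    have hts : TotSing Q (A ⊔ span F {b}) := ts_sup_span hA (hB b hbB) hbAp
    have hr : finrank F ↥(A ⊔ span F {b}) = m + 2 := by rw [rank_sup_span hbA, hrA]
    have := ts_rank_le hnd hts
    omega
  have hABO : A ⊔ B = orthQ Q (A ⊓ B) := by
    have hOr : finrank F (orthQ Q (A ⊓ B)) = m + 2 := by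
      have := orth_rank hnd (A ⊓ B); omega
    apply Submodule.eq_of_le_of_finrank_le (sup_le hAO hBO)
    have := Submodule.finrank_sup_add_finrank_inf_eq A B
    omega
  have hcls : ∀ x ∈ C ⊓ orthQ Q (A ⊓ B), x ∈ A ∨ x ∈ B := by
    intro x hx
    have hxO : x ∈ A ⊔ B := by
      rw [hABO]
      exact (Submodule.mem_inf.1 hx).2
    have hQx : Q x = 0 := hC x (Submodule.mem_inf.1 hx).1
    rcases mem_sup.1 hxO with ⟨y, hy, z, hz, hxyz⟩
    rw [← hMa] at hy
    rcases mem_sup.1 hy with ⟨m₁, hm₁, z₁, hz₁, hyz⟩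
    rcases mem_span_singleton.1 hz₁ with ⟨s, rfl⟩
    rw [← hMb] at hz
    rcases mem_sup.1 hz with ⟨m₂, hm₂, z₂, hz₂, hzz⟩
    rcases mem_span_singleton.1 hz₂ with ⟨t, rfl⟩
    obtain ⟨hm₁A, hm₁B⟩ := Submodule.mem_inf.1 hm₁
    obtain ⟨hm₂A, hm₂B⟩ := Submodule.mem_inf.1 hm₂
    have hQx2 : Q x = s * t * polar Q a b := by
      rw [← hxyz, ← hyz, ← hzz]
      simp only [q_add, q_smul, polar_add_left, polar_add_right, polar_smul_left,
        polar_smul_right, smul_eq_mul,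
        hA m₁ hm₁A, hA m₂ hm₂A, hA a haA, hB b hbB,
        ts_polar hA hm₁A haA, ts_polar hA hm₁A hm₂A, ts_polar hB hm₁B hbB,
        ts_polar hA haA hm₂A, ts_polar hB hm₂B hbB]
      ring
    have hst0 : s * t = 0 := by
      have h := hQx2.symm.trans hQx
      rcases mul_eq_zero.1 h with h' | h'
      · exact h'
      · exact absurd h' hab
    rcases mul_eq_zero.1 hst0 with hs | ht
    · right
      rw [← hxyz, ← hyz, ← hzz, hs]
      simp only [zero_smul, add_zero]
      exact B.add_mem hm₁B (B.add_mem hm₂B (B.smul_mem t hbB))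
    · left
      rw [← hxyz, ← hyz, ← hzz, ht]
      simp only [zero_smul, add_zero]
      exact A.add_mem (A.add_mem hm₁A (A.smul_mem s haA)) hm₂A
  rcases le_or_le_of_subset_union hcls with hle | hle
  · obtain ⟨h1, h0⟩ := case2_core hnd hdim hA hC hrA hrC hBO hAB hCM hle
    rw [h1, h0]
    exact ⟨0, by norm_num⟩
  · have hAB' : finrank F ↥(B ⊓ A) = m := by rw [inf_comm B A]; exact hAB
    have hCM' : C ⊓ (B ⊓ A) = ⊥ := by rw [inf_comm B A]; exact hCM
    have hle' : C ⊓ orthQ Q (B ⊓ A) ≤ B := by rw [inf_comm B A]; exact hle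
    have hAO' : A ≤ orthQ Q (B ⊓ A) := by rw [inf_comm B A]; exact hAO
    obtain ⟨h1, h0⟩ := case2_core hnd hdim hB hC hrB hrC hAO' hAB' hCM' hle'
    rw [h1, h0]
    exact ⟨0, by norm_num⟩

end fd

universe u v

lemma parity_core {F : Type u} [Field F] :
    ∀ (m : ℕ) (V : Type v) [AddCommGroup V] [Module F V] [Module.Finite F V]
      (Q : QuadraticForm F V),
      LinearMap.BilinForm.Nondegenerate (QuadraticMap.polarBilin Q) →
      finrank F V = 2 * m + 2 →
      ∀ A B C : Submodule F V, TotSing Q A → TotSing Q B → TotSing Q C →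
        finrank F A = m + 1 → finrank F B = m + 1 → finrank F C = m + 1 →
        finrank F ↥(A ⊓ B) = m →
        Odd (finrank F ↥(A ⊓ C) + finrank F ↥(B ⊓ C)) := by
  intro m
  induction m with
  | zero =>
    intro V _ _ _ Q hnd hdim A B C hA hB hC hrA hrB hrC hAB
    have hABbot : A ⊓ B = ⊥ := Submodule.finrank_eq_zero.1 hAB
    exact parity_case2 hnd hdim hA hB hC hrA hrB hrC hAB (by rw [hABbot, inf_bot_eq])
  | succ k ih =>
    intro V _ _ _ Q hnd hdim A B C hA hB hC hrA hrB hrC hAB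
    by_cases hCM : C ⊓ (A ⊓ B) = ⊥
    · exact parity_case2 hnd hdim hA hB hC hrA hrB hrC hAB hCM
    obtain ⟨v, hvCM, hv0⟩ := Submodule.exists_mem_ne_zero_of_ne_bot hCM
    obtain ⟨hvC, hvAB⟩ := Submodule.mem_inf.1 hvCM
    obtain ⟨hvA, hvB⟩ := Submodule.mem_inf.1 hvAB
    have hQv : Q v = 0 := hC v hvC
    have hpvv : polar Q v v = 0 := by rw [polar_self, hQv]; simp
    have hvK : v ∈ orthQ Q (span F {v}) := by
      rw [mem_orth]
      intro n hn
      rcases mem_span_singleton.1 hn with ⟨t, rfl⟩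
      rw [polar_smul_left, hpvv]
      simp
    have hAK : A ≤ orthQ Q (span F {v}) :=
      ts_le_orth ((span_singleton_le_iff_mem v A).2 hvA) hA
    have hBK : B ≤ orthQ Q (span F {v}) :=
      ts_le_orth ((span_singleton_le_iff_mem v B).2 hvB) hB
    have hCK : C ≤ orthQ Q (span F {v}) :=
      ts_le_orth ((span_singleton_le_iff_mem v C).2 hvC) hC
    have hKr : finrank F (orthQ Q (span F {v})) = 2 * k + 3 := by
      have h := orth_rank hnd (span F {v})
      rw [finrank_span_singleton hv0] at h
      omega
    obtain ⟨Wc, hWc⟩ := Submodule.exists_isCompl (span F {v})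
    set W : Submodule F V := orthQ Q (span F {v}) ⊓ Wc with hWdef
    have hdisj : span F {v} ⊓ W = ⊥ := by
      have h1 : span F {v} ⊓ W ≤ span F {v} ⊓ Wc := inf_le_inf_left _ inf_le_right
      rw [disjoint_iff.1 hWc.disjoint] at h1
      exact le_bot_iff.1 h1
    have hKsup : span F {v} ⊔ W = orthQ Q (span F {v}) := by
      have h := sup_inf_assoc_of_le (x := span F {v})
        Wc ((span_singleton_le_iff_mem v _).2 hvK)
      rw [codisjoint_iff.1 hWc.codisjoint, top_inf_eq] at h
      rw [hWdef, inf_comm (orthQ Q (span F {v})) Wc]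
      exact h.symm
    have hWr : finrank F W = 2 * k + 2 := by
      have h := Submodule.finrank_sup_add_finrank_inf_eq (span F {v}) W
      rw [hKsup, hdisj, finrank_bot, finrank_span_singleton hv0] at h
      omega
    -- the key dimension lemma for subspaces between `span v` and its perp
    have key : ∀ X : Submodule F V, v ∈ X → X ≤ orthQ Q (span F {v}) →
        finrank F ↥(X ⊓ W) + 1 = finrank F X := by
      intro X hvX hXK
      have hXW : X ⊓ Wc = X ⊓ W :=
        le_antisymm (le_inf inf_le_left (le_inf (inf_le_left.trans hXK) inf_le_right))
          (le_inf inf_le_left (inf_le_right.trans inf_le_right))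
      have hXsup : span F {v} ⊔ (X ⊓ W) = X := by
        rw [← hXW]
        have h := sup_inf_assoc_of_le (x := span F {v})
          Wc ((span_singleton_le_iff_mem v X).2 hvX)
        rw [codisjoint_iff.1 hWc.codisjoint, top_inf_eq, inf_comm Wc X] at h
        exact h.symm
      have hdX : span F {v} ⊓ (X ⊓ W) = ⊥ := by
        have h1 : span F {v} ⊓ (X ⊓ W) ≤ span F {v} ⊓ W := inf_le_inf_left _ inf_le_right
        rw [hdisj] at h1
        exact le_bot_iff.1 h1
      have h := Submodule.finrank_sup_add_finrank_inf_eq (span F {v}) (X ⊓ W)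
      rw [hXsup, hdX, finrank_bot, finrank_span_singleton hv0] at h
      omega
    -- restricted quadratic form
    set Qw : QuadraticForm F ↥W := Q.comp W.subtype with hQwdef
    have hpolw : ∀ x y : ↥W, polar Qw x y = polar Q ↑x ↑y := by
      intro x y
      simp [QuadraticMap.polar, hQwdef, QuadraticMap.comp_apply]
    have hndw : LinearMap.BilinForm.Nondegenerate (QuadraticMap.polarBilin Qw) := by
      suffices hsep : ∀ x : ↥W, (∀ y : ↥W, QuadraticMap.polarBilin Qw x y = 0) → x = 0 by
        refine ⟨hsep, fun x hx => hsep x fun y => ?_⟩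
        rw [QuadraticMap.polarBilin_apply_apply, polar_comm, ← QuadraticMap.polarBilin_apply_apply]
        exact hx y
      intro x hx
      have hxv : (↑x : V) ∈ orthQ Q (orthQ Q (span F {v})) := by
        rw [mem_orth]
        intro nn hn
        rw [← hKsup] at hn
        rcases mem_sup.1 hn with ⟨z, hz, z', hz', rfl⟩
        rcases mem_span_singleton.1 hz with ⟨t, rfl⟩
        have h1 : polar Q v ↑x = 0 := mem_orth.1 (Submodule.mem_inf.1 x.2).1 v (mem_span_singleton_self v)
        have h2 : polar Q z' ↑x = 0 := by
          have h3 := hx ⟨z', hz'⟩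
          rw [QuadraticMap.polarBilin_apply_apply, hpolw] at h3
          rw [polar_comm]
          exact h3
        rw [polar_add_left, polar_smul_left, h1, h2]
        simp
      rw [orthQ_orthQ hnd] at hxv
      have hmem : (↑x : V) ∈ span F {v} ⊓ W := Submodule.mem_inf.2 ⟨hxv, x.2⟩
      rw [hdisj] at hmem
      exact Subtype.ext (by simpa using hmem)
    have hcomap_rank : ∀ X : Submodule F V,
        finrank F ↥(Submodule.comap W.subtype X) = finrank F ↥(X ⊓ W) := by
      intro X
      rw [← Submodule.finrank_map_subtype_eq W (Submodule.comap W.subtype X),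
        Submodule.map_comap_subtype, inf_comm]
    have hcomap_ts : ∀ X : Submodule F V, TotSing Q X →
        TotSing Qw (Submodule.comap W.subtype X) := fun X hX x hx => hX ↑x hx
    have hrkA := key A hvA hAK
    have hrkB := key B hvB hBK
    have hrkC := key C hvC hCK
    have hrkAB := key (A ⊓ B) hvAB (inf_le_left.trans hAK)
    have hrkAC := key (A ⊓ C) (Submodule.mem_inf.2 ⟨hvA, hvC⟩) (inf_le_left.trans hAK)
    have hrkBC := key (B ⊓ C) (Submodule.mem_inf.2 ⟨hvB, hvC⟩) (inf_le_left.trans hBK)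
    have hind := ih ↥W Qw hndw hWr
      (Submodule.comap W.subtype A) (Submodule.comap W.subtype B) (Submodule.comap W.subtype C)
      (hcomap_ts A hA) (hcomap_ts B hB) (hcomap_ts C hC)
      (by rw [hcomap_rank]; omega) (by rw [hcomap_rank]; omega) (by rw [hcomap_rank]; omega)
      (by rw [← Submodule.comap_inf, hcomap_rank]; omega)
    rw [← Submodule.comap_inf, ← Submodule.comap_inf, hcomap_rank, hcomap_rank] at hind
    obtain ⟨j, hj⟩ := hind
    exact ⟨j + 1, by omega⟩

end Stmt16Aux


/-- A parabolic quadric `Q` of Witt index `n ≥ 2` naturally embedded as a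
non-degenerate hyperplane section `H` of a hyperbolic quadric `Q'` of Witt
index `n+1`.  Every maximal singular subspace `M` of the parabolic quadric
(`M ≤ H`, totally singular, linear dimension `n`) extends to a unique maximal
singular subspace `M'` of the hyperbolic quadric (linear dimension `n+1`) of a
fixed given type (same class as a reference generator `C`, classes being
determined by the parity of the codimension of the intersection); and if `W'`
is a maximal singular subspace of the hyperbolic quadric disjoint from every
such extension `M'` of every member of a family `T`, then `W = W' ∩ H` is a
maximal singular subspace of the parabolic quadric disjoint from every member
of `T`. -/
theorem stmt16 (n : ℕ) (hn : 2 ≤ n) (F V : Type*) [Field F] [Fintype F]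
    [AddCommGroup V] [Module F V] [Module.Finite F V]
    (Q' : QuadraticForm F V)
    (hdim : Module.finrank F V = 2 * n + 2)
    (hnd : LinearMap.BilinForm.Nondegenerate (QuadraticMap.polarBilin Q'))
    -- `Q'` is hyperbolic of Witt index `n+1`:
    (hWitt : ∀ U : Submodule F V, TotSing Q' U → Module.finrank F U ≤ n + 1)
    (hWittEx : ∃ U : Submodule F V, TotSing Q' U ∧ Module.finrank F U = n + 1)
    -- `H` is a hyperplane cutting out a non-degenerate parabolic section:
    (H : Submodule F V) (hH : Module.finrank F H = 2 * n + 1)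
    (hHnd : ∀ v ∈ H, Q' v = 0 → v ≠ 0 → ∃ w ∈ H, QuadraticMap.polar Q' v w ≠ 0)
    (hHWitt : ∃ U : Submodule F V, U ≤ H ∧ TotSing Q' U ∧ Module.finrank F U = n)
    -- a reference generator fixing one of the two classes (types):
    (C : Submodule F V) (hC : TotSing Q' C ∧ Module.finrank F C = n + 1) :
    -- (a) unique same-type extension of each generator of the parabolic quadric
    (∀ M : Submodule F V, M ≤ H → TotSing Q' M → Module.finrank F M = n →
      ∃! M' : Submodule F V, TotSing Q' M' ∧ Module.finrank F M' = n + 1 ∧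
        M ≤ M' ∧ Even (n + 1 - Module.finrank F ↥(M' ⊓ C))) ∧
    -- (b) intersecting a common opposite with `H` yields a common opposite
    (∀ T : Set (Submodule F V),
      (∀ M ∈ T, M ≤ H ∧ TotSing Q' M ∧ Module.finrank F M = n) →
      ∀ W' : Submodule F V, TotSing Q' W' → Module.finrank F W' = n + 1 →
      (∀ M ∈ T, ∀ M' : Submodule F V, TotSing Q' M' →
        Module.finrank F M' = n + 1 → M ≤ M' →
        Even (n + 1 - Module.finrank F ↥(M' ⊓ C)) → W' ⊓ M' = ⊥) →
      Module.finrank F ↥(W' ⊓ H) = n ∧ ∀ M ∈ T, (W' ⊓ H) ⊓ M = ⊥) := by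
  obtain ⟨hCt, hCr⟩ := hC
  have parta : ∀ M : Submodule F V, M ≤ H → TotSing Q' M → Module.finrank F M = n →
      ∃! M' : Submodule F V, TotSing Q' M' ∧ Module.finrank F M' = n + 1 ∧
        M ≤ M' ∧ Even (n + 1 - Module.finrank F ↥(M' ⊓ C)) := by
    intro M hMH hMt hMr
    obtain ⟨M₁, M₂, ⟨hM₁t, hM₁r, hMle₁⟩, ⟨hM₂t, hM₂r, hMle₂⟩, hinf, hcls⟩ :=
      Stmt16Aux.two_ext hnd hdim hWittEx hMt hMr
    have hodd : Odd (Module.finrank F ↥(M₁ ⊓ C) + Module.finrank F ↥(M₂ ⊓ C)) :=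
      Stmt16Aux.parity_core n V Q' hnd hdim M₁ M₂ C hM₁t hM₂t hCt hM₁r hM₂r hCr hinf
    have hd₁ : Module.finrank F ↥(M₁ ⊓ C) ≤ n + 1 :=
      hM₁r ▸ Submodule.finrank_mono inf_le_left
    have hd₂ : Module.finrank F ↥(M₂ ⊓ C) ≤ n + 1 :=
      hM₂r ▸ Submodule.finrank_mono inf_le_left
    have hiff := Stmt16Aux.parity_pick hd₁ hd₂ hodd
    by_cases hE : Even (n + 1 - Module.finrank F ↥(M₁ ⊓ C))
    · refine ⟨M₁, ⟨hM₁t, hM₁r, hMle₁, hE⟩, ?_⟩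
      rintro y ⟨hyt, hyr, hyle, hyE⟩
      rcases hcls y hyt hyr hyle with rfl | rfl
      · rfl
      · exact absurd hyE (hiff.1 hE)
    · have hE₂ : Even (n + 1 - Module.finrank F ↥(M₂ ⊓ C)) := by
        by_contra h
        exact hE (hiff.2 h)
      refine ⟨M₂, ⟨hM₂t, hM₂r, hMle₂, hE₂⟩, ?_⟩
      rintro y ⟨hyt, hyr, hyle, hyE⟩
      rcases hcls y hyt hyr hyle with rfl | rfl
      · exact absurd hyE hE
      · rfl
  refine ⟨parta, ?_⟩
  intro T hT W' hW't hW'r hopp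
  have hWH : ¬ W' ≤ H := by
    intro hle
    have horth : W' = Stmt16Aux.orthQ Q' W' := by
      apply Submodule.eq_of_le_of_finrank_le (Stmt16Aux.ts_le_orth le_rfl hW't)
      have := Stmt16Aux.orth_rank hnd W'
      omega
    have hHne : Stmt16Aux.orthQ Q' H ≠ ⊥ := by
      intro h
      have h2 := Stmt16Aux.orth_rank hnd H
      rw [h, finrank_bot] at h2
      omega
    obtain ⟨u, huH, hu0⟩ := Submodule.exists_mem_ne_zero_of_ne_bot hHne
    have huW : u ∈ W' := by
      rw [horth]
      exact LinearMap.BilinForm.orthogonal_le hle huH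
    obtain ⟨w, hwH, hw⟩ := hHnd u (hle huW) (hW't u huW) hu0
    refine hw ?_
    have h3 := Stmt16Aux.mem_orth.1 huH w hwH
    rwa [QuadraticMap.polar_comm] at h3
  have hrWH : Module.finrank F ↥(W' ⊓ H) = n := by
    have hlt : Module.finrank F ↥(W' ⊓ H) < n + 1 := by
      rcases Nat.lt_or_ge (Module.finrank F ↥(W' ⊓ H)) (n + 1) with h | h
      · exact h
      · exfalso
        have heq : W' ⊓ H = W' := Submodule.eq_of_le_of_finrank_le inf_le_left (by omega)
        exact hWH (heq ▸ inf_le_right)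
    have hge := Stmt16Aux.inf_rank_ge W' H
    omega
  refine ⟨hrWH, ?_⟩
  intro M hM
  obtain ⟨hMH, hMt, hMr⟩ := hT M hM
  obtain ⟨M', ⟨hM't, hM'r, hMM', hM'E⟩, -⟩ := parta M hMH hMt hMr
  have hbot := hopp M hM M' hM't hM'r hMM' hM'E
  have hle : (W' ⊓ H) ⊓ M ≤ W' ⊓ M' :=
    le_inf (le_trans inf_le_left inf_le_left) (le_trans inf_le_right hMM')
  rw [hbot] at hle
  exact le_bot_iff.1 hle
end
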